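/- arXiv:math/0611783 — 8 statements merged into one kernel-verified Lean document; each statement's English description precedes it below -/
import Mathlib

section
/- Let ({θ_i}_{i=0}^d; {θ*_i}_{i=0}^d; {φ_i}_{i=1}^d; {ϕ_i}_{i=1}^d) be a parameter array of diameter d ≥ 1 over a field K. The following are equivalent: (i) there exist scalars ξ, ζ, ξ*, ζ* in K with ξ, ξ* nonzero such that θ*_{d−i} = ξθ_i + ζ and θ_i = ξ*θ*_i + ζ* for 0 ≤ i ≤ d, and ϕ_{d−i+1} = ξξ*φ_i and φ_i = ξξ*ϕ_i for 1 ≤ i ≤ d (i.e., the relative P^↓* is affine isomorphic to P); (ii) φ_1 = φ_d = −ϕ_1 = −ϕ_d; (iii) the four quantities φ_i, φ_{d−i+1}, −ϕ_i, −ϕ_{d−i+1} coincide for 1 ≤ i ≤ d, and each of (θ*_i − θ*_0)(θ_i − θ_0)^{−1} and (θ*_{d−i} − θ*_d)(θ_i − θ_0)^{−1} is independent of i for 1 ≤ i ≤ d. Moreover, if (i)–(iii) hold, then (i) is satisfied with ξ equal to the common value of (θ*_{d−i} − θ*_d)(θ_i − θ_0)^{−1}, ζ = θ*_d − ξθ_0,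 ξ* = −ξ^{−1}, and ζ* = θ_0 − ξ*θ*_0. -/
open Finset

namespace DAaux
variable {K : Type*} [Field K]

def cheb (β : K) : ℕ → K
  | 0 => -1
  | 1 => 0
  | n+2 => β * cheb β (n+1) - cheb β n

@[simp] lemma cheb_zero (β : K) : cheb β 0 = -1 := rfl
@[simp] lemma cheb_one (β : K) : cheb β 1 = 0 := rfl
@[simp] lemma cheb_two (β : K) : cheb β 2 = 1 := by
  show β * cheb β 1 - cheb β 0 = 1
  simp
lemma cheb_rec (β : K) (n : ℕ) : cheb β (n+2) = β * cheb β (n+1) - cheb β n := rfl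

lemma cheb_beta2 : ∀ n : ℕ, cheb (2:K) (n+1) = (n : K) := by
  intro n
  induction n using Nat.strong_induction_on with
  | _ n ih =>
    match n with
    | 0 => simp
    | 1 => simp
    | (m+2) =>
      rw [cheb_rec]
      rw [ih (m+1) (by omega), ih m (by omega)]
      push_cast; ring

lemma rep (β : K) (d : ℕ) (u : ℕ → K)
    (hu : ∀ i, 2 ≤ i → i + 1 ≤ d → u (i+1) = β * u i - u (i-1)) :
    ∀ n, n + 1 ≤ d → u (n+1) = u 2 * cheb β (n+1) - u 1 * cheb β n := by
  intro n
  induction n using Nat.strong_induction_on with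
  | _ n ih =>
    match n with
    | 0 => intro _; simp
    | 1 => intro _; simp
    | (m+2) =>
      intro h
      have h1 := ih (m+1) (by omega) (by omega)
      have h2 := ih m (by omega) (by omega)
      have h3 := hu (m+2) (by omega) (by omega)
      have e : (m+2) - 1 = m+1 := by omega
      rw [e] at h3
      rw [show m+1+1 = m+2 from rfl] at h1
      have c1 : cheb β (m+2+1) = β * cheb β (m+2) - cheb β (m+1) := cheb_rec β (m+1)
      have c2 : cheb β (m+2) = β * cheb β (m+1) - cheb β m := cheb_rec β m
      rw [h3, h1, h2, c1, c2]; ring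

lemma cheb_tel (β : K) (n : ℕ) :
    (β - 2) * ∑ i ∈ range n, cheb β (i+1) = cheb β (n+1) - cheb β n - 1 := by
  have h := Finset.sum_range_sub (fun i => cheb β (i+1) - cheb β i) n
  have h2 : ∀ i ∈ range n, (β - 2) * cheb β (i+1)
      = (cheb β (i+1+1) - cheb β (i+1)) - (cheb β (i+1) - cheb β i) := by
    intro i _
    rw [show i+1+1 = i+2 by rfl, cheb_rec]; ring
  rw [Finset.mul_sum, Finset.sum_congr rfl h2, h]
  simp


lemma degen (β : K) (d : ℕ) (hd : 3 ≤ d) (h2 : (2:K) ≠ 0) (θ : ℕ → K)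
    (hrep : ∀ n, n + 1 ≤ d → θ (n+1) - θ n = (θ 2 - θ 1) * cheb β (n+1) - (θ 1 - θ 0) * cheb β n)
    (hfd : cheb β d = 0) (hfd1 : cheb β (d-1) = -1) : θ (d-1) = θ 0 := by
  have hA : ∑ i ∈ range (d-1), cheb β (i+1) = 0 := by
    by_cases hβ : β = 2
    · subst hβ
      have hc : ∀ i ∈ range (d-1), cheb (2:K) (i+1) = (i:K) := fun i _ => cheb_beta2 i
      rw [Finset.sum_congr rfl hc]
      have hg := Finset.sum_range_id_mul_two (d-1)
      have hcast : (∑ i ∈ range (d-1), (i:K)) * 2 = ((d-1:ℕ):K) * ((d-2:ℕ):K) := by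
        have : ((∑ i ∈ range (d-1), i : ℕ) : K) * 2 = (((d-1) * (d-1-1) : ℕ) : K) := by
          rw [← hg]; push_cast; ring
        rw [Nat.cast_sum] at this
        rw [this, show d-1-1 = d-2 by omega]
        push_cast; ring
      have hd1 : ((d-1:ℕ):K) = 0 := by
        have h0 : cheb (2:K) ((d-1)+1) = ((d-1:ℕ):K) := cheb_beta2 (d-1)
        rw [show (d-1)+1 = d by omega] at h0
        rw [← h0, hfd]
      have := hcast
      rw [hd1, zero_mul] at this
      rcases mul_eq_zero.mp this with h | h
      · exact h
      · exact absurd h h2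
    · have htel := cheb_tel β (d-1)
      rw [show d-1+1 = d by omega, hfd, hfd1] at htel
      have : (β - 2) * ∑ i ∈ range (d-1), cheb β (i+1) = 0 := by rw [htel]; ring
      rcases mul_eq_zero.mp this with h | h
      · exact absurd (sub_eq_zero.mp h) hβ
      · exact h
  have hB : ∑ i ∈ range (d-1), cheb β i = 0 := by
    have h := Finset.sum_range_sub (fun i => cheb β i) (d-1)
    have hsub : ∑ i ∈ range (d-1), (cheb β (i+1) - cheb β i)
        = cheb β (d-1) - cheb β 0 := h
    rw [Finset.sum_sub_distrib, hA, hfd1] at hsub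
    simp only [cheb_zero] at hsub
    linear_combination -hsub
  have hsum : θ (d-1) - θ 0 = ∑ i ∈ range (d-1), (θ (i+1) - θ i) :=
    (Finset.sum_range_sub θ (d-1)).symm
  have hsum2 : ∑ i ∈ range (d-1), (θ (i+1) - θ i)
      = (θ 2 - θ 1) * ∑ i ∈ range (d-1), cheb β (i+1)
        - (θ 1 - θ 0) * ∑ i ∈ range (d-1), cheb β i := by
    rw [Finset.mul_sum, Finset.mul_sum, ← Finset.sum_sub_distrib]
    apply Finset.sum_congr rfl
    intro i hi
    simp only [Finset.mem_range] at hi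
    exact hrep i (by omega)
  have : θ (d-1) - θ 0 = 0 := by rw [hsum, hsum2, hA, hB]; ring
  linear_combination this

lemma claimS (d : ℕ) (hd : 1 ≤ d) (θ : ℕ → K) (β : K) (h2 : (2:K) ≠ 0)
    (hinj : ∀ i j, i ≤ d → j ≤ d → i ≠ j → θ i ≠ θ j)
    (hrec : ∀ i, 2 ≤ i → i + 1 ≤ d → θ (i+1) - θ i = β * (θ i - θ (i-1)) - (θ (i-1) - θ (i-2)))
    (h1d : θ 1 - θ 0 = θ d - θ (d-1)) :
    ∀ i, 1 ≤ i → i ≤ d → θ i - θ (i-1) = θ (d+1-i) - θ (d-i) := by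
  rcases lt_or_ge d 3 with hd3 | hd3
  · -- d = 1 or 2
    intro i h1i hid
    interval_cases d
    · interval_cases i
      · simpa using h1d.symm ▸ rfl
    · interval_cases i
      · simpa using h1d
      · have : θ 2 - θ 1 = θ 1 - θ 0 := by
          have := h1d; simp only [show (2:ℕ)-1 = 1 by omega] at this; linear_combination -this
        simpa using this
  · -- d ≥ 3
    set u : ℕ → K := fun i => θ i - θ (i-1) with hu_def
    set v : ℕ → K := fun i => θ (d+1-i) - θ (d-i) with hv_def
    have hu : ∀ i, 2 ≤ i → i + 1 ≤ d → u (i+1) = β * u i - u (i-1) := by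
      intro i h2i hid
      show θ (i+1) - θ (i+1-1) = β * (θ i - θ (i-1)) - (θ (i-1) - θ (i-1-1))
      rw [show i+1-1 = i by omega, show i-1-1 = i-2 by omega]
      exact hrec i h2i hid
    have hv : ∀ i, 2 ≤ i → i + 1 ≤ d → v (i+1) = β * v i - v (i-1) := by
      intro i h2i hid
      have h := hrec (d+1-i) (by omega) (by omega)
      rw [show d+1-i+1 = d+2-i by omega, show d+1-i-1 = d-i by omega,
        show d+1-i-2 = d-i-1 by omega] at h
      show θ (d+1-(i+1)) - θ (d-(i+1)) = β * (θ (d+1-i) - θ (d-i)) - (θ (d+1-(i-1)) - θ (d-(i-1)))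
      rw [show d+1-(i+1) = d-i by omega, show d-(i+1) = d-i-1 by omega,
        show d+1-(i-1) = d+2-i by omega, show d-(i-1) = d+1-i by omega]
      linear_combination h
    have repu := rep β d u hu
    have repv := rep β d v hv
    have g1 : u 1 = v 1 := by
      show θ 1 - θ (1-1) = θ (d+1-1) - θ (d-1)
      rw [show (1:ℕ)-1 = 0 by omega, show d+1-1 = d by omega]
      exact h1d
    by_cases hg : u 2 - v 2 = 0
    · intro i h1i hid
      obtain ⟨n, rfl⟩ : ∃ n, i = n + 1 := ⟨i - 1, by omega⟩
      have h1 := repu n (by omega)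
      have h2' := repv n (by omega)
      have : u (n+1) = v (n+1) := by
        rw [h1, h2', g1, sub_eq_zero.mp hg]
      simpa [hu_def, hv_def, show n+1-1 = n by omega] using this
    · exfalso
      have equd := repu (d-1) (by omega)
      have eqvd := repv (d-1) (by omega)
      rw [show d-1+1 = d by omega] at equd eqvd
      have hud_vd : u d = v d := by
        show θ d - θ (d-1) = θ (d+1-d) - θ (d-d)
        rw [show d+1-d = 1 by omega, show d-d = 0 by omega]
        exact h1d.symm
      have hfd : cheb β d = 0 := by
        have : (u 2 - v 2) * cheb β d = 0 := by
          have := hud_vd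
          rw [equd, eqvd, g1] at this
          linear_combination this
        rcases mul_eq_zero.mp this with h | h
        · exact absurd h hg
        · exact h
      have equd1 := repu (d-2) (by omega)
      have eqvd1 := repv (d-2) (by omega)
      rw [show d-2+1 = d-1 by omega] at equd1 eqvd1
      have hv2 : v 2 = u (d-1) := by
        show θ (d+1-2) - θ (d-2) = θ (d-1) - θ (d-1-1)
        rw [show d+1-2 = d-1 by omega, show d-1-1 = d-2 by omega]
      have hvd1 : v (d-1) = u 2 := by
        show θ (d+1-(d-1)) - θ (d-(d-1)) = θ 2 - θ (2-1)
        rw [show d+1-(d-1) = 2 by omega, show d-(d-1) = 1 by omega]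
      have hfd1 : cheb β (d-1) = -1 := by
        have key : (u 2 - v 2) * (cheb β (d-1) + 1) = 0 := by
          have h := equd1  -- u (d-1) = u 2 * cheb β (d-1) - u 1 * cheb β (d-2)
          have h' := eqvd1 -- v (d-1) = v 2 * cheb β (d-1) - v 1 * cheb β (d-2)
          rw [hvd1] at h'
          rw [← hv2] at h
          rw [g1] at h
          -- h : v 2 = u 2 * cheb (d-1) - v 1 * cheb (d-2)
          -- h' : u 2 = v 2 * cheb (d-1) - v 1 * cheb (d-2)
          linear_combination h' - h
        rcases mul_eq_zero.mp key with h | h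
        · exact absurd h hg
        · linear_combination h
      have hrepθ : ∀ n, n + 1 ≤ d → θ (n+1) - θ n
          = (θ 2 - θ 1) * cheb β (n+1) - (θ 1 - θ 0) * cheb β n := by
        intro n hn
        have := repu n hn
        simpa [hu_def, show n+1-1 = n by omega, show (2:ℕ)-1 = 1 by omega,
          show (1:ℕ)-1 = 0 by omega] using this
      have := degen β d hd3 h2 θ hrepθ hfd hfd1
      exact hinj (d-1) 0 (by omega) (by omega) (by omega) this

lemma claimA (d : ℕ) (hd : 1 ≤ d) (θ θs : ℕ → K) (β ξ : K) (h2 : (2:K) ≠ 0)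
    (hinj : ∀ i j, i ≤ d → j ≤ d → i ≠ j → θ i ≠ θ j)
    (hrec : ∀ i, 2 ≤ i → i + 1 ≤ d → θ (i+1) - θ i = β * (θ i - θ (i-1)) - (θ (i-1) - θ (i-2)))
    (hrecs : ∀ i, 2 ≤ i → i + 1 ≤ d → θs (i+1) - θs i = β * (θs i - θs (i-1)) - (θs (i-1) - θs (i-2)))
    (h1d : θ 1 - θ 0 = θ d - θ (d-1))
    (hsymD : ∀ i, 1 ≤ i → i ≤ d → θ i - θ (i-1) = θ (d+1-i) - θ (d-i))
    (hE1 : θs 1 - θs 0 = -ξ * (θ 1 - θ 0))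
    (hxd : θs d - θs 0 = -ξ * (θ d - θ 0)) :
    ∀ i, i ≤ d → θs i - θs 0 = -ξ * (θ i - θ 0) := by
  rcases lt_or_ge d 3 with hd3 | hd3
  · intro i hid
    interval_cases d
    · interval_cases i
      · simp
      · exact hxd
    · interval_cases i
      · simp
      · exact hE1
      · exact hxd
  · set E : ℕ → K := fun i => (θs i - θs (i-1)) + ξ * (θ i - θ (i-1)) with hE_def
    have hE : ∀ i, 2 ≤ i → i + 1 ≤ d → E (i+1) = β * E i - E (i-1) := by
      intro i h2i hid
      show (θs (i+1) - θs (i+1-1)) + ξ * (θ (i+1) - θ (i+1-1))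
        = β * ((θs i - θs (i-1)) + ξ * (θ i - θ (i-1)))
          - ((θs (i-1) - θs (i-1-1)) + ξ * (θ (i-1) - θ (i-1-1)))
      rw [show i+1-1 = i by omega, show i-1-1 = i-2 by omega]
      linear_combination hrecs i h2i hid + ξ * hrec i h2i hid
    have repE := rep β d E hE
    have hE1' : E 1 = 0 := by
      show (θs 1 - θs (1-1)) + ξ * (θ 1 - θ (1-1)) = 0
      rw [show (1:ℕ)-1 = 0 by omega]
      linear_combination hE1
    have hsumE : ∑ i ∈ range d, E (i+1) = 0 := by
      have h1 : ∑ i ∈ range d, (θs (i+1) - θs i) = θs d - θs 0 := Finset.sum_range_sub θs d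
      have h2' : ∑ i ∈ range d, (θ (i+1) - θ i) = θ d - θ 0 := Finset.sum_range_sub θ d
      have : ∑ i ∈ range d, E (i+1)
          = ∑ i ∈ range d, ((θs (i+1) - θs i) + ξ * (θ (i+1) - θ i)) := by
        apply Finset.sum_congr rfl
        intro i _
        show (θs (i+1) - θs (i+1-1)) + ξ * (θ (i+1) - θ (i+1-1)) = _
        rw [show i+1-1 = i by omega]
      rw [this, Finset.sum_add_distrib, h1, ← Finset.mul_sum, h2']
      linear_combination hxd
    have hEA : E 2 * (∑ i ∈ range d, cheb β (i+1)) = 0 := by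
      have : ∑ i ∈ range d, E (i+1) = ∑ i ∈ range d, E 2 * cheb β (i+1) := by
        apply Finset.sum_congr rfl
        intro i hi
        simp only [Finset.mem_range] at hi
        rw [repE i (by omega), hE1']; ring
      rw [this, ← Finset.mul_sum] at hsumE
      exact hsumE
    by_cases hE2 : E 2 = 0
    · -- all E vanish, telescope
      have hEz : ∀ n, n + 1 ≤ d → θs (n+1) - θs n = -ξ * (θ (n+1) - θ n) := by
        intro n hn
        have := repE n hn
        rw [hE2, hE1'] at this
        have h0 : E (n+1) = 0 := by rw [this]; ring
        have : (θs (n+1) - θs (n+1-1)) + ξ * (θ (n+1) - θ (n+1-1)) = 0 := h0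
        rw [show n+1-1 = n by omega] at this
        linear_combination this
      intro i hid
      have hs : ∑ j ∈ range i, (θs (j+1) - θs j) = θs i - θs 0 := Finset.sum_range_sub θs i
      have ht : ∑ j ∈ range i, (θ (j+1) - θ j) = θ i - θ 0 := Finset.sum_range_sub θ i
      have : ∑ j ∈ range i, (θs (j+1) - θs j) = ∑ j ∈ range i, (-ξ) * (θ (j+1) - θ j) := by
        apply Finset.sum_congr rfl
        intro j hj
        simp only [Finset.mem_range] at hj
        rw [hEz j (by omega)]
      rw [hs, ← Finset.mul_sum, ht] at this
      exact this
    · exfalso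
      have hA : ∑ i ∈ range d, cheb β (i+1) = 0 := by
        rcases mul_eq_zero.mp hEA with h | h
        · exact absurd h hE2
        · exact h
      -- now derive contradiction from distinctness of θ
      set u : ℕ → K := fun i => θ i - θ (i-1) with hu_def
      have hu : ∀ i, 2 ≤ i → i + 1 ≤ d → u (i+1) = β * u i - u (i-1) := by
        intro i h2i hid
        show θ (i+1) - θ (i+1-1) = β * (θ i - θ (i-1)) - (θ (i-1) - θ (i-1-1))
        rw [show i+1-1 = i by omega, show i-1-1 = i-2 by omega]
        exact hrec i h2i hid
      have repu := rep β d u hu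
      have hAB : ∑ i ∈ range d, (cheb β (i+1) - cheb β i) = cheb β d + 1 := by
        rw [Finset.sum_range_sub (fun i => cheb β i) d]; simp
      have hB : ∑ i ∈ range d, cheb β i = -(cheb β d) - 1 := by
        rw [Finset.sum_sub_distrib, hA] at hAB
        linear_combination -hAB
      have hu1 : u 1 ≠ 0 := by
        show θ 1 - θ (1-1) ≠ 0
        rw [show (1:ℕ)-1 = 0 by omega]
        exact sub_ne_zero.mpr (hinj 1 0 (by omega) (by omega) (by omega))
      have hθd0 : θ d - θ 0 = u 2 * (∑ i ∈ range d, cheb β (i+1)) - u 1 * (∑ i ∈ range d, cheb β i) := by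
        rw [← Finset.sum_range_sub θ d, Finset.mul_sum, Finset.mul_sum, ← Finset.sum_sub_distrib]
        apply Finset.sum_congr rfl
        intro i hi
        simp only [Finset.mem_range] at hi
        have := repu i (by omega)
        simpa [hu_def, show i+1-1 = i by omega] using this
      rw [hA, hB] at hθd0
      -- θ d - θ 0 = u 1 * (cheb β d + 1)
      have hθd0' : θ d - θ 0 = u 1 * (cheb β d + 1) := by rw [hθd0]; ring
      have hθdne : θ d - θ 0 ≠ 0 := sub_ne_zero.mpr (hinj d 0 (by omega) (by omega) (by omega))
      -- Eq1 : u 1 = u d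
      have equd := repu (d-1) (by omega)
      rw [show d-1+1 = d by omega] at equd
      have hud : u d = u 1 := by
        show θ d - θ (d-1) = θ 1 - θ (1-1)
        rw [show (1:ℕ)-1 = 0 by omega]
        exact h1d.symm
      -- Eq2 : u 2 = u (d-1)
      have equd1 := repu (d-2) (by omega)
      rw [show d-2+1 = d-1 by omega] at equd1
      have hu2d : u (d-1) = u 2 := by
        have := hsymD 2 (by omega) (by omega)
        show θ (d-1) - θ (d-1-1) = θ 2 - θ (2-1)
        rw [show d-1-1 = d-2 by omega, show (2:ℕ)-1 = 1 by omega]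
        have h := this
        rw [show (2:ℕ)-1 = 1 by omega, show d+1-2 = d-1 by omega] at h
        linear_combination -h
      by_cases hβ : β = 2
      · subst hβ
        have c1 : cheb (2:K) d = ((d-1:ℕ):K) := by
          have h0 := cheb_beta2 (K := K) (d-1)
          rwa [show (d-1)+1 = d by omega] at h0
        have c2 : cheb (2:K) (d-1) = ((d-2:ℕ):K) := by
          have h0 := cheb_beta2 (K := K) (d-2)
          rwa [show (d-2)+1 = d-1 by omega] at h0
        have c3 : cheb (2:K) (d-2) = ((d-3:ℕ):K) := by
          have h0 := cheb_beta2 (K := K) (d-3)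
          rwa [show (d-3)+1 = d-2 by omega] at h0
        have e1 : ((d-1:ℕ):K) = ((d-2:ℕ):K) + 1 := by
          rw [show d-1 = (d-2)+1 by omega]; push_cast; ring
        have e2 : ((d-2:ℕ):K) = ((d-3:ℕ):K) + 1 := by
          rw [show d-2 = (d-3)+1 by omega]; push_cast; ring
        -- Eq1 : u 1 = u 2 * (c+1) - u 1 * c  with c = ↑(d-2)
        have Eq1 : u 1 = u 2 * (((d-2:ℕ):K)+1) - u 1 * ((d-2:ℕ):K) := by
          rw [← e1, ← c1, ← c2, ← equd, hud]
        have Eq2 : u 2 = u 2 * ((d-2:ℕ):K) - u 1 * (((d-2:ℕ):K) - 1) := by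
          have : ((d-3:ℕ):K) = ((d-2:ℕ):K) - 1 := by rw [e2]; ring
          rw [← this, ← c2, ← c3, ← equd1, hu2d]
        have hu12 : u 1 = u 2 := by
          have : (2:K) * (u 1 - u 2) = 0 := by linear_combination Eq1 - Eq2
          rcases mul_eq_zero.mp this with h | h
          · exact absurd h h2
          · linear_combination h
        have hdne : ((d:ℕ):K) ≠ 0 := by
          intro h0
          apply hθdne
          rw [hθd0', c1]
          have : ((d-1:ℕ):K) + 1 = ((d:ℕ):K) := by
            rw [show d = (d-1)+1 by omega]; push_cast; ring
          rw [this, h0, mul_zero]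
        have hgauss : (∑ i ∈ range d, cheb (2:K) (i+1)) * 2 = ((d:ℕ):K) * ((d-1:ℕ):K) := by
          have hc : ∀ i ∈ range d, cheb (2:K) (i+1) = (i:K) := fun i _ => cheb_beta2 i
          rw [Finset.sum_congr rfl hc]
          have hg := Finset.sum_range_id_mul_two d
          have : ((∑ i ∈ range d, i : ℕ) : K) * 2 = ((d * (d-1) : ℕ) : K) := by
            rw [← hg]; push_cast; ring
          rw [Nat.cast_sum] at this
          rw [this]; push_cast; ring
        rw [hA, zero_mul] at hgauss
        have hd1z : ((d-1:ℕ):K) = 0 := by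
          rcases mul_eq_zero.mp hgauss.symm with h | h
          · exact absurd h hdne
          · exact h
        -- θ (d-1) = θ 0
        have : θ (d-1) - θ 0 = 0 := by
          have hs : θ (d-1) - θ 0 = ∑ i ∈ range (d-1), (θ (i+1) - θ i) :=
            (Finset.sum_range_sub θ (d-1)).symm
          have hterm : ∀ i ∈ range (d-1), θ (i+1) - θ i = u 1 * (cheb (2:K) (i+1) - cheb (2:K) i) := by
            intro i hi
            simp only [Finset.mem_range] at hi
            have := repu i (by omega)
            have h' : θ (i+1) - θ i = u 2 * cheb (2:K) (i+1) - u 1 * cheb (2:K) i := by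
              simpa [hu_def, show i+1-1 = i by omega] using this
            rw [h', ← hu12]; ring
          rw [hs, Finset.sum_congr rfl hterm, ← Finset.mul_sum,
            Finset.sum_range_sub (fun i => cheb (2:K) i)]
          simp only [cheb_zero]
          rw [c2]
          have : ((d-2:ℕ):K) + 1 = ((d-1:ℕ):K) := by
            rw [show d-1 = (d-2)+1 by omega]; push_cast; ring
          rw [sub_neg_eq_add, this, hd1z, mul_zero]
        exact hinj (d-1) 0 (by omega) (by omega) (by omega) (by linear_combination this)
      · -- β ≠ 2
        have htel := cheb_tel β d
        rw [hA, mul_zero] at htel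
        have hfd1 : cheb β (d-1) = (β - 1) * cheb β d - 1 := by
          have hc : cheb β (d+1) = β * cheb β d - cheb β (d-1) := by
            have := cheb_rec β (d-1)
            rwa [show d-1+2 = d+1 by omega, show d-1+1 = d by omega] at this
          linear_combination htel + hc
        by_cases hfd : cheb β d = 0
        · have hfd1' : cheb β (d-1) = -1 := by rw [hfd1, hfd]; ring
          have hrepθ : ∀ n, n + 1 ≤ d → θ (n+1) - θ n
              = (θ 2 - θ 1) * cheb β (n+1) - (θ 1 - θ 0) * cheb β n := by
            intro n hn
            have := repu n hn
            simpa [hu_def, show n+1-1 = n by omega, show (2:ℕ)-1 = 1 by omega,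
              show (1:ℕ)-1 = 0 by omega] using this
          have := degen β d hd3 h2 θ hrepθ hfd hfd1'
          exact hinj (d-1) 0 (by omega) (by omega) (by omega) this
        · -- u 2 = (β-1) u 1
          have hu21 : u 2 = (β - 1) * u 1 := by
            have key : (u 2 - (β-1) * u 1) * cheb β d = 0 := by
              have h := equd
              rw [hud] at h
              -- u 1 = u 2 * cheb d - u 1 * cheb (d-1)
              rw [hfd1] at h
              linear_combination -h
            rcases mul_eq_zero.mp key with h | h
            · linear_combination h
            · exact absurd h hfd
          have hfd2 : cheb β (d-2) = β * cheb β (d-1) - cheb β d := by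
            have := cheb_rec β (d-2)
            rw [show d-2+2 = d by omega, show d-2+1 = d-1 by omega] at this
            linear_combination this
          have key2 : (β - 2) * (1 + cheb β d) * u 1 = 0 := by
            have h := equd1
            rw [hu2d] at h
            -- h : u 2 = u 2 * cheb (d-1) - u 1 * cheb (d-2)
            linear_combination (cheb β (d-1) - 1) * hu21 + h - u 1 * hfd2 - u 1 * hfd1
          have hfdm1 : cheb β d = -1 := by
            rcases mul_eq_zero.mp key2 with h | h
            · rcases mul_eq_zero.mp h with h' | h'
              · exact absurd (sub_eq_zero.mp h') hβ
              · linear_combination h'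
            · exact absurd h hu1
          apply hθdne
          rw [hθd0', hfdm1]
          ring

end DAaux


/-- A parameter array of diameter `d` over a field `K`:
conditions (PA1)–(PA5) of Terwilliger's classification of Leonard systems. -/
def IsParamArray (K : Type*) [Field K] (d : ℕ) (θ θs φ ϕ : ℕ → K) : Prop :=
  -- (PA1)
  (∀ i, 1 ≤ i → i ≤ d → φ i ≠ 0 ∧ ϕ i ≠ 0) ∧
  -- (PA2)
  (∀ i j, i ≤ d → j ≤ d → i ≠ j → θ i ≠ θ j ∧ θs i ≠ θs j) ∧
  -- (PA3)
  (∀ i, 1 ≤ i → i ≤ d →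
    φ i = ϕ 1 * (∑ h ∈ Finset.range i, (θ h - θ (d - h)) / (θ 0 - θ d))
      + (θs i - θs 0) * (θ (i - 1) - θ d)) ∧
  -- (PA4)
  (∀ i, 1 ≤ i → i ≤ d →
    ϕ i = φ 1 * (∑ h ∈ Finset.range i, (θ h - θ (d - h)) / (θ 0 - θ d))
      + (θs i - θs 0) * (θ (d - i + 1) - θ 0)) ∧
  -- (PA5)
  (∀ i j, 2 ≤ i → i ≤ d - 1 → 2 ≤ j → j ≤ d - 1 →
    (θ (i - 2) - θ (i + 1)) / (θ (i - 1) - θ i)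
      = (θs (i - 2) - θs (i + 1)) / (θs (i - 1) - θs i) ∧
    (θ (i - 2) - θ (i + 1)) / (θ (i - 1) - θ i)
      = (θ (j - 2) - θ (j + 1)) / (θ (j - 1) - θ j))

/-- Characterization of when the relative `P^↓*` is affine isomorphic to `P`. -/
theorem downstar_affine_iso {K : Type*} [Field K] (d : ℕ) (hd : 1 ≤ d)
    (θ θs φ ϕ : ℕ → K) (hPA : IsParamArray K d θ θs φ ϕ) :
    -- (i) ↔ (ii)
    ((∃ ξ ζ ξs ζs : K, ξ ≠ 0 ∧ ξs ≠ 0 ∧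
        (∀ i ≤ d, θs (d - i) = ξ * θ i + ζ ∧ θ i = ξs * θs i + ζs) ∧
        (∀ i, 1 ≤ i → i ≤ d →
          ϕ (d - i + 1) = ξ * ξs * φ i ∧ φ i = ξ * ξs * ϕ i))
      ↔ (φ 1 = φ d ∧ φ 1 = -ϕ 1 ∧ φ 1 = -ϕ d)) ∧
    -- (ii) ↔ (iii)
    ((φ 1 = φ d ∧ φ 1 = -ϕ 1 ∧ φ 1 = -ϕ d) ↔
      ((∀ i, 1 ≤ i → i ≤ d →
          φ i = φ (d - i + 1) ∧ φ i = -ϕ i ∧ φ i = -ϕ (d - i + 1)) ∧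
       (∀ i j, 1 ≤ i → i ≤ d → 1 ≤ j → j ≤ d →
          (θs i - θs 0) * (θ i - θ 0)⁻¹ = (θs j - θs 0) * (θ j - θ 0)⁻¹) ∧
       (∀ i j, 1 ≤ i → i ≤ d → 1 ≤ j → j ≤ d →
          (θs (d - i) - θs d) * (θ i - θ 0)⁻¹ = (θs (d - j) - θs d) * (θ j - θ 0)⁻¹))) ∧
    -- moreover: (i) is satisfied with ξ the common value of
    -- (θ*_{d−i} − θ*_d)(θ_i − θ_0)⁻¹, ζ = θ*_d − ξθ_0, ξ* = −ξ⁻¹, ζ* = θ_0 − ξ*θ*_0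
    ((φ 1 = φ d ∧ φ 1 = -ϕ 1 ∧ φ 1 = -ϕ d) →
      ∃ ξ ζ ξs ζs : K,
        ξ = (θs 0 - θs d) * (θ d - θ 0)⁻¹ ∧ ζ = θs d - ξ * θ 0 ∧
        ξs = -ξ⁻¹ ∧ ζs = θ 0 - ξs * θs 0 ∧
        ξ ≠ 0 ∧ ξs ≠ 0 ∧
        (∀ i ≤ d, θs (d - i) = ξ * θ i + ζ ∧ θ i = ξs * θs i + ζs) ∧
        (∀ i, 1 ≤ i → i ≤ d →
          ϕ (d - i + 1) = ξ * ξs * φ i ∧ φ i = ξ * ξs * ϕ i)) := by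
  obtain ⟨hPA1, hPA2, hPA3, hPA4, hPA5⟩ := hPA
  have hθne : ∀ i j, i ≤ d → j ≤ d → i ≠ j → θ i - θ j ≠ 0 :=
    fun i j hi hj hij => sub_ne_zero.mpr (hPA2 i j hi hj hij).1
  have hθsne : ∀ i j, i ≤ d → j ≤ d → i ≠ j → θs i - θs j ≠ 0 :=
    fun i j hi hj hij => sub_ne_zero.mpr (hPA2 i j hi hj hij).2
  have hθ0d : θ 0 - θ d ≠ 0 := hθne 0 d (by omega) (by omega) (by omega)
  have hθd0 : θ d - θ 0 ≠ 0 := hθne d 0 (by omega) (by omega) (by omega)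
  have hS1 : (∑ h ∈ Finset.range 1, (θ h - θ (d - h)) / (θ 0 - θ d)) = 1 := by
    rw [Finset.sum_range_one]
    simp only [Nat.sub_zero]
    exact div_self hθ0d
  have hTd : ∑ h ∈ Finset.range d, (θ h - θ (d - h)) = θ 0 - θ d := by
    have h1 : ∑ h ∈ Finset.range d, θ (d - h) = ∑ h ∈ Finset.range d, θ (h + 1) := by
      rw [← Finset.sum_range_reflect (fun h => θ (h + 1)) d]
      apply Finset.sum_congr rfl
      intro j hj
      simp only [Finset.mem_range] at hj
      congr 1
      omega
    rw [Finset.sum_sub_distrib, h1, ← Finset.sum_sub_distrib]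
    exact Finset.sum_range_sub' θ d
  have hSd : (∑ h ∈ Finset.range d, (θ h - θ (d - h)) / (θ 0 - θ d)) = 1 := by
    rw [← Finset.sum_div, hTd, div_self hθ0d]
  have hphim : φ 1 - ϕ 1 = (θs 1 - θs 0) * (θ 0 - θ d) := by
    have h3 := hPA3 1 le_rfl hd
    rw [hS1] at h3
    norm_num at h3
    linear_combination h3
  have hphimne : φ 1 - ϕ 1 ≠ 0 := by
    rw [hphim]
    exact mul_ne_zero (hθsne 1 0 hd (by omega) (by omega)) hθ0d
  -- direction (i) → (ii)
  have dir12 : (∃ ξ ζ ξs ζs : K, ξ ≠ 0 ∧ ξs ≠ 0 ∧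
        (∀ i ≤ d, θs (d - i) = ξ * θ i + ζ ∧ θ i = ξs * θs i + ζs) ∧
        (∀ i, 1 ≤ i → i ≤ d →
          ϕ (d - i + 1) = ξ * ξs * φ i ∧ φ i = ξ * ξs * ϕ i))
      → (φ 1 = φ d ∧ φ 1 = -ϕ 1 ∧ φ 1 = -ϕ d) := by
    rintro ⟨ξ, ζ, ξs, ζs, hξ, hξs, hθr, hφr⟩
    have step1 : ∀ i ≤ d, θs (d - i) = (ξ * ξs) * θs i + (ξ * ζs + ζ) := by
      intro i hi
      have h1 := (hθr i hi).1
      have h2 := (hθr i hi).2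
      rw [h1, h2]; ring
    have step2 : ∀ i ≤ d, θs i = (ξ * ξs) * ((ξ * ξs) * θs i + (ξ * ζs + ζ)) + (ξ * ζs + ζ) := by
      intro i hi
      have h1 := step1 (d - i) (by omega)
      rw [show d - (d - i) = i by omega] at h1
      conv_lhs => rw [h1, step1 i hi]
    have hsq : (ξ * ξs) * (ξ * ξs) = 1 := by
      have h0 := step2 0 (by omega)
      have hdd := step2 d le_rfl
      have hz : (1 - (ξ * ξs) * (ξ * ξs)) * (θs 0 - θs d) = 0 := by
        linear_combination h0 - hdd
      rcases mul_eq_zero.mp hz with h | h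
      · linear_combination -h
      · exact absurd h (hθsne 0 d (by omega) (by omega) (by omega))
    have hφ1 := (hφr 1 le_rfl hd).2
    have hεne : ξ * ξs ≠ 1 := by
      intro h1
      rw [h1, one_mul] at hφ1
      exact hphimne (by rw [hφ1]; ring)
    have hεm : ξ * ξs = -1 := by
      have hz : (ξ * ξs - 1) * (ξ * ξs + 1) = 0 := by linear_combination hsq
      rcases mul_eq_zero.mp hz with h | h
      · exact absurd (by linear_combination h) hεne
      · linear_combination h
    refine ⟨?_, ?_, ?_⟩
    · have h := (hφr d hd le_rfl).1
      rw [show d - d + 1 = 1 by omega] at h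
      rw [hεm] at h hφ1
      linear_combination hφ1 - h
    · rw [hεm] at hφ1
      linear_combination hφ1
    · have h := (hφr 1 le_rfl hd).1
      rw [show d - 1 + 1 = d by omega, hεm] at h
      linear_combination h
  -- the core: (ii) implies everything
  have core : (φ 1 = φ d ∧ φ 1 = -ϕ 1 ∧ φ 1 = -ϕ d) →
      ((∀ i, 1 ≤ i → i ≤ d →
          φ i = φ (d - i + 1) ∧ φ i = -ϕ i ∧ φ i = -ϕ (d - i + 1)) ∧
       (∀ i j, 1 ≤ i → i ≤ d → 1 ≤ j → j ≤ d →
          (θs i - θs 0) * (θ i - θ 0)⁻¹ = (θs j - θs 0) * (θ j - θ 0)⁻¹) ∧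
       (∀ i j, 1 ≤ i → i ≤ d → 1 ≤ j → j ≤ d →
          (θs (d - i) - θs d) * (θ i - θ 0)⁻¹ = (θs (d - j) - θs d) * (θ j - θ 0)⁻¹)) ∧
      (∃ ξ ζ ξs ζs : K,
        ξ = (θs 0 - θs d) * (θ d - θ 0)⁻¹ ∧ ζ = θs d - ξ * θ 0 ∧
        ξs = -ξ⁻¹ ∧ ζs = θ 0 - ξs * θs 0 ∧
        ξ ≠ 0 ∧ ξs ≠ 0 ∧
        (∀ i ≤ d, θs (d - i) = ξ * θ i + ζ ∧ θ i = ξs * θs i + ζs) ∧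
        (∀ i, 1 ≤ i → i ≤ d →
          ϕ (d - i + 1) = ξ * ξs * φ i ∧ φ i = ξ * ξs * ϕ i)) := by
    rintro ⟨hii1, hii2, hii3⟩
    have hii2' : ϕ 1 = -φ 1 := by linear_combination hii2
    set ξ0 : K := (θs 0 - θs d) * (θ d - θ 0)⁻¹ with hξ0_def
    have hξ0ne : ξ0 ≠ 0 :=
      mul_ne_zero (hθsne 0 d (by omega) (by omega) (by omega)) (inv_ne_zero hθd0)
    have hcinv : (θ d - θ 0) * (θ d - θ 0)⁻¹ = 1 := mul_inv_cancel₀ hθd0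
    have hF : 2 * φ 1 = (θs 1 - θs 0) * (θ 0 - θ d) := by
      linear_combination hphim + hii2
    have h2K : (2 : K) ≠ 0 := by
      intro h0
      apply mul_ne_zero (hθsne 1 0 hd (by omega) (by omega)) hθ0d
      rw [← hF, h0, zero_mul]
    have hD : 2 * φ 1 = (θs 0 - θs d) * (θ 1 - θ 0) := by
      have h4 := hPA4 d hd le_rfl
      rw [hSd, show d - d + 1 = 1 by omega] at h4
      linear_combination hii3 - h4
    have hEq : 2 * φ 1 = (θs d - θs 0) * (θ (d - 1) - θ d) := by
      have h3 := hPA3 d hd le_rfl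
      rw [hSd] at h3
      linear_combination hii1 + hii2 + h3
    have h1d : θ 1 - θ 0 = θ d - θ (d - 1) := by
      have hz : (θs 0 - θs d) * ((θ 1 - θ 0) - (θ d - θ (d - 1))) = 0 := by
        linear_combination hEq - hD
      rcases mul_eq_zero.mp hz with h | h
      · exact absurd h (hθsne 0 d (by omega) (by omega) (by omega))
      · linear_combination h
    have hξdK : θs d - θs 0 = -ξ0 * (θ d - θ 0) := by
      rw [hξ0_def]
      linear_combination (θs 0 - θs d) * hcinv
    have hE1K : θs 1 - θs 0 = -ξ0 * (θ 1 - θ 0) := by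
      have hxy : (θs 1 - θs 0) * (θ 0 - θ d) = (θs 0 - θs d) * (θ 1 - θ 0) := by
        linear_combination hD - hF
      rw [hξ0_def]
      linear_combination (-(θ d - θ 0)⁻¹) * hxy - (θs 1 - θs 0) * hcinv
    -- recurrences from PA5
    set βv : K := (θ 0 - θ 3) / (θ 1 - θ 2) - 1 with hβv_def
    have hrecθ : ∀ i, 2 ≤ i → i + 1 ≤ d →
        θ (i + 1) - θ i = βv * (θ i - θ (i - 1)) - (θ (i - 1) - θ (i - 2)) := by
      intro i h2i hi1
      have h5 := hPA5 i 2 h2i (by omega) (by omega) (by omega)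
      have hrat := h5.2
      norm_num at hrat
      have hne : θ (i - 1) - θ i ≠ 0 := hθne (i - 1) i (by omega) (by omega) (by omega)
      have hmm := (div_eq_iff hne).mp hrat
      rw [hβv_def]
      linear_combination -hmm
    have hrecθs : ∀ i, 2 ≤ i → i + 1 ≤ d →
        θs (i + 1) - θs i = βv * (θs i - θs (i - 1)) - (θs (i - 1) - θs (i - 2)) := by
      intro i h2i hi1
      have h5 := hPA5 i 2 h2i (by omega) (by omega) (by omega)
      have hrat : (θs (i - 2) - θs (i + 1)) / (θs (i - 1) - θs i)
          = (θ 0 - θ 3) / (θ 1 - θ 2) := by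
        have := h5.1.symm.trans h5.2
        norm_num at this
        exact this
      have hne : θs (i - 1) - θs i ≠ 0 := hθsne (i - 1) i (by omega) (by omega) (by omega)
      have hmm := (div_eq_iff hne).mp hrat
      rw [hβv_def]
      linear_combination -hmm
    have hinjθ : ∀ i j, i ≤ d → j ≤ d → i ≠ j → θ i ≠ θ j :=
      fun i j hi hj hij => (hPA2 i j hi hj hij).1
    have hsymD := DAaux.claimS d hd θ βv h2K hinjθ hrecθ h1d
    have haff := DAaux.claimA d hd θ θs βv ξ0 h2K hinjθ hrecθ hrecθs h1d hsymD hE1K hξdK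
    have hsym : ∀ i, i ≤ d → θ i + θ (d - i) = θ 0 + θ d := by
      intro i
      induction i with
      | zero => intro _; simp
      | succ n ihn =>
        intro hn
        have h1 := ihn (by omega)
        have h2' := hsymD (n + 1) (by omega) hn
        rw [show n + 1 - 1 = n by omega, show d + 1 - (n + 1) = d - n by omega] at h2'
        linear_combination h1 + h2'
    have haffd : ∀ i, i ≤ d → θs (d - i) - θs d = ξ0 * (θ i - θ 0) := by
      intro i hi
      have h1 := haff (d - i) (by omega)
      have h2' := hsym i hi
      linear_combination h1 - hξdK - ξ0 * h2'
    -- symmetry of the partial sums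
    have hTsym : ∀ i, 1 ≤ i → i ≤ d →
        (∑ h ∈ Finset.range (d - i + 1), (θ h - θ (d - h)))
          = ∑ h ∈ Finset.range i, (θ h - θ (d - h)) := by
      have key : ∀ a b, b ≤ a → a + b = d + 1 →
          (∑ h ∈ Finset.range a, (θ h - θ (d - h)))
            = ∑ h ∈ Finset.range b, (θ h - θ (d - h)) := by
        intro a b hba hab
        have hIco : ∑ h ∈ Finset.Ico b a, (θ h - θ (d - h))
            = ∑ h ∈ Finset.range a, (θ h - θ (d - h))
              - ∑ h ∈ Finset.range b, (θ h - θ (d - h)) :=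
          Finset.sum_Ico_eq_sub _ hba
        have hzero : ∑ h ∈ Finset.Ico b a, (θ h - θ (d - h)) = 0 := by
          rw [Finset.sum_Ico_eq_sum_range]
          have hrefl := Finset.sum_range_reflect
            (fun k => θ (b + k) - θ (d - (b + k))) (a - b)
          have hco : ∀ j ∈ Finset.range (a - b),
              (θ (b + (a - b - 1 - j)) - θ (d - (b + (a - b - 1 - j))))
                = -(θ (b + j) - θ (d - (b + j))) := by
            intro j hj
            simp only [Finset.mem_range] at hj
            rw [show b + (a - b - 1 - j) = d - (b + j) by omega]
            rw [show d - (d - (b + j)) = b + j by omega]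
            ring
          rw [Finset.sum_congr rfl hco, Finset.sum_neg_distrib] at hrefl
          have h20 : (2 : K) * ∑ j ∈ Finset.range (a - b), (θ (b + j) - θ (d - (b + j))) = 0 := by
            linear_combination -hrefl
          rcases mul_eq_zero.mp h20 with h | h
          · exact absurd h h2K
          · exact h
        rw [hzero] at hIco
        linear_combination -hIco
      intro i h1i hid
      rcases le_or_gt i (d - i + 1) with h | h
      · exact key (d - i + 1) i h (by omega)
      · exact (key i (d - i + 1) (by omega) (by omega)).symm
    have hSsym : ∀ i, 1 ≤ i → i ≤ d →
        (∑ h ∈ Finset.range (d - i + 1), (θ h - θ (d - h)) / (θ 0 - θ d))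
          = ∑ h ∈ Finset.range i, (θ h - θ (d - h)) / (θ 0 - θ d) := by
      intro i h1i hid
      rw [← Finset.sum_div, ← Finset.sum_div, hTsym i h1i hid]
    -- the φ/ϕ identities
    have hphineg : ∀ i, 1 ≤ i → i ≤ d → φ i = -ϕ i := by
      intro i h1i hid
      have e3 := hPA3 i h1i hid
      have e4 := hPA4 i h1i hid
      have key := hsym (i - 1) (by omega)
      rw [show d - (i - 1) = d - i + 1 by omega] at key
      linear_combination e3 + e4 + (θs i - θs 0) * key
        + (∑ h ∈ Finset.range i, (θ h - θ (d - h)) / (θ 0 - θ d)) * hii2'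
    have hphidual : ∀ i, 1 ≤ i → i ≤ d → ϕ (d - i + 1) = -φ i := by
      intro i h1i hid
      have e4 := hPA4 (d - i + 1) (by omega) (by omega)
      rw [show d - (d - i + 1) + 1 = i by omega, hSsym i h1i hid] at e4
      have e3 := hPA3 i h1i hid
      have key := hsym (i - 1) (by omega)
      rw [show d - (i - 1) = d - i + 1 by omega] at key
      have ha1 := haff i hid
      have ha2 := haff (d - i + 1) (by omega)
      linear_combination e4 + e3
        + (∑ h ∈ Finset.range i, (θ h - θ (d - h)) / (θ 0 - θ d)) * hii2'
        + (θ i - θ 0) * ha2 + (θ (i - 1) - θ d) * ha1 + (-ξ0) * (θ i - θ 0) * key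
    have hphisym : ∀ i, 1 ≤ i → i ≤ d → φ i = φ (d - i + 1) := by
      intro i h1i hid
      have h1 := hphidual (d - i + 1) (by omega) (by omega)
      rw [show d - (d - i + 1) + 1 = i by omega] at h1
      have h2' := hphineg i h1i hid
      linear_combination h2' - h1
    -- ratio facts
    have ratio1 : ∀ i, 1 ≤ i → i ≤ d → (θs i - θs 0) * (θ i - θ 0)⁻¹ = -ξ0 := by
      intro i h1i hid
      have h1 := haff i hid
      have hci : (θ i - θ 0) * (θ i - θ 0)⁻¹ = 1 :=
        mul_inv_cancel₀ (hθne i 0 hid (by omega) (by omega))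
      rw [h1, mul_assoc, hci, mul_one]
    have ratio2 : ∀ i, 1 ≤ i → i ≤ d → (θs (d - i) - θs d) * (θ i - θ 0)⁻¹ = ξ0 := by
      intro i h1i hid
      have h1 := haffd i hid
      have hci : (θ i - θ 0) * (θ i - θ 0)⁻¹ = 1 :=
        mul_inv_cancel₀ (hθne i 0 hid (by omega) (by omega))
      rw [h1, mul_assoc, hci, mul_one]
    have hinv : ξ0 * ξ0⁻¹ = 1 := mul_inv_cancel₀ hξ0ne
    refine ⟨⟨?_, ?_, ?_⟩, ?_⟩
    · intro i h1i hid
      refine ⟨hphisym i h1i hid, hphineg i h1i hid, ?_⟩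
      have h1 := hphidual i h1i hid
      linear_combination h1
    · intro i j h1i hid h1j hjd
      rw [ratio1 i h1i hid, ratio1 j h1j hjd]
    · intro i j h1i hid h1j hjd
      rw [ratio2 i h1i hid, ratio2 j h1j hjd]
    · refine ⟨ξ0, θs d - ξ0 * θ 0, -ξ0⁻¹, θ 0 - (-ξ0⁻¹) * θs 0,
        rfl, rfl, rfl, rfl, hξ0ne, neg_ne_zero.mpr (inv_ne_zero hξ0ne), ?_, ?_⟩
      · intro i hi
        constructor
        · linear_combination haffd i hi
        · have h1 := haff i hi
          linear_combination ξ0⁻¹ * h1 - (θ i - θ 0) * hinv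
      · intro i h1i hid
        constructor
        · have h1 := hphidual i h1i hid
          linear_combination h1 + φ i * hinv
        · have h1 := hphineg i h1i hid
          linear_combination h1 + ϕ i * hinv
  -- final assembly
  refine ⟨⟨dir12, ?_⟩, ⟨fun h => (core h).1, ?_⟩, fun h => (core h).2⟩
  · intro h
    obtain ⟨ξ, ζ, ξs, ζs, _, _, _, _, hξne, hξsne, hθr, hφr⟩ := (core h).2
    exact ⟨ξ, ζ, ξs, ζs, hξne, hξsne, hθr, hφr⟩
  · intro h
    obtain ⟨h1, _, _⟩ := h
    have hh := h1 1 le_rfl hd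
    rw [show d - 1 + 1 = d by omega] at hh
    exact ⟨hh.1, hh.2.1, hh.2.2⟩
end

section
/- Let ({θ_i}_{i=0}^d; {θ*_i}_{i=0}^d; {φ_i}_{i=1}^d; {ϕ_i}_{i=1}^d) be a parameter array of diameter d ≥ 1 over a field K. The following are equivalent: (i) there exist scalars ξ, ζ, ξ*, ζ* in K with ξ, ξ* nonzero such that θ*_i = ξθ_i + ζ and θ_{d−i} = ξ*θ*_i + ζ* for 0 ≤ i ≤ d, and ϕ_i = ξξ*φ_i and φ_{d−i+1} = ξξ*ϕ_i for 1 ≤ i ≤ d (i.e., the relative P^⇓* is affine isomorphic to P); (ii) φ_1 = φ_d = −ϕ_1 = −ϕ_d; (iii) the four quantities φ_i, φ_{d−i+1}, −ϕ_i, −ϕ_{d−i+1} coincide for 1 ≤ i ≤ d, and each of (θ*_i − θ*_0)(θ_i − θ_0)^{−1} and (θ*_{d−i} − θ*_d)(θ_i − θ_0)^{−1} is independent of i for 1 ≤ i ≤ d. Moreover, if (i)–(iii) hold, then (i) is satisfied with ξ equal to the common value of (θ*_i − θ*_0)(θ_i − θ_0)^{−1}, ζ = θ*_0 − ξθ_0,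 ξ* = −ξ^{−1}, and ζ* = θ_0 − ξ*θ*_d. -/
namespace DAI
variable {K : Type*} [Field K]

def pseq (γ : K) : ℕ → K
  | 0 => 0
  | 1 => 1
  | n + 2 => γ * pseq γ (n + 1) - pseq γ n

@[simp] lemma pseq_zero (γ : K) : pseq γ 0 = 0 := rfl
@[simp] lemma pseq_one (γ : K) : pseq γ 1 = 1 := rfl
lemma pseq_add_two (γ : K) (n : ℕ) : pseq γ (n+2) = γ * pseq γ (n+1) - pseq γ n := rfl

lemma pseq_inv (γ : K) : ∀ n, pseq γ n ^ 2 - γ * pseq γ n * pseq γ (n+1) + pseq γ (n+1) ^ 2 = 1 := by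
  intro n
  induction n with
  | zero => simp
  | succ m ih => rw [pseq_add_two]; linear_combination ih

lemma psum_eq (γ : K) : ∀ m, (γ - 2) * (∑ k ∈ Finset.range (m+1), pseq γ k)
    = pseq γ (m+1) - pseq γ m - 1 := by
  intro m
  induction m with
  | zero => simp
  | succ n ih =>
    rw [Finset.sum_range_succ, pseq_add_two]
    linear_combination ih

lemma pseq_gamma_two : ∀ n, pseq (2 : K) n = (n : K) := by
  intro n
  induction n using Nat.strong_induction_on with
  | _ n ih =>
    match n with
    | 0 => simp
    | 1 => simp
    | (k+2) =>
      rw [pseq_add_two, ih (k+1) (by omega), ih k (by omega)]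
      push_cast; ring

lemma seq_repr (γ : K) (x : ℕ → K) (m : ℕ)
    (hx : ∀ i, 1 ≤ i → i ≤ m → x (i + 1) = γ * x i - x (i - 1)) :
    ∀ i, 1 ≤ i → i ≤ m + 1 → x i = x 1 * pseq γ i - x 0 * pseq γ (i - 1) := by
  intro i
  induction i using Nat.strong_induction_on with
  | _ i ih =>
    intro h1 hm
    match i with
    | 1 => simp
    | 2 =>
      have h := hx 1 le_rfl (by omega)
      simp at h
      rw [h, pseq_add_two]
      simp; ring
    | (k+3) =>
      have h := hx (k+2) (by omega) (by omega)
      have i1 := ih (k+2) (by omega) (by omega) (by omega)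
      have i2 := ih (k+1) (by omega) (by omega) (by omega)
      simp only [show k+2-1 = k+1 from rfl, show k+1-1 = k from rfl, show k+3-1 = k+2 from rfl] at *
      rw [h, i1, i2, pseq_add_two γ (k+1), pseq_add_two γ k]
      ring

lemma diff_sum (γ : K) (x : ℕ → K) (m : ℕ)
    (hx : ∀ i, 1 ≤ i → i ≤ m → x (i + 1) = γ * x i - x (i - 1)) :
    ∀ n, 1 ≤ n → n ≤ m + 2 → ∑ k ∈ Finset.range n, x k
      = x 0 * (1 - ∑ k ∈ Finset.range (n-1), pseq γ k) + x 1 * ∑ k ∈ Finset.range n, pseq γ k := by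
  intro n h1 hn
  obtain ⟨n', rfl⟩ : ∃ n', n = n' + 1 := ⟨n - 1, by omega⟩
  rw [Finset.sum_range_succ']
  have hrep := seq_repr γ x m hx
  have : ∀ k ∈ Finset.range n', x (k+1) = x 1 * pseq γ (k+1) - x 0 * pseq γ k := by
    intro k hk
    rw [Finset.mem_range] at hk
    have := hrep (k+1) (by omega) (by omega)
    simpa using this
  rw [Finset.sum_congr rfl this, Finset.sum_sub_distrib, ← Finset.mul_sum, ← Finset.mul_sum]
  have h2 : ∑ k ∈ Finset.range (n'+1), pseq γ k = ∑ k ∈ Finset.range n', pseq γ (k+1) := by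
    rw [Finset.sum_range_succ']; simp
  simp only [Nat.add_sub_cancel]
  rw [h2]; ring

/-- difference form of the θ-recurrence -/
lemma delta_rec (d : ℕ) (hd3 : 3 ≤ d) (θ : ℕ → K) (β : K)
    (hrec : ∀ i, 2 ≤ i → i ≤ d - 1 → θ (i-2) - θ (i+1) = β * (θ (i-1) - θ i)) :
    ∀ i, 1 ≤ i → i ≤ d - 2 →
      (fun i => θ (i+1) - θ i) (i+1) = (β - 1) * (fun i => θ (i+1) - θ i) i
        - (fun i => θ (i+1) - θ i) (i-1) := by
  intro i h1 hi
  have h := hrec (i+1) (by omega) (by omega)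
  rw [show i+1-2 = i-1 by omega, show i+1-1 = i by omega] at h
  simp only
  rw [show i-1+1 = i by omega]
  linear_combination -h

/-- the two key telescoped sums for θ -/
lemma theta_sums (d : ℕ) (hd3 : 3 ≤ d) (θ : ℕ → K) (β : K)
    (hrec : ∀ i, 2 ≤ i → i ≤ d - 1 → θ (i-2) - θ (i+1) = β * (θ (i-1) - θ i)) :
    (θ (d-1) - θ 0 = (θ 1 - θ 0) * (1 - ∑ k ∈ Finset.range (d-2), pseq (β-1) k)
        + (θ 2 - θ 1) * ∑ k ∈ Finset.range (d-1), pseq (β-1) k)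
    ∧ (θ d - θ 0 = (θ 1 - θ 0) * (1 - ∑ k ∈ Finset.range (d-1), pseq (β-1) k)
        + (θ 2 - θ 1) * ∑ k ∈ Finset.range d, pseq (β-1) k) := by
  have hΔ := delta_rec d hd3 θ β hrec
  have hs := diff_sum (β-1) (fun i => θ (i+1) - θ i) (d-2) hΔ
  have tel : ∀ n, ∑ k ∈ Finset.range n, (θ (k+1) - θ k) = θ n - θ 0 :=
    fun n => Finset.sum_range_sub θ n
  constructor
  · have := hs (d-1) (by omega) (by omega)
    rw [show d-1-1 = d-2 by omega] at this
    rw [← tel (d-1)]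
    simpa using this
  · have := hs d (by omega) (by omega)
    rw [← tel d]
    simpa using this

/-- θ is symmetric about the middle -/
lemma Tsym (d : ℕ) (hd3 : 3 ≤ d) (θ : ℕ → K) (β : K)
    (hdist : ∀ i j, i ≤ d → j ≤ d → i ≠ j → θ i ≠ θ j)
    (hrec : ∀ i, 2 ≤ i → i ≤ d - 1 → θ (i-2) - θ (i+1) = β * (θ (i-1) - θ i))
    (h2 : (2:K) ≠ 0)
    (ht1 : θ 1 + θ (d-1) = θ 0 + θ d) :
    ∀ i ≤ d, θ i + θ (d - i) = θ 0 + θ d := by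
  obtain ⟨t, hts⟩ : ∃ t : ℕ → K, ∀ i, t i = θ i + θ (d - i) - θ 0 - θ d :=
    ⟨fun i => θ i + θ (d - i) - θ 0 - θ d, fun i => rfl⟩
  set γ := β - 1 with hγdef
  have ht0 : t 0 = 0 := by rw [hts, Nat.sub_zero]; ring
  have htone : t 1 = 0 := by rw [hts]; linear_combination ht1
  have htsym : ∀ i ≤ d, t (d - i) = t i := by
    intro i hi; rw [hts, hts, show d - (d - i) = i by omega]; ring
  have htrec : ∀ i, 2 ≤ i → i ≤ d - 1 → t (i-2) - t (i+1) = β * (t (i-1) - t i) := by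
    intro i h2i hi
    have ha := hrec i h2i hi
    have hb := hrec (d - i + 1) (by omega) (by omega)
    rw [show d - i + 1 - 2 = d - i - 1 by omega, show d-i+1-1 = d-i by omega,
        show d - i + 1 + 1 = d - i + 2 by omega] at hb
    rw [hts, hts, hts, hts]
    rw [show d - (i-2) = d - i + 2 by omega, show d - (i+1) = d - i - 1 by omega,
        show d - (i-1) = d - i + 1 by omega]
    linear_combination ha - hb
  have hΔrec := delta_rec d hd3 t β htrec
  have hsum := diff_sum γ (fun i => t (i+1) - t i) (d-2) hΔrec
  have tel : ∀ n, ∑ k ∈ Finset.range n, (t (k+1) - t k) = t n - t 0 :=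
    fun n => Finset.sum_range_sub t n
  have ht_eq : ∀ n, n ≤ d → t n = (t 2 - t 1) * ∑ k ∈ Finset.range n, pseq γ k := by
    intro n hn
    rcases Nat.eq_zero_or_pos n with rfl | hn1
    · simpa using ht0
    · have h' : ∑ k ∈ Finset.range n, (t (k+1) - t k)
          = (t 1 - t 0) * (1 - ∑ k ∈ Finset.range (n-1), pseq γ k)
            + (t 2 - t 1) * ∑ k ∈ Finset.range n, pseq γ k := hsum n hn1 (by omega)
      rw [tel n] at h'
      linear_combination h' + (1 - ∑ k ∈ Finset.range (n-1), pseq γ k) * htone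
        + (∑ k ∈ Finset.range (n-1), pseq γ k) * ht0
  by_cases hc : t 2 - t 1 = 0
  · intro i hi
    have h1 := ht_eq i hi
    rw [hc, zero_mul, hts] at h1
    linear_combination h1
  · exfalso
    -- antisymmetry of Δt forces p-facts
    have hrep : ∀ i, i ≤ d-1 → t (i+1) - t i = (t 2 - t 1) * pseq γ i := by
      intro i hi
      rcases Nat.eq_zero_or_pos i with rfl | hi1
      · rw [ht0, htone]; simp
      · have h' : t (i+1) - t i
            = (t 2 - t 1) * pseq γ i - (t 1 - t 0) * pseq γ (i-1) :=
          seq_repr γ (fun i => t (i+1) - t i) (d-2) hΔrec i hi1 (by omega)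
        linear_combination h' - pseq γ (i-1) * htone + pseq γ (i-1) * ht0
    have hp_anti : ∀ i, i ≤ d-1 → pseq γ (d-1-i) = -pseq γ i := by
      intro i hi
      have h1 : t (d-1-i+1) - t (d-1-i) = -(t (i+1) - t i) := by
        rw [show d-1-i+1 = d-i by omega]
        have e1 : t (d-i) = t i := htsym i (by omega)
        have e2 : t (d-1-i) = t (i+1) := by
          rw [show d-1-i = d-(i+1) by omega]; exact htsym (i+1) (by omega)
        rw [e1, e2]; ring
      rw [hrep _ (by omega), hrep _ hi] at h1
      have h2' : (t 2 - t 1) * pseq γ (d-1-i) = (t 2 - t 1) * (-pseq γ i) := by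
        linear_combination h1
      exact mul_left_cancel₀ hc h2'
    have hpd1 : pseq γ (d-1) = 0 := by simpa using hp_anti 0 (by omega)
    have hpd2 : pseq γ (d-2) = -1 := by
      have := hp_anti 1 (by omega)
      rw [show d-1-1 = d-2 by omega] at this
      simpa using this
    have hPd : ∑ k ∈ Finset.range d, pseq γ k = 0 := by
      have hre := Finset.sum_range_reflect (fun k => pseq γ k) d
      have hcg : ∀ k ∈ Finset.range d, pseq γ (d-1-k) = -pseq γ k := by
        intro k hk; rw [Finset.mem_range] at hk; exact hp_anti k (by omega)
      rw [Finset.sum_congr rfl hcg] at hre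
      rw [Finset.sum_neg_distrib] at hre
      have h2' : (2:K) * ∑ k ∈ Finset.range d, pseq γ k = 0 := by linear_combination -hre
      exact (mul_eq_zero.mp h2').resolve_left h2
    have hPd1 : ∑ k ∈ Finset.range (d-1), pseq γ k = 0 := by
      have e1 : ∑ k ∈ Finset.range (d-1+1), pseq γ k
          = (∑ k ∈ Finset.range (d-1), pseq γ k) + pseq γ (d-1) := Finset.sum_range_succ _ _
      rw [show d-1+1 = d by omega, hPd, hpd1] at e1
      linear_combination -e1
    have hPd2 : ∑ k ∈ Finset.range (d-2), pseq γ k = 1 := by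
      have e1 : ∑ k ∈ Finset.range (d-2+1), pseq γ k
          = (∑ k ∈ Finset.range (d-2), pseq γ k) + pseq γ (d-2) := Finset.sum_range_succ _ _
      rw [show d-2+1 = d-1 by omega, hPd1, hpd2] at e1
      linear_combination -e1
    have hθs := (theta_sums d hd3 θ β hrec).1
    rw [hPd1, hPd2] at hθs
    have : θ (d-1) = θ 0 := by linear_combination hθs
    exact hdist (d-1) 0 (by omega) (by omega) (by omega) this


lemma Szero (d : ℕ) (hd3 : 3 ≤ d) (θ σ : ℕ → K) (β : K)
    (hdist : ∀ i j, i ≤ d → j ≤ d → i ≠ j → θ i ≠ θ j)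
    (hrec : ∀ i, 2 ≤ i → i ≤ d - 1 → θ (i-2) - θ (i+1) = β * (θ (i-1) - θ i))
    (hrecs : ∀ i, 2 ≤ i → i ≤ d - 1 → σ (i-2) - σ (i+1) = β * (σ (i-1) - σ i))
    (h2 : (2:K) ≠ 0)
    (hT : ∀ i ≤ d, θ i + θ (d - i) = θ 0 + θ d)
    (hs0 : σ 0 = 0) (hs1 : σ 1 = 0) (hsd : σ d = 0) :
    ∀ i ≤ d, σ i = 0 := by
  set γ := β - 1 with hγdef
  have hΔσ := delta_rec d hd3 σ β hrecs
  have hsum := diff_sum γ (fun i => σ (i+1) - σ i) (d-2) hΔσ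
  have tel : ∀ n, ∑ k ∈ Finset.range n, (σ (k+1) - σ k) = σ n - σ 0 :=
    fun n => Finset.sum_range_sub σ n
  have hσ_eq : ∀ n, n ≤ d → σ n = (σ 2 - σ 1) * ∑ k ∈ Finset.range n, pseq γ k := by
    intro n hn
    rcases Nat.eq_zero_or_pos n with rfl | hn1
    · simpa using hs0
    · have h' : ∑ k ∈ Finset.range n, (σ (k+1) - σ k)
          = (σ 1 - σ 0) * (1 - ∑ k ∈ Finset.range (n-1), pseq γ k)
            + (σ 2 - σ 1) * ∑ k ∈ Finset.range n, pseq γ k := hsum n hn1 (by omega)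
      rw [tel n, hs0, hs1] at h'
      linear_combination h' + (∑ k ∈ Finset.range n, pseq γ k) * hs1
  by_cases hc : σ 2 - σ 1 = 0
  · intro i hi
    have h' := hσ_eq i hi; rw [hc, zero_mul] at h'; exact h'
  · exfalso
    have hPd : ∑ k ∈ Finset.range d, pseq γ k = 0 := by
      have h' := hσ_eq d le_rfl
      rw [hsd] at h'
      rcases mul_eq_zero.mp h'.symm with h | h
      · exact absurd h hc
      · exact h
    have hps : pseq γ d = pseq γ (d-1) + 1 := by
      have h1 := psum_eq γ (d-1)
      rw [show d-1+1 = d by omega, hPd, mul_zero] at h1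
      linear_combination -h1
    have hx : pseq γ (d-1) = 0 ∨ pseq γ (d-1) = -1 := by
      by_cases hγ2 : γ = 2
      · have hcast : ∀ n : ℕ, pseq γ n = (n : K) := by rw [hγ2]; exact pseq_gamma_two
        have hdd : (d:K) * ((d:K) - 1) = 0 := by
          have h1 : (((∑ k ∈ Finset.range d, k) * 2 : ℕ) : K) = ((d * (d-1) : ℕ) : K) :=
            congrArg _ (Finset.sum_range_id_mul_two d)
          push_cast [Nat.cast_sub (show 1 ≤ d by omega)] at h1
          have h2' : ∑ k ∈ Finset.range d, (k:K) = 0 := by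
            rw [← hPd]; exact Finset.sum_congr rfl (fun k _ => (hcast k).symm)
          rw [h2'] at h1
          linear_combination -h1
        have hder : pseq γ (d-1) = (d:K) - 1 := by
          rw [hcast (d-1), Nat.cast_sub (show 1 ≤ d by omega), Nat.cast_one]
        rcases mul_eq_zero.mp hdd with h | h
        · right; rw [hder, h]; ring
        · left; rw [hder]; linear_combination h
      · have hinv := pseq_inv γ (d-1)
        rw [show d-1+1 = d by omega] at hinv
        have hfact : (2 - γ) * (pseq γ (d-1) * (pseq γ (d-1) + 1)) = 0 := by
          linear_combination hinv
            + (γ * pseq γ (d-1) - pseq γ d - pseq γ (d-1) - 1) * hps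
        rcases mul_eq_zero.mp hfact with h | h
        · exact absurd (by linear_combination -h) hγ2
        · rcases mul_eq_zero.mp h with h' | h'
          · exact Or.inl h'
          · exact Or.inr (by linear_combination h')
    have hPd1 : ∑ k ∈ Finset.range (d-1), pseq γ k = -pseq γ (d-1) := by
      have e1 : ∑ k ∈ Finset.range (d-1+1), pseq γ k
          = (∑ k ∈ Finset.range (d-1), pseq γ k) + pseq γ (d-1) := Finset.sum_range_succ _ _
      rw [show d-1+1 = d by omega, hPd] at e1
      linear_combination -e1
    have hΔθ0 : θ 1 - θ 0 ≠ 0 :=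
      sub_ne_zero.2 (hdist 1 0 (by omega) (by omega) (by omega))
    have hθs := theta_sums d hd3 θ β hrec
    rcases hx with hx0 | hxm1
    · -- pseq γ (d-1) = 0
      have hΔθ := delta_rec d hd3 θ β hrec
      have hrepθ : θ (d-1+1) - θ (d-1)
          = (θ 2 - θ 1) * pseq γ (d-1) - (θ 1 - θ 0) * pseq γ (d-1-1) :=
        seq_repr γ (fun i => θ (i+1) - θ i) (d-2) hΔθ (d-1) (by omega) (by omega)
      rw [show d-1+1 = d by omega, show d-1-1 = d-2 by omega, hx0, mul_zero] at hrepθ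
      have hT1 := hT 1 (by omega)
      rw [show d - 1 = d - 1 from rfl] at hT1
      -- θ d − θ (d-1) = θ 1 − θ 0
      have hkey : (θ 1 - θ 0) * (pseq γ (d-2) + 1) = 0 := by
        linear_combination hrepθ + hT1
      have hpd2 : pseq γ (d-2) = -1 := by
        rcases mul_eq_zero.mp hkey with h | h
        · exact absurd h hΔθ0
        · linear_combination h
      have hPd2 : ∑ k ∈ Finset.range (d-2), pseq γ k = 1 := by
        have e1 : ∑ k ∈ Finset.range (d-2+1), pseq γ k
            = (∑ k ∈ Finset.range (d-2), pseq γ k) + pseq γ (d-2) := Finset.sum_range_succ _ _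
        rw [show d-2+1 = d-1 by omega, hPd1, hx0, hpd2] at e1
        linear_combination -e1
      have h1 := hθs.1
      rw [hPd2, hPd1, hx0] at h1
      have : θ (d-1) = θ 0 := by linear_combination h1
      exact hdist (d-1) 0 (by omega) (by omega) (by omega) this
    · -- pseq γ (d-1) = -1
      have h1 := hθs.2
      rw [hPd1, hxm1, hPd] at h1
      have : θ d = θ 0 := by linear_combination h1
      exact hdist d 0 le_rfl (by omega) (by omega) this

end DAI


/-- Characterization of when the relative `P^⇓*` is affine isomorphic to `P`. -/
theorem Downstar_affine_iso {K : Type*} [Field K] (d : ℕ) (hd : 1 ≤ d)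
    (θ θs φ ϕ : ℕ → K) (hPA : IsParamArray K d θ θs φ ϕ) :
    -- (i) ↔ (ii)
    ((∃ ξ ζ ξs ζs : K, ξ ≠ 0 ∧ ξs ≠ 0 ∧
        (∀ i ≤ d, θs i = ξ * θ i + ζ ∧ θ (d - i) = ξs * θs i + ζs) ∧
        (∀ i, 1 ≤ i → i ≤ d →
          ϕ i = ξ * ξs * φ i ∧ φ (d - i + 1) = ξ * ξs * ϕ i))
      ↔ (φ 1 = φ d ∧ φ 1 = -ϕ 1 ∧ φ 1 = -ϕ d)) ∧
    -- (ii) ↔ (iii)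
    ((φ 1 = φ d ∧ φ 1 = -ϕ 1 ∧ φ 1 = -ϕ d) ↔
      ((∀ i, 1 ≤ i → i ≤ d →
          φ i = φ (d - i + 1) ∧ φ i = -ϕ i ∧ φ i = -ϕ (d - i + 1)) ∧
       (∀ i j, 1 ≤ i → i ≤ d → 1 ≤ j → j ≤ d →
          (θs i - θs 0) * (θ i - θ 0)⁻¹ = (θs j - θs 0) * (θ j - θ 0)⁻¹) ∧
       (∀ i j, 1 ≤ i → i ≤ d → 1 ≤ j → j ≤ d →
          (θs (d - i) - θs d) * (θ i - θ 0)⁻¹ = (θs (d - j) - θs d) * (θ j - θ 0)⁻¹))) ∧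
    -- moreover: (i) is satisfied with ξ the common value of
    -- (θ*_i − θ*_0)(θ_i − θ_0)⁻¹, ζ = θ*_0 − ξθ_0, ξ* = −ξ⁻¹, ζ* = θ_0 − ξ*θ*_d
    ((φ 1 = φ d ∧ φ 1 = -ϕ 1 ∧ φ 1 = -ϕ d) →
      ∃ ξ ζ ξs ζs : K,
        ξ = (θs d - θs 0) * (θ d - θ 0)⁻¹ ∧ ζ = θs 0 - ξ * θ 0 ∧
        ξs = -ξ⁻¹ ∧ ζs = θ 0 - ξs * θs d ∧
        ξ ≠ 0 ∧ ξs ≠ 0 ∧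
        (∀ i ≤ d, θs i = ξ * θ i + ζ ∧ θ (d - i) = ξs * θs i + ζs) ∧
        (∀ i, 1 ≤ i → i ≤ d →
          ϕ i = ξ * ξs * φ i ∧ φ (d - i + 1) = ξ * ξs * ϕ i)) := by
  obtain ⟨hPA1, hPA2, hPA3, hPA4, hPA5⟩ := hPA
  have hdist : ∀ i j, i ≤ d → j ≤ d → i ≠ j → θ i ≠ θ j :=
    fun i j hi hj hij => (hPA2 i j hi hj hij).1
  have hdists : ∀ i j, i ≤ d → j ≤ d → i ≠ j → θs i ≠ θs j :=
    fun i j hi hj hij => (hPA2 i j hi hj hij).2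
  have h0d : θ 0 - θ d ≠ 0 := sub_ne_zero.2 (hdist 0 d (by omega) le_rfl (by omega))
  have hd0' : θ d - θ 0 ≠ 0 := sub_ne_zero.2 (hdist d 0 le_rfl (by omega) (by omega))
  have h10 : θ 1 - θ 0 ≠ 0 := sub_ne_zero.2 (hdist 1 0 hd (by omega) (by omega))
  have hsd0 : θs d - θs 0 ≠ 0 := sub_ne_zero.2 (hdists d 0 le_rfl (by omega) (by omega))
  have hs10 : θs 1 - θs 0 ≠ 0 := sub_ne_zero.2 (hdists 1 0 hd (by omega) (by omega))
  have hS1 : ∑ h ∈ Finset.range 1, (θ h - θ (d - h)) / (θ 0 - θ d) = 1 := by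
    rw [Finset.sum_range_one, Nat.sub_zero, div_self h0d]
  -- ===================== (i) → (ii) =====================
  have i_to_ii : (∃ ξ ζ ξs ζs : K, ξ ≠ 0 ∧ ξs ≠ 0 ∧
        (∀ i ≤ d, θs i = ξ * θ i + ζ ∧ θ (d - i) = ξs * θs i + ζs) ∧
        (∀ i, 1 ≤ i → i ≤ d → ϕ i = ξ * ξs * φ i ∧ φ (d - i + 1) = ξ * ξs * ϕ i)) →
      (φ 1 = φ d ∧ φ 1 = -ϕ 1 ∧ φ 1 = -ϕ d) := by
    rintro ⟨ξ, ζ, ξs, ζs, hξ, hξs, hθaff, hφaff⟩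
    have hk : ∀ i ≤ d, θ (d - i) = (ξ * ξs) * θ i + (ξs * ζ + ζs) := by
      intro i hi
      have h := hθaff i hi
      rw [h.2, h.1]; ring
    have hk2 : ∀ i ≤ d, θ i = (ξ*ξs)^2 * θ i + ((ξ*ξs)*(ξs*ζ+ζs) + (ξs*ζ+ζs)) := by
      intro i hi
      have h1 := hk (d-i) (by omega)
      rw [show d-(d-i) = i by omega] at h1
      rw [hk i hi] at h1
      linear_combination h1
    have hu2 : (ξ*ξs)^2 = 1 := by
      have e0 := hk2 0 (by omega)
      have e1 := hk2 1 hd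
      have hne : θ 0 - θ 1 ≠ 0 :=
        sub_ne_zero.2 (hdist 0 1 (by omega) hd (by omega))
      have hz : (1 - (ξ*ξs)^2) * (θ 0 - θ 1) = 0 := by linear_combination e0 - e1
      rcases mul_eq_zero.mp hz with h | h
      · linear_combination -h
      · exact absurd h hne
    have hu : ξ * ξs = -1 := by
      have hz : (ξ*ξs - 1) * (ξ*ξs + 1) = 0 := by linear_combination hu2
      rcases mul_eq_zero.mp hz with h | h
      · have hu1 : ξ * ξs = 1 := by linear_combination h
        by_cases h2 : (2:K) = 0
        · linear_combination hu1 + h2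
        · exfalso
          have k0 := hk 0 (by omega)
          have kd := hk d le_rfl
          rw [Nat.sub_zero] at k0
          rw [Nat.sub_self] at kd
          have hw : (2:K) * (ξs * ζ + ζs) = 0 := by
            linear_combination -k0 - kd - (θ 0 + θ d) * hu1
          have hw0 : ξs*ζ+ζs = 0 := (mul_eq_zero.mp hw).resolve_left h2
          have hdd : θ d = θ 0 := by
            linear_combination k0 + θ 0 * hu1 + hw0
          exact hdist d 0 le_rfl (by omega) (by omega) hdd
      · linear_combination h
    have b1 := hφaff 1 le_rfl hd
    have bd := hφaff d hd le_rfl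
    rw [hu] at b1 bd
    rw [show d - 1 + 1 = d by omega] at b1
    rw [show d - d + 1 = 1 by omega] at bd
    exact ⟨by linear_combination b1.1 - b1.2, by linear_combination b1.1,
      by linear_combination bd.2⟩
  -- ===================== master : (ii) → structure =====================
  have master : (φ 1 = φ d ∧ φ 1 = -ϕ 1 ∧ φ 1 = -ϕ d) →
      ∃ ξ : K, ξ = (θs d - θs 0) * (θ d - θ 0)⁻¹ ∧ ξ ≠ 0 ∧
        (∀ i ≤ d, θs i - θs 0 = ξ * (θ i - θ 0)) ∧
        (∀ i ≤ d, θ i + θ (d - i) = θ 0 + θ d) ∧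
        (∀ i, 1 ≤ i → i ≤ d → φ i = -ϕ i ∧ φ i = -ϕ (d - i + 1)) := by
    rintro ⟨hII1, hII2, hII3⟩
    have hφ1 : φ 1 ≠ 0 := (hPA1 1 le_rfl hd).1
    have hE1 : 2 * φ 1 = (θs 1 - θs 0) * (θ 0 - θ d) := by
      have h3 := hPA3 1 le_rfl hd
      rw [hS1, show (1:ℕ) - 1 = 0 from rfl] at h3
      linear_combination h3 + hII2
    have h2K : (2:K) ≠ 0 := by
      intro h2
      have hz : (θs 1 - θs 0) * (θ 0 - θ d) = 0 := by
        rw [← hE1, h2, zero_mul]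
      rcases mul_eq_zero.mp hz with h | h
      · exact hs10 h
      · exact h0d h
    have hrefl : (∑ h ∈ Finset.range (d+1), (θ h - θ (d - h)) / (θ 0 - θ d)) = 0 := by
      have hre := Finset.sum_range_reflect (fun h => (θ h - θ (d - h)) / (θ 0 - θ d)) (d+1)
      have hcg : ∀ k ∈ Finset.range (d+1), (θ (d+1-1-k) - θ (d - (d+1-1-k))) / (θ 0 - θ d)
          = -((θ k - θ (d - k)) / (θ 0 - θ d)) := by
        intro k hk; rw [Finset.mem_range] at hk
        rw [show d+1-1-k = d-k by omega, show d - (d-k) = k by omega, ← neg_div]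
        ring_nf
      rw [Finset.sum_congr rfl hcg, Finset.sum_neg_distrib] at hre
      have h2' : (2:K) * ∑ h ∈ Finset.range (d+1), (θ h - θ (d - h)) / (θ 0 - θ d) = 0 := by
        linear_combination -hre
      exact (mul_eq_zero.mp h2').resolve_left h2K
    have hSd : (∑ h ∈ Finset.range d, (θ h - θ (d - h)) / (θ 0 - θ d)) = 1 := by
      have e1 := Finset.sum_range_succ (fun h => (θ h - θ (d - h)) / (θ 0 - θ d)) d
      rw [Nat.sub_self, hrefl] at e1
      have hdiv : (θ d - θ 0)/(θ 0 - θ d) = -1 := by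
        rw [div_eq_iff h0d]; ring
      rw [hdiv] at e1
      linear_combination -e1
    have hSsym : ∀ i, 1 ≤ i → i ≤ d →
        (∑ h ∈ Finset.range (d-i+1), (θ h - θ (d - h)) / (θ 0 - θ d))
          = ∑ h ∈ Finset.range i, (θ h - θ (d - h)) / (θ 0 - θ d) := by
      intro i h1 hi
      have hsplit := Finset.sum_range_add (fun h => (θ h - θ (d - h)) / (θ 0 - θ d)) i (d+1-i)
      rw [show i + (d+1-i) = d+1 by omega] at hsplit
      have hre := Finset.sum_range_reflect
        (fun k => (θ (i+k) - θ (d - (i+k))) / (θ 0 - θ d)) (d+1-i)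
      have hcg : ∀ k ∈ Finset.range (d+1-i),
          (θ (i+(d+1-i-1-k)) - θ (d - (i+(d+1-i-1-k)))) / (θ 0 - θ d)
          = -((θ k - θ (d - k)) / (θ 0 - θ d)) := by
        intro k hk; rw [Finset.mem_range] at hk
        rw [show i+(d+1-i-1-k) = d-k by omega, show d - (d-k) = k by omega, ← neg_div]
        ring_nf
      rw [Finset.sum_congr rfl hcg, Finset.sum_neg_distrib] at hre
      rw [← hre, hrefl] at hsplit
      rw [show d-i+1 = d+1-i by omega]
      linear_combination hsplit
    have hE2 : 2 * φ 1 = (θs d - θs 0) * (θ (d-1) - θ d) := by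
      have h3 := hPA3 d hd le_rfl
      rw [hSd] at h3
      linear_combination h3 + hII1 + hII2
    have hE3 : -(2 * φ 1) = (θs d - θs 0) * (θ 1 - θ 0) := by
      have h4 := hPA4 d hd le_rfl
      rw [hSd, Nat.sub_self] at h4
      linear_combination h4 - hII3
    have ht1 : θ 1 + θ (d-1) = θ 0 + θ d := by
      by_cases hd1 : d = 1
      · subst hd1; rw [show (1:ℕ)-1 = 0 from rfl]; ring
      · have hz : (θs d - θs 0) * ((θ (d-1) - θ d) + (θ 1 - θ 0)) = 0 := by
          linear_combination -hE2 - hE3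
        rcases mul_eq_zero.mp hz with h | h
        · exact absurd h hsd0
        · linear_combination h
    have hξne : (θs d - θs 0) * (θ d - θ 0)⁻¹ ≠ 0 :=
      mul_ne_zero hsd0 (inv_ne_zero hd0')
    have hslope_d : θs d - θs 0 = ((θs d - θs 0) * (θ d - θ 0)⁻¹) * (θ d - θ 0) := by
      field_simp
    have hslope1' : (θs 1 - θs 0) * (θ d - θ 0) = (θs d - θs 0) * (θ 1 - θ 0) := by
      linear_combination hE1 + hE3
    have hslope_1 : θs 1 - θs 0 = ((θs d - θs 0) * (θ d - θ 0)⁻¹) * (θ 1 - θ 0) := by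
      field_simp
      linear_combination hslope1'
    have hT : ∀ i ≤ d, θ i + θ (d - i) = θ 0 + θ d := by
      rcases lt_or_ge d 3 with hlt | hge
      · intro i hi
        interval_cases d
        · interval_cases i
          · norm_num
          · rw [show (1:ℕ) - 1 = 0 from rfl]; ring
        · interval_cases i
          · norm_num
          · exact ht1
          · rw [show (2:ℕ) - 2 = 0 from rfl]; ring
      · have hβrec : ∀ i, 2 ≤ i → i ≤ d - 1 →
            θ (i-2) - θ (i+1) = ((θ 0 - θ 3)/(θ 1 - θ 2)) * (θ (i-1) - θ i) := by
          intro i h2i hi1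
          have h5 := (hPA5 i 2 h2i hi1 le_rfl (by omega)).2
          rw [show (2:ℕ)-2 = 0 from rfl, show (2:ℕ)-1 = 1 from rfl,
              show (2:ℕ)+1 = 3 from rfl] at h5
          have hne : θ (i-1) - θ i ≠ 0 :=
            sub_ne_zero.2 (hdist (i-1) i (by omega) (by omega) (by omega))
          rw [div_eq_iff hne] at h5
          exact h5
        exact DAI.Tsym d hge θ _ hdist hβrec h2K ht1
    have hA : ∀ i ≤ d, θs i - θs 0 = ((θs d - θs 0) * (θ d - θ 0)⁻¹) * (θ i - θ 0) := by
      rcases lt_or_ge d 3 with hlt | hge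
      · intro i hi
        interval_cases d
        · interval_cases i
          · simp
          · exact hslope_d
        · interval_cases i
          · simp
          · exact hslope_1
          · exact hslope_d
      · have hβrec : ∀ i, 2 ≤ i → i ≤ d - 1 →
            θ (i-2) - θ (i+1) = ((θ 0 - θ 3)/(θ 1 - θ 2)) * (θ (i-1) - θ i) := by
          intro i h2i hi1
          have h5 := (hPA5 i 2 h2i hi1 le_rfl (by omega)).2
          rw [show (2:ℕ)-2 = 0 from rfl, show (2:ℕ)-1 = 1 from rfl,
              show (2:ℕ)+1 = 3 from rfl] at h5
          have hne : θ (i-1) - θ i ≠ 0 :=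
            sub_ne_zero.2 (hdist (i-1) i (by omega) (by omega) (by omega))
          rw [div_eq_iff hne] at h5
          exact h5
        have hβrecs : ∀ i, 2 ≤ i → i ≤ d - 1 →
            θs (i-2) - θs (i+1) = ((θ 0 - θ 3)/(θ 1 - θ 2)) * (θs (i-1) - θs i) := by
          intro i h2i hi1
          have h5 := hPA5 i 2 h2i hi1 le_rfl (by omega)
          have h51 := h5.1
          have h52 := h5.2
          rw [show (2:ℕ)-2 = 0 from rfl, show (2:ℕ)-1 = 1 from rfl,
              show (2:ℕ)+1 = 3 from rfl] at h52
          rw [h51] at h52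
          have hnes : θs (i-1) - θs i ≠ 0 :=
            sub_ne_zero.2 (hdists (i-1) i (by omega) (by omega) (by omega))
          rw [div_eq_iff hnes] at h52
          exact h52
        obtain ⟨σ, hσdef⟩ : ∃ σ : ℕ → K, ∀ i, σ i
            = θs i - ((θs d - θs 0) * (θ d - θ 0)⁻¹) * θ i
              - (θs 0 - ((θs d - θs 0) * (θ d - θ 0)⁻¹) * θ 0) :=
          ⟨_, fun _ => rfl⟩
        have hrecσ : ∀ i, 2 ≤ i → i ≤ d - 1 →
            σ (i-2) - σ (i+1) = ((θ 0 - θ 3)/(θ 1 - θ 2)) * (σ (i-1) - σ i) := by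
          intro i h2i hi1
          rw [hσdef, hσdef, hσdef, hσdef]
          linear_combination hβrecs i h2i hi1
            - ((θs d - θs 0) * (θ d - θ 0)⁻¹) * hβrec i h2i hi1
        have hσ0 : σ 0 = 0 := by rw [hσdef]; ring
        have hσ1 : σ 1 = 0 := by rw [hσdef]; linear_combination hslope_1
        have hσd : σ d = 0 := by rw [hσdef]; linear_combination hslope_d
        have hall := DAI.Szero d hge θ σ _ hdist hβrec hrecσ h2K hT hσ0 hσ1 hσd
        intro i hi
        have h' := hall i hi
        rw [hσdef] at h'
        linear_combination h'
    have hphi : ∀ i, 1 ≤ i → i ≤ d → φ i = -ϕ i ∧ φ i = -ϕ (d - i + 1) := by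
      intro i h1 hi
      have h3 := hPA3 i h1 hi
      have h4 := hPA4 i h1 hi
      have hTT : θ (i-1) + θ (d-i+1) = θ 0 + θ d := by
        have hh := hT (i-1) (by omega)
        rw [show d - (i-1) = d - i + 1 by omega] at hh
        exact hh
      constructor
      · linear_combination h3 + h4
          + (∑ h ∈ Finset.range i, (θ h - θ (d - h)) / (θ 0 - θ d)) * hII2
          + (θs i - θs 0) * hTT
      · have h4' := hPA4 (d-i+1) (by omega) (by omega)
        rw [show d - (d-i+1) + 1 = i by omega, hSsym i h1 hi] at h4'
        have hAi := hA i hi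
        have hAi' := hA (d-i+1) (by omega)
        linear_combination h3 + h4'
          + (∑ h ∈ Finset.range i, (θ h - θ (d - h)) / (θ 0 - θ d)) * hII2
          + (θ (i-1) - θ d) * hAi + (θ i - θ 0) * hAi'
          + ((θs d - θs 0) * (θ d - θ 0)⁻¹) * (θ i - θ 0) * hTT
    exact ⟨_, rfl, hξne, hA, hT, hphi⟩
  -- ===================== build : (ii) → moreover =====================
  have build : (φ 1 = φ d ∧ φ 1 = -ϕ 1 ∧ φ 1 = -ϕ d) →
      ∃ ξ ζ ξs ζs : K,
        ξ = (θs d - θs 0) * (θ d - θ 0)⁻¹ ∧ ζ = θs 0 - ξ * θ 0 ∧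
        ξs = -ξ⁻¹ ∧ ζs = θ 0 - ξs * θs d ∧
        ξ ≠ 0 ∧ ξs ≠ 0 ∧
        (∀ i ≤ d, θs i = ξ * θ i + ζ ∧ θ (d - i) = ξs * θs i + ζs) ∧
        (∀ i, 1 ≤ i → i ≤ d →
          ϕ i = ξ * ξs * φ i ∧ φ (d - i + 1) = ξ * ξs * ϕ i) := by
    intro hII
    obtain ⟨ξ, hξdef, hξne, hA, hT, hphi⟩ := master hII
    refine ⟨ξ, θs 0 - ξ * θ 0, -ξ⁻¹, θ 0 - (-ξ⁻¹) * θs d, hξdef, rfl, rfl, rfl,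
      hξne, neg_ne_zero.2 (inv_ne_zero hξne), ?_, ?_⟩
    · intro i hi
      have hinv : ξ⁻¹ * ξ = 1 := inv_mul_cancel₀ hξne
      have h1 : θs i - θs d = ξ * (θ i - θ d) := by
        linear_combination hA i hi - hA d le_rfl
      constructor
      · linear_combination hA i hi
      · linear_combination hT i hi + ξ⁻¹ * h1 + (θ i - θ d) * hinv
    · intro i h1 hi
      have hm1 : ξ * -ξ⁻¹ = -1 := by field_simp
      rw [hm1]
      refine ⟨by linear_combination (hphi i h1 hi).1, ?_⟩
      have hj := (hphi (d-i+1) (by omega) (by omega)).2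
      rw [show d - (d-i+1) + 1 = i by omega] at hj
      linear_combination hj
  -- ===================== assemble =====================
  refine ⟨⟨i_to_ii, ?_⟩, ⟨?_, ?_⟩, ?_⟩
  · intro hII
    obtain ⟨ξ, ζ, ξs, ζs, _, _, _, _, hξ, hξs, hθa, hφa⟩ := build hII
    exact ⟨ξ, ζ, ξs, ζs, hξ, hξs, hθa, hφa⟩
  · intro hII
    obtain ⟨ξ, hξdef, hξne, hA, hT, hphi⟩ := master hII
    refine ⟨?_, ?_, ?_⟩
    · intro i h1 hi
      have hj := (hphi (d-i+1) (by omega) (by omega)).2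
      rw [show d - (d-i+1) + 1 = i by omega] at hj
      exact ⟨by linear_combination (hphi i h1 hi).1 - hj,
        (hphi i h1 hi).1, (hphi i h1 hi).2⟩
    · intro i j h1i hii h1j hjj
      have key : ∀ m, 1 ≤ m → m ≤ d → (θs m - θs 0) * (θ m - θ 0)⁻¹ = ξ := by
        intro m h1m hm
        have hne : θ m - θ 0 ≠ 0 :=
          sub_ne_zero.2 (hdist m 0 hm (by omega) (by omega))
        rw [hA m hm]
        exact mul_inv_cancel_right₀ hne ξ
      rw [key i h1i hii, key j h1j hjj]
    · intro i j h1i hii h1j hjj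
      have key : ∀ m, 1 ≤ m → m ≤ d → (θs (d-m) - θs d) * (θ m - θ 0)⁻¹ = -ξ := by
        intro m h1m hm
        have hne : θ m - θ 0 ≠ 0 :=
          sub_ne_zero.2 (hdist m 0 hm (by omega) (by omega))
        have h1 : θs (d-m) - θs d = -ξ * (θ m - θ 0) := by
          have ha := hA (d-m) (by omega)
          have hb := hA d le_rfl
          have hc := hT m hm
          linear_combination ha - hb + ξ * hc
        rw [h1]
        exact mul_inv_cancel_right₀ hne (-ξ)
      rw [key i h1i hii, key j h1j hjj]
  · rintro ⟨hphi, -, -⟩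
    have h := hphi 1 le_rfl hd
    rw [show d - 1 + 1 = d by omega] at h
    exact ⟨h.1, h.2.1, h.2.2⟩
  · exact build
end

section
/- Let P = ({θ_i}_{i=0}^d; {θ*_i}_{i=0}^d; {φ_i}_{i=1}^d; {ϕ_i}_{i=1}^d) be a parameter array of diameter d ≥ 1 over a field K, let ξ, ζ, ξ*, ζ* be scalars in K with ξ, ξ* nonzero, and set α = (θ*_d − θ*_0)(θ_d − θ_0)^{−1}. Then at least one of the four parameter arrays P^*, P^↓*, P^⇓*, P^↓⇓* equals ({ξθ_i+ζ}; {ξ*θ*_i+ζ*}; {ξξ*φ_i}; {ξξ*ϕ_i}) if and only if at least one of the following holds: (i) ϕ_1 = ϕ_d, ξ = α, ζ = θ*_0 − αθ_0, ξ* = α^{−1}, ζ* = θ_0 − α^{−1}θ*_0; (ii) φ_1 = φ_d = −ϕ_1 = −ϕ_d, ξ = −α, ζ = θ*_d + αθ_0, ξ* = α^{−1}, ζ* = θ_0 − α^{−1}θ*_0; (iii) φ_1 = φ_d = −ϕ_1 = −ϕ_d, ξ = α, ζ = θ*_0 − αθ_0, ξ* = −α^{−1}, ζ* = θ_0 + α^{−1}θ*_d;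 (iv) φ_1 = φ_d, ξ = −α, ζ = θ*_d + αθ_0, ξ* = −α^{−1}, ζ* = θ_0 + α^{−1}θ*_d. Moreover, in this case precisely one of (i)–(iv) holds. (Equivalently: the Leonard pair A*, A is isomorphic to the Leonard pair ξA+ζI, ξ*A*+ζ*I if and only if at least one, and then exactly one, of (i)–(iv) holds.) -/
/-- Equality of two parameter arrays of diameter `d`
(each given as a quadruple of sequences `(θ, θ*, φ, ϕ)`). -/
def EqPA (K : Type*) (d : ℕ)
    (P Q : (ℕ → K) × (ℕ → K) × (ℕ → K) × (ℕ → K)) : Prop :=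
  (∀ i ≤ d, P.1 i = Q.1 i ∧ P.2.1 i = Q.2.1 i) ∧
  (∀ i, 1 ≤ i → i ≤ d → P.2.2.1 i = Q.2.2.1 i ∧ P.2.2.2 i = Q.2.2.2 i)

/-!
Comparing the endpoints `i = 0, d` of the `θ`- and `θ*`-parts forces `ξ = ±α`, `ξ* = ±α⁻¹`, the
signs recording which of `θ*`, `θ` is reversed; then `ξξ* = ±1` and the `φ, ϕ`-parts at `i = 1, d`
give the conditions on `φ₁, φ_d, ϕ₁, ϕ_d`.

Conversely, `ϕ₁ = ϕ_d` makes `θ*` an affine image of `θ`. By (PA5) the successive differences of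
`w = (θ_d - θ₀) θ* - (θ*_d - θ*₀) θ` and of `θ` satisfy one Chebyshev recurrence
`x_{j+2} = β x_{j+1} - x_j`; those of `w` vanish at `j = 0` and sum to `0`. Reflecting the
Chebyshev solution `Sⱼ₋₂(β)` shows that such a solution vanishes identically once
`θ₀ ≠ θ_d ≠ θ₁`. Applied to `P^⇓`, the same argument makes `θ*` an affine image of the reversed `θ`
when `φ₁ = φ_d`. Together with (PA3), (PA4) this gives `ϕ_{d-i+1} = ϕ_i`, `φ_{d-i+1} = φ_i`,
and `φ_i = -ϕ_i` in the mixed cases.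
-/

open Finset

section Recurrence

variable {K : Type*} [CommRing K] {d : ℕ} {β : K}

def IsThreeTermRec (d : ℕ) (β : K) (x : ℕ → K) : Prop :=
  ∀ j, j + 3 ≤ d → x (j + 2) = β * x (j + 1) - x j

/-- Terwilliger's `β`-recurrent sequences. -/
def IsBetaRecurrent (d : ℕ) (β : K) (u : ℕ → K) : Prop :=
  ∀ i, i + 3 ≤ d → u i - u (i + 3) = (β + 1) * (u (i + 1) - u (i + 2))

open Polynomial in
noncomputable def chebShift (β : K) (n : ℕ) : K := (Chebyshev.S K ((n : ℤ) - 2)).eval β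

@[simp] lemma chebShift_zero (β : K) : chebShift β 0 = -1 := by
  simp [chebShift, Polynomial.Chebyshev.S_neg_two]

@[simp] lemma chebShift_one (β : K) : chebShift β 1 = 0 := by
  simp [chebShift, show (1 : ℤ) - 2 = -1 by norm_num, Polynomial.Chebyshev.S_neg_one]

lemma chebShift_add_two (β : K) (n : ℕ) :
    chebShift β (n + 2) = β * chebShift β (n + 1) - chebShift β n := by
  simp only [chebShift, Nat.cast_add, Nat.cast_ofNat, Nat.cast_one, add_sub_cancel_right]
  rw [Polynomial.Chebyshev.S_eq, show (n : ℤ) + 1 - 2 = n - 1 by ring]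
  simp

lemma isThreeTermRec_chebShift_rev (d : ℕ) (β : K) :
    IsThreeTermRec d β (fun j => chebShift β (d - j)) := by
  intro j hj
  dsimp only
  rw [show d - j = d - (j + 2) + 2 by omega, chebShift_add_two,
    show d - (j + 1) = d - (j + 2) + 1 by omega]
  ring

lemma IsThreeTermRec.eq_chebShift {x : ℕ → K} (hx : IsThreeTermRec d β x) :
    ∀ j < d, x j = x 1 * chebShift β (j + 1) - x 0 * chebShift β j
  | 0, _ => by simp
  | 1, _ => by simp [show (1 + 1 : ℕ) = 0 + 2 from rfl, chebShift_add_two]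
  | j + 2, hj => by
    rw [hx j (by omega), hx.eq_chebShift (j + 1) (by omega), hx.eq_chebShift j (by omega),
      chebShift_add_two β (j + 1), chebShift_add_two β j]
    ring

lemma IsThreeTermRec.sum_eq {x : ℕ → K} (hx : IsThreeTermRec d β x) :
    ∑ j ∈ range d, x j =
      x 1 * ∑ j ∈ range d, chebShift β (j + 1) - x 0 * ∑ j ∈ range d, chebShift β j := by
  rw [mul_sum, mul_sum, ← sum_sub_distrib]
  exact sum_congr rfl fun j hj => hx.eq_chebShift j (mem_range.mp hj)

lemma IsBetaRecurrent.isThreeTermRec_sub {u : ℕ → K} (hu : IsBetaRecurrent d β u) :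
    IsThreeTermRec d β (fun j => u (j + 1) - u j) := by
  intro j hj
  linear_combination -hu j hj

variable [IsDomain K]

lemma IsThreeTermRec.eq_zero_of_sum_eq_zero {Δ x : ℕ → K}
    (hΔ : IsThreeTermRec d β Δ) (hx : IsThreeTermRec d β x)
    (hΔ0 : ∑ j ∈ range d, Δ j ≠ 0) (hΔ1 : ∑ j ∈ range (d - 1), Δ (j + 1) ≠ 0)
    (hx0 : x 0 = 0) (hxs : ∑ j ∈ range d, x j = 0) :
    ∀ j < d, x j = 0 := by
  obtain ⟨e, rfl⟩ : ∃ e, d = e + 2 := by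
    rcases Nat.lt_or_ge d 2 with hd | hd
    · interval_cases d <;> simp at hΔ1
    · exact ⟨d - 2, by omega⟩
  set c := chebShift β
  by_cases hx1 : x 1 = 0
  · intro j hj
    rw [hx.eq_chebShift j hj, hx0, hx1]
    ring
  exfalso
  have hsum_succ : ∑ j ∈ range (e + 2), c (j + 1) = 0 := by
    have h := hx.sum_eq
    rw [hxs, hx0, zero_mul, sub_zero, zero_eq_mul] at h
    exact h.resolve_left hx1
  have hsum : ∑ j ∈ range (e + 2), c j = -1 - c (e + 2) := by
    rw [sum_range_succ] at hsum_succ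
    rw [sum_range_succ']
    linear_combination hsum_succ + chebShift_zero β
  -- `j ↦ c (e + 2 - j)` is again a solution; its sum is `0` by reflection and, expanded, gives:
  have hkey : c (e + 2) * (1 + c (e + 2)) = 0 := by
    have h := (isThreeTermRec_chebShift_rev (e + 2) β).sum_eq
    have hrefl : ∑ j ∈ range (e + 2), c (e + 2 - j) = 0 := by
      rw [← hsum_succ, ← sum_range_reflect]
      exact sum_congr rfl fun j hj => congrArg c (by simp at hj; omega)
    simp only [Nat.sub_zero] at h
    rw [hrefl, hsum_succ, hsum] at h
    linear_combination -h
  have hΔsum : ∑ j ∈ range (e + 2), Δ j = Δ 0 * (1 + c (e + 2)) := by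
    rw [hΔ.sum_eq, hsum_succ, hsum]
    ring
  have hΔsum_succ : ∑ j ∈ range (e + 1), Δ (j + 1) = Δ 0 * c (e + 2) := by
    have h := hΔsum
    rw [sum_range_succ'] at h
    linear_combination h
  refine mul_ne_zero hΔ0 hΔ1 ?_
  rw [hΔsum, show e + 2 - 1 = e + 1 from rfl, hΔsum_succ]
  linear_combination Δ 0 ^ 2 * hkey

lemma IsBetaRecurrent.affine_of_affine_at_one {u v : ℕ → K}
    (hu : IsBetaRecurrent d β u) (hv : IsBetaRecurrent d β v) (hinj : Set.InjOn u (Set.Iic d))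
    (h1 : (v 1 - v 0) * (u d - u 0) = (v d - v 0) * (u 1 - u 0)) :
    ∀ i ≤ d, (v i - v 0) * (u d - u 0) = (v d - v 0) * (u i - u 0) := by
  rcases Nat.lt_or_ge d 2 with hd | hd
  · interval_cases d <;> intro i hi <;> interval_cases i <;> ring
  have hne : ∀ i < d, u i - u d ≠ 0 := fun i hi =>
    sub_ne_zero.mpr fun h => hi.ne (hinj (Set.mem_Iic.mpr hi.le) (Set.mem_Iic.mpr le_rfl) h)
  set x : ℕ → K := fun j => (u d - u 0) * (v (j + 1) - v j) - (v d - v 0) * (u (j + 1) - u j)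
  have hx : IsThreeTermRec d β x := by
    intro j hj
    linear_combination (u d - u 0) * hv.isThreeTermRec_sub j hj
      - (v d - v 0) * hu.isThreeTermRec_sub j hj
  have htel : ∀ n, ∑ j ∈ range n, x j = (u d - u 0) * (v n - v 0) - (v d - v 0) * (u n - u 0) := by
    intro n
    rw [sum_sub_distrib, ← mul_sum, ← mul_sum, sum_range_sub, sum_range_sub]
  have hΔ1 : ∑ j ∈ range (d - 1), (u (j + 1 + 1) - u (j + 1)) ≠ 0 := by
    rw [sum_range_sub (fun j => u (j + 1)), Nat.sub_add_cancel (by omega : 1 ≤ d)]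
    exact fun h => hne 1 (by omega) (by linear_combination -h)
  have hx_eq_zero := hu.isThreeTermRec_sub.eq_zero_of_sum_eq_zero hx
    (by rw [sum_range_sub]; exact fun h => hne 0 (by omega) (by linear_combination -h))
    hΔ1 (by simp only [x, zero_add]; linear_combination h1) (by rw [htel]; ring)
  intro i hi
  have h := htel i
  rw [sum_eq_zero fun j hj => hx_eq_zero j (by simp at hj; omega)] at h
  linear_combination -h

end Recurrence

lemma sum_range_sub_reflect {M : Type*} [AddCommGroup M] (f : ℕ → M) (k m : ℕ) :
    ∑ h ∈ range k, (f h - f (k + m - 1 - h)) =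
      ∑ h ∈ range k, f h + ∑ h ∈ range m, f h - ∑ h ∈ range (k + m), f h := by
  rw [sum_sub_distrib, add_comm k m, sum_range_add, ← sum_range_reflect (fun j => f (m + j)) k]
  have : ∑ h ∈ range k, f (m + k - 1 - h) = ∑ j ∈ range k, f (m + (k - 1 - j)) :=
    sum_congr rfl fun j hj => congrArg f (by simp at hj; omega)
  rw [this]
  abel

lemma eq_of_affine_endpoints {K : Type*} [CommRing K] [IsDomain K] {x₀ x₁ y₀ y₁ a ξ ζ : K}
    (hx : x₀ ≠ x₁) (ha : a * (x₁ - x₀) = y₁ - y₀) (h₀ : y₀ = ξ * x₀ + ζ) (h₁ : y₁ = ξ * x₁ + ζ) :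
    ξ = a ∧ ζ = y₀ - a * x₀ := by
  obtain rfl : ξ = a :=
    mul_right_cancel₀ (sub_ne_zero.mpr hx.symm) (by linear_combination h₀ - h₁ - ha)
  exact ⟨rfl, by linear_combination -h₀⟩

section ParamArray

variable {K : Type*} [Field K] {d : ℕ} {θ θs φ ϕ : ℕ → K} {α ξ ζ ξs ζs : K}

/-- Terwilliger's `ϑᵢ`, the sum occurring in (PA3) and (PA4). -/
def vartheta (d : ℕ) (θ : ℕ → K) (i : ℕ) : K :=
  ∑ h ∈ range i, (θ h - θ (d - h)) / (θ 0 - θ d)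

lemma vartheta_reflect {i : ℕ} (hi : i ≤ d + 1) : vartheta d θ (d + 1 - i) = vartheta d θ i := by
  have h₁ := sum_range_sub_reflect θ i (d + 1 - i)
  have h₂ := sum_range_sub_reflect θ (d + 1 - i) i
  rw [show i + (d + 1 - i) = d + 1 by omega, Nat.add_sub_cancel] at h₁
  rw [show d + 1 - i + i = d + 1 by omega, Nat.add_sub_cancel] at h₂
  rw [vartheta, vartheta, ← sum_div, ← sum_div, h₁, h₂]
  ring

lemma vartheta_rev {i : ℕ} (hi : i ≤ d + 1) :
    vartheta d (fun k => θ (d - k)) i = vartheta d θ i := by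
  refine sum_congr rfl fun h hh => ?_
  dsimp only
  rw [Nat.sub_zero, Nat.sub_self, Nat.sub_sub_self (by simp at hh; omega), ← neg_div_neg_eq,
    neg_sub, neg_sub]

lemma IsParamArray.theta_ne (hPA : IsParamArray K d θ θs φ ϕ) {i j : ℕ} (hi : i ≤ d) (hj : j ≤ d)
    (hij : i ≠ j) : θ i ≠ θ j :=
  (hPA.2.1 i j hi hj hij).1

lemma IsParamArray.theta_star_ne (hPA : IsParamArray K d θ θs φ ϕ) {i j : ℕ} (hi : i ≤ d)
    (hj : j ≤ d) (hij : i ≠ j) : θs i ≠ θs j :=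
  (hPA.2.1 i j hi hj hij).2

lemma IsParamArray.varphi_eq (hPA : IsParamArray K d θ θs φ ϕ) {i : ℕ} (hi : 1 ≤ i)
    (hid : i ≤ d) : φ i = ϕ 1 * vartheta d θ i + (θs i - θs 0) * (θ (i - 1) - θ d) :=
  hPA.2.2.1 i hi hid

lemma IsParamArray.phi_eq (hPA : IsParamArray K d θ θs φ ϕ) {i : ℕ} (hi : 1 ≤ i)
    (hid : i ≤ d) : ϕ i = φ 1 * vartheta d θ i + (θs i - θs 0) * (θ (d - i + 1) - θ 0) :=
  hPA.2.2.2.1 i hi hid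

lemma IsParamArray.exists_isBetaRecurrent (hPA : IsParamArray K d θ θs φ ϕ) :
    ∃ β, IsBetaRecurrent d β θ ∧ IsBetaRecurrent d β θs := by
  have h5 : ∀ i, i + 3 ≤ d →
      (θ i - θ (i + 3)) / (θ (i + 1) - θ (i + 2))
          = (θs i - θs (i + 3)) / (θs (i + 1) - θs (i + 2)) ∧
        (θ i - θ (i + 3)) / (θ (i + 1) - θ (i + 2)) = (θ 0 - θ 3) / (θ 1 - θ 2) := fun i hi => by
    simpa [show i + 2 - 1 = i + 1 by omega, show i + 2 + 1 = i + 3 by omega] using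
      hPA.2.2.2.2 (i + 2) 2 (by omega) (by omega) le_rfl (by omega)
  refine ⟨(θ 0 - θ 3) / (θ 1 - θ 2) - 1, fun i hi => ?_, fun i hi => ?_⟩
  · rw [sub_add_cancel, ← (h5 i hi).2, div_mul_cancel₀ _
      (sub_ne_zero.mpr (hPA.theta_ne (by omega) (by omega) (by omega)))]
  · rw [sub_add_cancel, ← (h5 i hi).2, (h5 i hi).1, div_mul_cancel₀ _
      (sub_ne_zero.mpr (hPA.theta_star_ne (by omega) (by omega) (by omega)))]

/-- The parameter array `P^⇓` of the Leonard system `Φ^⇓`. -/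
lemma IsParamArray.reverse (hPA : IsParamArray K d θ θs φ ϕ) :
    IsParamArray K d (fun i => θ (d - i)) θs ϕ φ := by
  have hratio : ∀ i, 2 ≤ i → i ≤ d - 1 →
      (θ (d - (i - 2)) - θ (d - (i + 1))) / (θ (d - (i - 1)) - θ (d - i))
        = (θ (i - 2) - θ (i + 1)) / (θ (i - 1) - θ i) := by
    intro i hi hid
    obtain ⟨-, hconst⟩ := hPA.2.2.2.2 (d + 1 - i) i (by omega) (by omega) hi hid
    rw [← hconst, ← neg_div_neg_eq, neg_sub, neg_sub, show d - (i - 2) = d + 1 - i + 1 by omega,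
      show d - (i + 1) = d + 1 - i - 2 by omega, show d - (i - 1) = d + 1 - i by omega,
      show d - i = d + 1 - i - 1 by omega]
  refine ⟨fun i hi hid => (hPA.1 i hi hid).symm, fun i j hi hj hij =>
      ⟨hPA.theta_ne (by omega) (by omega) (by omega), hPA.theta_star_ne hi hj hij⟩,
    fun i hi hid => ?_, fun i hi hid => ?_, fun i j hi hid hj hjd => ?_⟩
  · change ϕ i = φ 1 * vartheta d _ i + _
    rw [vartheta_rev (by omega), hPA.phi_eq hi hid]
    dsimp only
    rw [Nat.sub_self, show d - (i - 1) = d - i + 1 by omega]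
  · change φ i = ϕ 1 * vartheta d _ i + _
    rw [vartheta_rev (by omega), hPA.varphi_eq hi hid]
    dsimp only
    rw [Nat.sub_zero, show d - (d - i + 1) = i - 1 by omega]
  · rw [hratio i hi hid, hratio j hj hjd]
    exact hPA.2.2.2.2 i j hi hid hj hjd

lemma IsParamArray.phi_sub_phi_rev (hPA : IsParamArray K d θ θs φ ϕ) {i : ℕ} (hi : 1 ≤ i)
    (hid : i ≤ d) :
    ϕ i - ϕ (d - i + 1) =
      (θs i - θs 0) * (θ (d - i + 1) - θ 0) - (θs (d - i + 1) - θs 0) * (θ i - θ 0) := by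
  have hsymm : vartheta d θ (d - i + 1) = vartheta d θ i := by
    rw [show d - i + 1 = d + 1 - i by omega]
    exact vartheta_reflect (by omega)
  have h := hPA.phi_eq (i := d - i + 1) (by omega) (by omega)
  rw [show d - (d - i + 1) + 1 = i by omega, hsymm] at h
  rw [h, hPA.phi_eq hi hid]
  ring

lemma IsParamArray.alpha_mul (hPA : IsParamArray K d θ θs φ ϕ) (hd : 1 ≤ d)
    (hα : α = (θs d - θs 0) * (θ d - θ 0)⁻¹) : α * (θ d - θ 0) = θs d - θs 0 := by
  rw [hα, inv_mul_cancel_right₀ (sub_ne_zero.mpr (hPA.theta_ne le_rfl (Nat.zero_le d) (by omega)))]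

lemma IsParamArray.alpha_ne_zero (hPA : IsParamArray K d θ θs φ ϕ) (hd : 1 ≤ d)
    (hα : α = (θs d - θs 0) * (θ d - θ 0)⁻¹) : α ≠ 0 := by
  rintro rfl
  have h := hPA.alpha_mul hd hα
  exact hPA.theta_star_ne le_rfl (Nat.zero_le d) (by omega) (by linear_combination -h)

lemma IsParamArray.inv_alpha_mul (hPA : IsParamArray K d θ θs φ ϕ) (hd : 1 ≤ d)
    (hα : α = (θs d - θs 0) * (θ d - θ 0)⁻¹) : α⁻¹ * (θs d - θs 0) = θ d - θ 0 := by
  rw [← hPA.alpha_mul hd hα, inv_mul_cancel_left₀ (hPA.alpha_ne_zero hd hα)]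

lemma neg_alpha_eq_alpha_reverse (hα : α = (θs d - θs 0) * (θ d - θ 0)⁻¹) :
    -α = (θs d - θs 0) * ((fun i => θ (d - i)) d - (fun i => θ (d - i)) 0)⁻¹ := by
  simp only [Nat.sub_self, Nat.sub_zero]
  rw [hα, ← neg_sub (θ d), inv_neg, mul_neg]

lemma IsParamArray.theta_star_eq_of_phi_one_eq (hPA : IsParamArray K d θ θs φ ϕ) (hd : 1 ≤ d)
    (hα : α = (θs d - θs 0) * (θ d - θ 0)⁻¹) (h : ϕ 1 = ϕ d) :
    ∀ i ≤ d, θs i = α * θ i + (θs 0 - α * θ 0) := by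
  obtain ⟨β, hθ, hθs⟩ := hPA.exists_isBetaRecurrent
  have h₁ := hPA.phi_sub_phi_rev le_rfl hd
  rw [Nat.sub_add_cancel hd] at h₁
  have hcross := hθ.affine_of_affine_at_one hθs (fun i hi j hj hij => by
    by_contra hne; exact hPA.theta_ne hi hj hne hij) (by linear_combination h - h₁)
  intro i hi
  apply mul_right_cancel₀ (sub_ne_zero.mpr (hPA.theta_ne le_rfl (Nat.zero_le d) (by omega)))
  linear_combination hcross i hi - (θ i - θ 0) * hPA.alpha_mul hd hα

lemma IsParamArray.theta_eq_of_phi_one_eq (hPA : IsParamArray K d θ θs φ ϕ) (hd : 1 ≤ d)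
    (hα : α = (θs d - θs 0) * (θ d - θ 0)⁻¹) (h : ϕ 1 = ϕ d) :
    ∀ i ≤ d, θ i = α⁻¹ * θs i + (θ 0 - α⁻¹ * θs 0) := by
  intro i hi
  linear_combination -α⁻¹ * hPA.theta_star_eq_of_phi_one_eq hd hα h i hi
    - (θ i - θ 0) * inv_mul_cancel₀ (hPA.alpha_ne_zero hd hα)

lemma IsParamArray.phi_rev_eq_of_phi_one_eq (hPA : IsParamArray K d θ θs φ ϕ) (hd : 1 ≤ d)
    (h : ϕ 1 = ϕ d) : ∀ i, 1 ≤ i → i ≤ d → ϕ (d - i + 1) = ϕ i := by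
  intro i hi hid
  have hθs := hPA.theta_star_eq_of_phi_one_eq hd rfl h
  linear_combination -hPA.phi_sub_phi_rev hi hid - (θ (d - i + 1) - θ 0) * hθs i hid
    + (θ i - θ 0) * hθs (d - i + 1) (by omega)

lemma IsParamArray.theta_star_rev_eq_of_varphi_one_eq (hPA : IsParamArray K d θ θs φ ϕ)
    (hd : 1 ≤ d) (hα : α = (θs d - θs 0) * (θ d - θ 0)⁻¹) (h : φ 1 = φ d) :
    ∀ i ≤ d, θs (d - i) = -α * θ i + (θs d + α * θ 0) := by
  intro i hi
  have h' := hPA.reverse.theta_star_eq_of_phi_one_eq hd (neg_alpha_eq_alpha_reverse hα) h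
    (d - i) (by omega)
  simp only [Nat.sub_sub_self hi, Nat.sub_zero] at h'
  linear_combination h' + hPA.alpha_mul hd hα

lemma IsParamArray.theta_rev_eq_of_varphi_one_eq (hPA : IsParamArray K d θ θs φ ϕ)
    (hd : 1 ≤ d) (hα : α = (θs d - θs 0) * (θ d - θ 0)⁻¹) (h : φ 1 = φ d) :
    ∀ i ≤ d, θ (d - i) = -α⁻¹ * θs i + (θ 0 + α⁻¹ * θs d) := by
  intro i hi
  have h' := hPA.reverse.theta_eq_of_phi_one_eq hd (neg_alpha_eq_alpha_reverse hα) h i hi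
  simp only [Nat.sub_zero, inv_neg] at h'
  linear_combination h' - hPA.inv_alpha_mul hd hα

lemma IsParamArray.varphi_rev_eq_of_varphi_one_eq (hPA : IsParamArray K d θ θs φ ϕ)
    (hd : 1 ≤ d) (h : φ 1 = φ d) : ∀ i, 1 ≤ i → i ≤ d → φ (d - i + 1) = φ i :=
  hPA.reverse.phi_rev_eq_of_phi_one_eq hd h

lemma IsParamArray.theta_add_theta_rev (hPA : IsParamArray K d θ θs φ ϕ) (hd : 1 ≤ d)
    (hϕ : ϕ 1 = ϕ d) (hφ : φ 1 = φ d) : ∀ i ≤ d, θ i + θ (d - i) = θ 0 + θ d := by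
  intro i hi
  obtain ⟨α, hα⟩ : ∃ α, α = (θs d - θs 0) * (θ d - θ 0)⁻¹ := ⟨_, rfl⟩
  apply mul_left_cancel₀ (hPA.alpha_ne_zero hd hα)
  linear_combination hPA.theta_star_rev_eq_of_varphi_one_eq hd hα hφ i hi
    - hPA.theta_star_eq_of_phi_one_eq hd hα hϕ (d - i) (by omega) - hPA.alpha_mul hd hα

lemma IsParamArray.varphi_eq_neg_phi (hPA : IsParamArray K d θ θs φ ϕ) (hd : 1 ≤ d)
    (hϕ : ϕ 1 = ϕ d) (hφ : φ 1 = φ d) (h : φ 1 = -ϕ 1) :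
    ∀ i, 1 ≤ i → i ≤ d → φ i = -ϕ i := by
  intro i hi hid
  have hpal := hPA.theta_add_theta_rev hd hϕ hφ (i - 1) (by omega)
  rw [show d - (i - 1) = d - i + 1 by omega] at hpal
  linear_combination hPA.varphi_eq hi hid + hPA.phi_eq hi hid + vartheta d θ i * h
    + (θs i - θs 0) * hpal

lemma IsParamArray.coeffs_eq_of_theta_star_eq (hPA : IsParamArray K d θ θs φ ϕ) (hd : 1 ≤ d)
    (hα : α = (θs d - θs 0) * (θ d - θ 0)⁻¹) (h : ∀ i ≤ d, θs i = ξ * θ i + ζ) :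
    ξ = α ∧ ζ = θs 0 - α * θ 0 :=
  eq_of_affine_endpoints (hPA.theta_ne (Nat.zero_le d) le_rfl (by omega)) (hPA.alpha_mul hd hα)
    (h 0 (Nat.zero_le d)) (h d le_rfl)

lemma IsParamArray.coeffs_eq_of_theta_star_rev_eq (hPA : IsParamArray K d θ θs φ ϕ) (hd : 1 ≤ d)
    (hα : α = (θs d - θs 0) * (θ d - θ 0)⁻¹) (h : ∀ i ≤ d, θs (d - i) = ξ * θ i + ζ) :
    ξ = -α ∧ ζ = θs d + α * θ 0 := by
  have h₀ := h 0 (Nat.zero_le d)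
  have h₁ := h d le_rfl
  rw [Nat.sub_zero] at h₀
  rw [Nat.sub_self] at h₁
  obtain ⟨hξ, hζ⟩ := eq_of_affine_endpoints (a := -α)
    (hPA.theta_ne (Nat.zero_le d) le_rfl (by omega))
    (by linear_combination -hPA.alpha_mul hd hα) h₀ h₁
  exact ⟨hξ, by rw [hζ]; ring⟩

lemma IsParamArray.coeffs_eq_of_theta_eq (hPA : IsParamArray K d θ θs φ ϕ) (hd : 1 ≤ d)
    (hα : α = (θs d - θs 0) * (θ d - θ 0)⁻¹) (h : ∀ i ≤ d, θ i = ξ * θs i + ζ) :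
    ξ = α⁻¹ ∧ ζ = θ 0 - α⁻¹ * θs 0 :=
  eq_of_affine_endpoints (hPA.theta_star_ne (Nat.zero_le d) le_rfl (by omega))
    (hPA.inv_alpha_mul hd hα) (h 0 (Nat.zero_le d)) (h d le_rfl)

lemma IsParamArray.coeffs_eq_of_theta_rev_eq (hPA : IsParamArray K d θ θs φ ϕ) (hd : 1 ≤ d)
    (hα : α = (θs d - θs 0) * (θ d - θ 0)⁻¹) (h : ∀ i ≤ d, θ (d - i) = ξ * θs i + ζ) :
    ξ = -α⁻¹ ∧ ζ = θ 0 + α⁻¹ * θs d := by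
  have h₀ := h 0 (Nat.zero_le d)
  have h₁ := h d le_rfl
  rw [Nat.sub_zero] at h₀
  rw [Nat.sub_self] at h₁
  obtain ⟨hξ, hζ⟩ := eq_of_affine_endpoints (a := -α⁻¹)
    (hPA.theta_star_ne le_rfl (Nat.zero_le d) (by omega))
    (by linear_combination hPA.inv_alpha_mul hd hα) h₁ h₀
  exact ⟨hξ, by rw [hζ]; ring⟩

/-- The parameter array of the affine transformation `ξA + ζI, ξ*A* + ζ*I`. -/
def affineArray (θ θs φ ϕ : ℕ → K) (ξ ζ ξs ζs : K) : (ℕ → K) × (ℕ → K) × (ℕ → K) × (ℕ → K) :=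
  (fun i => ξ * θ i + ζ, fun i => ξs * θs i + ζs, fun i => ξ * ξs * φ i, fun i => ξ * ξs * ϕ i)

lemma IsParamArray.eqPA_star_iff (hPA : IsParamArray K d θ θs φ ϕ) (hd : 1 ≤ d)
    (hα : α = (θs d - θs 0) * (θ d - θ 0)⁻¹) :
    EqPA K d (θs, θ, φ, fun i => ϕ (d - i + 1)) (affineArray θ θs φ ϕ ξ ζ ξs ζs) ↔
      ϕ 1 = ϕ d ∧ ξ = α ∧ ζ = θs 0 - α * θ 0 ∧ ξs = α⁻¹ ∧ ζs = θ 0 - α⁻¹ * θs 0 := by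
  have hunit : α * α⁻¹ = 1 := mul_inv_cancel₀ (hPA.alpha_ne_zero hd hα)
  dsimp only [EqPA, affineArray]
  constructor
  · rintro ⟨hθ, hφ⟩
    obtain ⟨rfl, rfl⟩ := hPA.coeffs_eq_of_theta_star_eq hd hα fun i hi => (hθ i hi).1
    obtain ⟨rfl, rfl⟩ := hPA.coeffs_eq_of_theta_eq hd hα fun i hi => (hθ i hi).2
    have h₁ := (hφ 1 le_rfl hd).2
    rw [Nat.sub_add_cancel hd, hunit, one_mul] at h₁
    exact ⟨h₁.symm, rfl, rfl, rfl, rfl⟩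
  · rintro ⟨h, rfl, rfl, rfl, rfl⟩
    refine ⟨fun i hi => ⟨hPA.theta_star_eq_of_phi_one_eq hd hα h i hi,
      hPA.theta_eq_of_phi_one_eq hd hα h i hi⟩, fun i hi hid => ?_⟩
    rw [hunit, one_mul, one_mul]
    exact ⟨rfl, hPA.phi_rev_eq_of_phi_one_eq hd h i hi hid⟩

lemma IsParamArray.eqPA_downStar_iff (hPA : IsParamArray K d θ θs φ ϕ) (hd : 1 ≤ d)
    (hα : α = (θs d - θs 0) * (θ d - θ 0)⁻¹) :
    EqPA K d (fun i => θs (d - i), θ, fun i => ϕ (d - i + 1), φ)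
        (affineArray θ θs φ ϕ ξ ζ ξs ζs) ↔
      φ 1 = φ d ∧ φ 1 = -ϕ 1 ∧ φ 1 = -ϕ d ∧
        ξ = -α ∧ ζ = θs d + α * θ 0 ∧ ξs = α⁻¹ ∧ ζs = θ 0 - α⁻¹ * θs 0 := by
  have hunit : -α * α⁻¹ = -1 := by rw [neg_mul, mul_inv_cancel₀ (hPA.alpha_ne_zero hd hα)]
  dsimp only [EqPA, affineArray]
  constructor
  · rintro ⟨hθ, hφ⟩
    obtain ⟨rfl, rfl⟩ := hPA.coeffs_eq_of_theta_star_rev_eq hd hα fun i hi => (hθ i hi).1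
    obtain ⟨rfl, rfl⟩ := hPA.coeffs_eq_of_theta_eq hd hα fun i hi => (hθ i hi).2
    obtain ⟨h₁, h₂⟩ := hφ 1 le_rfl hd
    obtain ⟨h₃, -⟩ := hφ d hd le_rfl
    rw [Nat.sub_add_cancel hd, hunit, neg_one_mul] at h₁
    rw [hunit, neg_one_mul] at h₂
    rw [Nat.sub_self, zero_add, hunit, neg_one_mul] at h₃
    exact ⟨by linear_combination h₂ - h₃, h₂, by linear_combination h₁, rfl, rfl, rfl, rfl⟩
  · rintro ⟨hφ, h₁, h₂, rfl, rfl, rfl, rfl⟩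
    have hϕ : ϕ 1 = ϕ d := by linear_combination h₁ - h₂
    have hsum := hPA.varphi_eq_neg_phi hd hϕ hφ h₁
    refine ⟨fun i hi => ⟨hPA.theta_star_rev_eq_of_varphi_one_eq hd hα hφ i hi,
      hPA.theta_eq_of_phi_one_eq hd hα hϕ i hi⟩, fun i hi hid => ?_⟩
    rw [hunit, neg_one_mul, neg_one_mul, hPA.phi_rev_eq_of_phi_one_eq hd hϕ i hi hid,
      hsum i hi hid, neg_neg]
    exact ⟨rfl, rfl⟩

lemma IsParamArray.eqPA_dDownStar_iff (hPA : IsParamArray K d θ θs φ ϕ) (hd : 1 ≤ d)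
    (hα : α = (θs d - θs 0) * (θ d - θ 0)⁻¹) :
    EqPA K d (θs, fun i => θ (d - i), ϕ, fun i => φ (d - i + 1))
        (affineArray θ θs φ ϕ ξ ζ ξs ζs) ↔
      φ 1 = φ d ∧ φ 1 = -ϕ 1 ∧ φ 1 = -ϕ d ∧
        ξ = α ∧ ζ = θs 0 - α * θ 0 ∧ ξs = -α⁻¹ ∧ ζs = θ 0 + α⁻¹ * θs d := by
  have hunit : α * -α⁻¹ = -1 := by rw [mul_neg, mul_inv_cancel₀ (hPA.alpha_ne_zero hd hα)]
  dsimp only [EqPA, affineArray]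
  constructor
  · rintro ⟨hθ, hφ⟩
    obtain ⟨rfl, rfl⟩ := hPA.coeffs_eq_of_theta_star_eq hd hα fun i hi => (hθ i hi).1
    obtain ⟨rfl, rfl⟩ := hPA.coeffs_eq_of_theta_rev_eq hd hα fun i hi => (hθ i hi).2
    obtain ⟨h₁, h₂⟩ := hφ 1 le_rfl hd
    obtain ⟨-, h₃⟩ := hφ d hd le_rfl
    rw [hunit, neg_one_mul] at h₁
    rw [Nat.sub_add_cancel hd, hunit, neg_one_mul] at h₂
    rw [Nat.sub_self, zero_add, hunit, neg_one_mul] at h₃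
    exact ⟨by linear_combination h₁ - h₂, by linear_combination h₁, h₃, rfl, rfl, rfl, rfl⟩
  · rintro ⟨hφ, h₁, h₂, rfl, rfl, rfl, rfl⟩
    have hϕ : ϕ 1 = ϕ d := by linear_combination h₁ - h₂
    have hsum := hPA.varphi_eq_neg_phi hd hϕ hφ h₁
    refine ⟨fun i hi => ⟨hPA.theta_star_eq_of_phi_one_eq hd hα hϕ i hi,
      hPA.theta_rev_eq_of_varphi_one_eq hd hα hφ i hi⟩, fun i hi hid => ?_⟩
    rw [hunit, neg_one_mul, neg_one_mul, hPA.varphi_rev_eq_of_varphi_one_eq hd hφ i hi hid,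
      hsum i hi hid, neg_neg]
    exact ⟨rfl, rfl⟩

lemma IsParamArray.eqPA_downDDownStar_iff (hPA : IsParamArray K d θ θs φ ϕ) (hd : 1 ≤ d)
    (hα : α = (θs d - θs 0) * (θ d - θ 0)⁻¹) :
    EqPA K d (fun i => θs (d - i), fun i => θ (d - i), fun i => φ (d - i + 1), ϕ)
        (affineArray θ θs φ ϕ ξ ζ ξs ζs) ↔
      φ 1 = φ d ∧ ξ = -α ∧ ζ = θs d + α * θ 0 ∧ ξs = -α⁻¹ ∧ ζs = θ 0 + α⁻¹ * θs d := by
  have hunit : -α * -α⁻¹ = 1 := by rw [neg_mul_neg, mul_inv_cancel₀ (hPA.alpha_ne_zero hd hα)]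
  dsimp only [EqPA, affineArray]
  constructor
  · rintro ⟨hθ, hφ⟩
    obtain ⟨rfl, rfl⟩ := hPA.coeffs_eq_of_theta_star_rev_eq hd hα fun i hi => (hθ i hi).1
    obtain ⟨rfl, rfl⟩ := hPA.coeffs_eq_of_theta_rev_eq hd hα fun i hi => (hθ i hi).2
    have h₁ := (hφ 1 le_rfl hd).1
    rw [Nat.sub_add_cancel hd, hunit, one_mul] at h₁
    exact ⟨h₁.symm, rfl, rfl, rfl, rfl⟩
  · rintro ⟨h, rfl, rfl, rfl, rfl⟩
    refine ⟨fun i hi => ⟨hPA.theta_star_rev_eq_of_varphi_one_eq hd hα h i hi,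
      hPA.theta_rev_eq_of_varphi_one_eq hd hα h i hi⟩, fun i hi hid => ?_⟩
    rw [hunit, one_mul, one_mul]
    exact ⟨hPA.varphi_rev_eq_of_varphi_one_eq hd h i hi hid, rfl⟩

lemma IsParamArray.not_xi_eq_alpha_and_neg_alpha (hPA : IsParamArray K d θ θs φ ϕ) (hd : 1 ≤ d) :
    ¬((ξ = α ∧ ζ = θs 0 - α * θ 0) ∧ ξ = -α ∧ ζ = θs d + α * θ 0) := by
  rintro ⟨⟨h₁, h₂⟩, h₃, h₄⟩
  exact hPA.theta_star_ne (Nat.zero_le d) le_rfl (by omega)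
    (by linear_combination h₄ - h₂ - θ 0 * (h₁ - h₃))

lemma IsParamArray.not_xi_eq_inv_alpha_and_neg_inv_alpha (hPA : IsParamArray K d θ θs φ ϕ)
    (hd : 1 ≤ d) (hα : α = (θs d - θs 0) * (θ d - θ 0)⁻¹) :
    ¬((ξ = α⁻¹ ∧ ζ = θ 0 - α⁻¹ * θs 0) ∧ ξ = -α⁻¹ ∧ ζ = θ 0 + α⁻¹ * θs d) := by
  rintro ⟨⟨h₁, h₂⟩, h₃, h₄⟩
  exact hPA.theta_ne (Nat.zero_le d) le_rfl (by omega)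
    (by linear_combination h₄ - h₂ - θs 0 * (h₁ - h₃) + hPA.inv_alpha_mul hd hα)

end ParamArray

theorem leonard_pair_affine_swap_general {K : Type*} [Field K] (d : ℕ) (hd : 1 ≤ d)
    (θ θs φ ϕ : ℕ → K) (hPA : IsParamArray K d θ θs φ ϕ)
    (ξ ζ ξs ζs : K)
    (α : K) (hα : α = (θs d - θs 0) * (θ d - θ 0)⁻¹) :
    ((EqPA K d (θs, θ, φ, fun i => ϕ (d - i + 1)) (fun i => ξ * θ i + ζ, fun i => ξs * θs i + ζs, fun i => ξ * ξs * φ i, fun i => ξ * ξs * ϕ i) ∨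
      EqPA K d (fun i => θs (d - i), θ, fun i => ϕ (d - i + 1), φ) (fun i => ξ * θ i + ζ, fun i => ξs * θs i + ζs, fun i => ξ * ξs * φ i, fun i => ξ * ξs * ϕ i) ∨
      EqPA K d (θs, fun i => θ (d - i), ϕ, fun i => φ (d - i + 1)) (fun i => ξ * θ i + ζ, fun i => ξs * θs i + ζs, fun i => ξ * ξs * φ i, fun i => ξ * ξs * ϕ i) ∨
      EqPA K d (fun i => θs (d - i), fun i => θ (d - i),
        fun i => φ (d - i + 1), ϕ) (fun i => ξ * θ i + ζ, fun i => ξs * θs i + ζs, fun i => ξ * ξs * φ i, fun i => ξ * ξs * ϕ i))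
      ↔ ((ϕ 1 = ϕ d ∧ ξ = α ∧ ζ = θs 0 - α * θ 0 ∧ ξs = α⁻¹ ∧ ζs = θ 0 - α⁻¹ * θs 0) ∨ (φ 1 = φ d ∧ φ 1 = -ϕ 1 ∧ φ 1 = -ϕ d ∧ ξ = -α ∧ ζ = θs d + α * θ 0 ∧ ξs = α⁻¹ ∧ ζs = θ 0 - α⁻¹ * θs 0) ∨ (φ 1 = φ d ∧ φ 1 = -ϕ 1 ∧ φ 1 = -ϕ d ∧ ξ = α ∧ ζ = θs 0 - α * θ 0 ∧ ξs = -α⁻¹ ∧ ζs = θ 0 + α⁻¹ * θs d) ∨ (φ 1 = φ d ∧ ξ = -α ∧ ζ = θs d + α * θ 0 ∧ ξs = -α⁻¹ ∧ ζs = θ 0 + α⁻¹ * θs d))) ∧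
    -- in this case precisely one of (i)–(iv) holds
    (((ϕ 1 = ϕ d ∧ ξ = α ∧ ζ = θs 0 - α * θ 0 ∧ ξs = α⁻¹ ∧ ζs = θ 0 - α⁻¹ * θs 0) ∨ (φ 1 = φ d ∧ φ 1 = -ϕ 1 ∧ φ 1 = -ϕ d ∧ ξ = -α ∧ ζ = θs d + α * θ 0 ∧ ξs = α⁻¹ ∧ ζs = θ 0 - α⁻¹ * θs 0) ∨ (φ 1 = φ d ∧ φ 1 = -ϕ 1 ∧ φ 1 = -ϕ d ∧ ξ = α ∧ ζ = θs 0 - α * θ 0 ∧ ξs = -α⁻¹ ∧ ζs = θ 0 + α⁻¹ * θs d) ∨ (φ 1 = φ d ∧ ξ = -α ∧ ζ = θs d + α * θ 0 ∧ ξs = -α⁻¹ ∧ ζs = θ 0 + α⁻¹ * θs d)) →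
      (¬((ϕ 1 = ϕ d ∧ ξ = α ∧ ζ = θs 0 - α * θ 0 ∧ ξs = α⁻¹ ∧ ζs = θ 0 - α⁻¹ * θs 0) ∧ (φ 1 = φ d ∧ φ 1 = -ϕ 1 ∧ φ 1 = -ϕ d ∧ ξ = -α ∧ ζ = θs d + α * θ 0 ∧ ξs = α⁻¹ ∧ ζs = θ 0 - α⁻¹ * θs 0)) ∧ ¬((ϕ 1 = ϕ d ∧ ξ = α ∧ ζ = θs 0 - α * θ 0 ∧ ξs = α⁻¹ ∧ ζs = θ 0 - α⁻¹ * θs 0) ∧ (φ 1 = φ d ∧ φ 1 = -ϕ 1 ∧ φ 1 = -ϕ d ∧ ξ = α ∧ ζ = θs 0 - α * θ 0 ∧ ξs = -α⁻¹ ∧ ζs = θ 0 + α⁻¹ * θs d)) ∧ ¬((ϕ 1 = ϕ d ∧ ξ = α ∧ ζ = θs 0 - α * θ 0 ∧ ξs = α⁻¹ ∧ ζs = θ 0 - α⁻¹ * θs 0) ∧ (φ 1 = φ d ∧ ξ = -α ∧ ζ = θs d + α * θ 0 ∧ ξs = -α⁻¹ ∧ ζs = θ 0 + α⁻¹ * θs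 d)) ∧
       ¬((φ 1 = φ d ∧ φ 1 = -ϕ 1 ∧ φ 1 = -ϕ d ∧ ξ = -α ∧ ζ = θs d + α * θ 0 ∧ ξs = α⁻¹ ∧ ζs = θ 0 - α⁻¹ * θs 0) ∧ (φ 1 = φ d ∧ φ 1 = -ϕ 1 ∧ φ 1 = -ϕ d ∧ ξ = α ∧ ζ = θs 0 - α * θ 0 ∧ ξs = -α⁻¹ ∧ ζs = θ 0 + α⁻¹ * θs d)) ∧ ¬((φ 1 = φ d ∧ φ 1 = -ϕ 1 ∧ φ 1 = -ϕ d ∧ ξ = -α ∧ ζ = θs d + α * θ 0 ∧ ξs = α⁻¹ ∧ ζs = θ 0 - α⁻¹ * θs 0) ∧ (φ 1 = φ d ∧ ξ = -α ∧ ζ = θs d + α * θ 0 ∧ ξs = -α⁻¹ ∧ ζs = θ 0 + α⁻¹ * θs d)) ∧ ¬((φ 1 = φ d ∧ φ 1 = -ϕ 1 ∧ φ 1 = -ϕ d ∧ ξ = α ∧ ζ = θs 0 - α * θ 0 ∧ ξs = -α⁻¹ ∧ ζs = θ 0 + α⁻¹ * θs d) ∧ (φ 1 = φ d ∧ ξ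 = -α ∧ ζ = θs d + α * θ 0 ∧ ξs = -α⁻¹ ∧ ζs = θ 0 + α⁻¹ * θs d)))) := by
  refine ⟨or_congr (hPA.eqPA_star_iff hd hα) <| or_congr (hPA.eqPA_downStar_iff hd hα) <|
    or_congr (hPA.eqPA_dDownStar_iff hd hα) (hPA.eqPA_downDDownStar_iff hd hα),
    fun _ => ⟨?_, ?_, ?_, ?_, ?_, ?_⟩⟩
  · rintro ⟨⟨-, h₁, h₂, -, -⟩, -, -, -, h₃, h₄, -, -⟩
    exact hPA.not_xi_eq_alpha_and_neg_alpha hd ⟨⟨h₁, h₂⟩, h₃, h₄⟩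
  · rintro ⟨⟨-, -, -, h₁, h₂⟩, -, -, -, -, -, h₃, h₄⟩
    exact hPA.not_xi_eq_inv_alpha_and_neg_inv_alpha hd hα ⟨⟨h₁, h₂⟩, h₃, h₄⟩
  · rintro ⟨⟨-, h₁, h₂, -, -⟩, -, h₃, h₄, -, -⟩
    exact hPA.not_xi_eq_alpha_and_neg_alpha hd ⟨⟨h₁, h₂⟩, h₃, h₄⟩
  · rintro ⟨⟨-, -, -, h₃, h₄, -, -⟩, -, -, -, h₁, h₂, -, -⟩
    exact hPA.not_xi_eq_alpha_and_neg_alpha hd ⟨⟨h₁, h₂⟩, h₃, h₄⟩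
  · rintro ⟨⟨-, -, -, -, -, h₁, h₂⟩, -, -, -, h₃, h₄⟩
    exact hPA.not_xi_eq_inv_alpha_and_neg_inv_alpha hd hα ⟨⟨h₁, h₂⟩, h₃, h₄⟩
  · rintro ⟨⟨-, -, -, h₁, h₂, -, -⟩, -, h₃, h₄, -, -⟩
    exact hPA.not_xi_eq_alpha_and_neg_alpha hd ⟨⟨h₁, h₂⟩, h₃, h₄⟩

/-- The Leonard pair `A*, A` is isomorphic to the affine transformation
`ξA+ζI, ξ*A*+ζ*I` (i.e. one of the four associated parameter arrays
`P^*, P^↓*, P^⇓*, P^↓⇓*` equals the affinely transformed array) if and only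
if at least one — and then exactly one — of conditions (i)–(iv) holds,
where `α = (θ*_d − θ*_0)(θ_d − θ_0)⁻¹`. -/
theorem leonard_pair_affine_swap {K : Type*} [Field K] (d : ℕ) (hd : 1 ≤ d)
    (θ θs φ ϕ : ℕ → K) (hPA : IsParamArray K d θ θs φ ϕ)
    (ξ ζ ξs ζs : K) (hξ : ξ ≠ 0) (hξs : ξs ≠ 0)
    (α : K) (hα : α = (θs d - θs 0) * (θ d - θ 0)⁻¹) :
    ((EqPA K d (θs, θ, φ, fun i => ϕ (d - i + 1)) (fun i => ξ * θ i + ζ, fun i => ξs * θs i + ζs, fun i => ξ * ξs * φ i, fun i => ξ * ξs * ϕ i) ∨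
      EqPA K d (fun i => θs (d - i), θ, fun i => ϕ (d - i + 1), φ) (fun i => ξ * θ i + ζ, fun i => ξs * θs i + ζs, fun i => ξ * ξs * φ i, fun i => ξ * ξs * ϕ i) ∨
      EqPA K d (θs, fun i => θ (d - i), ϕ, fun i => φ (d - i + 1)) (fun i => ξ * θ i + ζ, fun i => ξs * θs i + ζs, fun i => ξ * ξs * φ i, fun i => ξ * ξs * ϕ i) ∨
      EqPA K d (fun i => θs (d - i), fun i => θ (d - i),
        fun i => φ (d - i + 1), ϕ) (fun i => ξ * θ i + ζ, fun i => ξs * θs i + ζs, fun i => ξ * ξs * φ i, fun i => ξ * ξs * ϕ i))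
      ↔ ((ϕ 1 = ϕ d ∧ ξ = α ∧ ζ = θs 0 - α * θ 0 ∧ ξs = α⁻¹ ∧ ζs = θ 0 - α⁻¹ * θs 0) ∨ (φ 1 = φ d ∧ φ 1 = -ϕ 1 ∧ φ 1 = -ϕ d ∧ ξ = -α ∧ ζ = θs d + α * θ 0 ∧ ξs = α⁻¹ ∧ ζs = θ 0 - α⁻¹ * θs 0) ∨ (φ 1 = φ d ∧ φ 1 = -ϕ 1 ∧ φ 1 = -ϕ d ∧ ξ = α ∧ ζ = θs 0 - α * θ 0 ∧ ξs = -α⁻¹ ∧ ζs = θ 0 + α⁻¹ * θs d) ∨ (φ 1 = φ d ∧ ξ = -α ∧ ζ = θs d + α * θ 0 ∧ ξs = -α⁻¹ ∧ ζs = θ 0 + α⁻¹ * θs d))) ∧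
    -- in this case precisely one of (i)–(iv) holds
    (((ϕ 1 = ϕ d ∧ ξ = α ∧ ζ = θs 0 - α * θ 0 ∧ ξs = α⁻¹ ∧ ζs = θ 0 - α⁻¹ * θs 0) ∨ (φ 1 = φ d ∧ φ 1 = -ϕ 1 ∧ φ 1 = -ϕ d ∧ ξ = -α ∧ ζ = θs d + α * θ 0 ∧ ξs = α⁻¹ ∧ ζs = θ 0 - α⁻¹ * θs 0) ∨ (φ 1 = φ d ∧ φ 1 = -ϕ 1 ∧ φ 1 = -ϕ d ∧ ξ = α ∧ ζ = θs 0 - α * θ 0 ∧ ξs = -α⁻¹ ∧ ζs = θ 0 + α⁻¹ * θs d) ∨ (φ 1 = φ d ∧ ξ = -α ∧ ζ = θs d + α * θ 0 ∧ ξs = -α⁻¹ ∧ ζs = θ 0 + α⁻¹ * θs d)) →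
      (¬((ϕ 1 = ϕ d ∧ ξ = α ∧ ζ = θs 0 - α * θ 0 ∧ ξs = α⁻¹ ∧ ζs = θ 0 - α⁻¹ * θs 0) ∧ (φ 1 = φ d ∧ φ 1 = -ϕ 1 ∧ φ 1 = -ϕ d ∧ ξ = -α ∧ ζ = θs d + α * θ 0 ∧ ξs = α⁻¹ ∧ ζs = θ 0 - α⁻¹ * θs 0)) ∧ ¬((ϕ 1 = ϕ d ∧ ξ = α ∧ ζ = θs 0 - α * θ 0 ∧ ξs = α⁻¹ ∧ ζs = θ 0 - α⁻¹ * θs 0) ∧ (φ 1 = φ d ∧ φ 1 = -ϕ 1 ∧ φ 1 = -ϕ d ∧ ξ = α ∧ ζ = θs 0 - α * θ 0 ∧ ξs = -α⁻¹ ∧ ζs = θ 0 + α⁻¹ * θs d)) ∧ ¬((ϕ 1 = ϕ d ∧ ξ = α ∧ ζ = θs 0 - α * θ 0 ∧ ξs = α⁻¹ ∧ ζs = θ 0 - α⁻¹ * θs 0) ∧ (φ 1 = φ d ∧ ξ = -α ∧ ζ = θs d + α * θ 0 ∧ ξs = -α⁻¹ ∧ ζs = θ 0 + α⁻¹ * θs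 d)) ∧
       ¬((φ 1 = φ d ∧ φ 1 = -ϕ 1 ∧ φ 1 = -ϕ d ∧ ξ = -α ∧ ζ = θs d + α * θ 0 ∧ ξs = α⁻¹ ∧ ζs = θ 0 - α⁻¹ * θs 0) ∧ (φ 1 = φ d ∧ φ 1 = -ϕ 1 ∧ φ 1 = -ϕ d ∧ ξ = α ∧ ζ = θs 0 - α * θ 0 ∧ ξs = -α⁻¹ ∧ ζs = θ 0 + α⁻¹ * θs d)) ∧ ¬((φ 1 = φ d ∧ φ 1 = -ϕ 1 ∧ φ 1 = -ϕ d ∧ ξ = -α ∧ ζ = θs d + α * θ 0 ∧ ξs = α⁻¹ ∧ ζs = θ 0 - α⁻¹ * θs 0) ∧ (φ 1 = φ d ∧ ξ = -α ∧ ζ = θs d + α * θ 0 ∧ ξs = -α⁻¹ ∧ ζs = θ 0 + α⁻¹ * θs d)) ∧ ¬((φ 1 = φ d ∧ φ 1 = -ϕ 1 ∧ φ 1 = -ϕ d ∧ ξ = α ∧ ζ = θs 0 - α * θ 0 ∧ ξs = -α⁻¹ ∧ ζs = θ 0 + α⁻¹ * θs d) ∧ (φ 1 = φ d ∧ ξ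 = -α ∧ ζ = θs d + α * θ 0 ∧ ξs = -α⁻¹ ∧ ζs = θ 0 + α⁻¹ * θs d)))) :=
  leonard_pair_affine_swap_general d hd θ θs φ ϕ hPA ξ ζ ξs ζs α hα
end

section
/- Let K be a field, let d ≥ 3 be an integer, and let q, η, μ, h, η*, μ*, h* be scalars in K such that q ≠ 0, q^i ≠ 1 for 1 ≤ i ≤ d, μ ≠ hq^i for 0 ≤ i ≤ d−1, and μ* ≠ h*q^i for 0 ≤ i ≤ d−1. Define θ_i = η + μq^i + hq^{d−i} and θ*_i = η* + μ*q^i + h*q^{d−i} for 0 ≤ i ≤ d. Then: (i) θ_i + θ_{d−i} is independent of i for 0 ≤ i ≤ d if and only if μ = −h; (ii) θ*_i + θ*_{d−i} is independent of i for 0 ≤ i ≤ d if and only if μ* = −h*; (iii) (θ*_i − θ*_0)(θ_i − θ_0)^{−1} is independent of i for 1 ≤ i ≤ d if and only if μh* = μ*h; (iv) (θ*_{d−i} − θ*_d)(θ_i − θ_0)^{−1} is independent of i for 1 ≤ i ≤ d if and only if μμ* = hh*. -/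
/-- Type I eigenvalue/dual-eigenvalue sequences:
`θ_i = η + μq^i + hq^{d−i}`, `θ*_i = η* + μ*q^i + h*q^{d−i}`.
Criteria for the four symmetry conditions on the `θ`'s. -/
theorem typeI_theta {K : Type*} [Field K] (d : ℕ) (hd : 3 ≤ d)
    (q η μ h ηs μs hs : K) (hq : q ≠ 0)
    (hq1 : ∀ i : ℕ, 1 ≤ i → i ≤ d → q ^ i ≠ 1)
    (hμ : ∀ i : ℕ, i ≤ d - 1 → μ ≠ h * q ^ i)
    (hμs : ∀ i : ℕ, i ≤ d - 1 → μs ≠ hs * q ^ i)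
    (θ θs : ℕ → K)
    (hθ : ∀ i ≤ d, θ i = η + μ * q ^ i + h * q ^ (d - i))
    (hθs : ∀ i ≤ d, θs i = ηs + μs * q ^ i + hs * q ^ (d - i)) :
    -- (i)
    ((∀ i j, i ≤ d → j ≤ d → θ i + θ (d - i) = θ j + θ (d - j)) ↔ μ = -h) ∧
    -- (ii)
    ((∀ i j, i ≤ d → j ≤ d → θs i + θs (d - i) = θs j + θs (d - j)) ↔ μs = -hs) ∧
    -- (iii)
    ((∀ i j, 1 ≤ i → i ≤ d → 1 ≤ j → j ≤ d →
        (θs i - θs 0) * (θ i - θ 0)⁻¹ = (θs j - θs 0) * (θ j - θ 0)⁻¹)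
      ↔ μ * hs = μs * h) ∧
    -- (iv)
    ((∀ i j, 1 ≤ i → i ≤ d → 1 ≤ j → j ≤ d →
        (θs (d - i) - θs d) * (θ i - θ 0)⁻¹ = (θs (d - j) - θs d) * (θ j - θ 0)⁻¹)
      ↔ μ * μs = h * hs) := by
  have hpow : ∀ i ≤ d, q ^ i * q ^ (d - i) = q ^ d := by
    intro i hi
    rw [← pow_add, Nat.add_sub_cancel' hi]
  -- sums
  have hsum : ∀ i ≤ d, θ i + θ (d - i) = 2 * η + (μ + h) * (q ^ i + q ^ (d - i)) := by
    intro i hi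
    rw [hθ i hi, hθ (d - i) (by omega), Nat.sub_sub_self hi]; ring
  have hsums : ∀ i ≤ d, θs i + θs (d - i) = 2 * ηs + (μs + hs) * (q ^ i + q ^ (d - i)) := by
    intro i hi
    rw [hθs i hi, hθs (d - i) (by omega), Nat.sub_sub_self hi]; ring
  -- differences, factored
  have hd0 : ∀ i, 1 ≤ i → i ≤ d → θ i - θ 0 = (q ^ i - 1) * (μ - h * q ^ (d - i)) := by
    intro i h1 hi
    rw [hθ i hi, hθ 0 (by omega), Nat.sub_zero]
    linear_combination h * hpow i hi
  have hds0 : ∀ i, 1 ≤ i → i ≤ d → θs i - θs 0 = (q ^ i - 1) * (μs - hs * q ^ (d - i)) := by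
    intro i h1 hi
    rw [hθs i hi, hθs 0 (by omega), Nat.sub_zero]
    linear_combination hs * hpow i hi
  have hdsd : ∀ i, 1 ≤ i → i ≤ d →
      θs (d - i) - θs d = (q ^ i - 1) * (hs - μs * q ^ (d - i)) := by
    intro i h1 hi
    rw [hθs (d - i) (by omega), hθs d le_rfl, Nat.sub_sub_self hi, Nat.sub_self]
    linear_combination μs * hpow i hi
  -- nonvanishing
  have hne : ∀ i, 1 ≤ i → i ≤ d → θ i - θ 0 ≠ 0 := by
    intro i h1 hi
    rw [hd0 i h1 hi]
    exact mul_ne_zero (sub_ne_zero.mpr (hq1 i h1 hi))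
      (sub_ne_zero.mpr (hμ (d - i) (by omega)))
  have hq1ne : q - 1 ≠ 0 := sub_ne_zero.mpr (by simpa using hq1 1 le_rfl (by omega))
  have hqd1 : q ^ (d - 1) - 1 ≠ 0 := sub_ne_zero.mpr (hq1 (d - 1) (by omega) (by omega))
  have hq2ne : q ^ 2 - 1 ≠ 0 := sub_ne_zero.mpr (hq1 2 (by omega) (by omega))
  have hqd12 : q ^ (d - 1) - q ^ (d - 2) ≠ 0 := by
    have e : q ^ (d - 1) = q ^ (d - 2) * q := by rw [← pow_succ]; congr 1; omega
    rw [e]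
    have : q ^ (d - 2) * q - q ^ (d - 2) = q ^ (d - 2) * (q - 1) := by ring
    rw [this]
    exact mul_ne_zero (pow_ne_zero _ hq) hq1ne
  refine ⟨⟨?_, ?_⟩, ⟨?_, ?_⟩, ⟨?_, ?_⟩, ⟨?_, ?_⟩⟩
  · -- (i) forward
    intro H
    have e1 := H 1 0 (by omega) (by omega)
    rw [hsum 1 (by omega), hsum 0 (by omega)] at e1
    simp only [Nat.sub_zero, pow_zero, pow_one] at e1
    have key : (μ + h) * ((q - 1) * (q ^ (d - 1) - 1)) = 0 := by
      linear_combination -e1 + (μ + h) * hpow 1 (by omega)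
    rcases mul_eq_zero.mp key with h0 | h0
    · exact eq_neg_of_add_eq_zero_left h0
    · exact absurd h0 (mul_ne_zero hq1ne hqd1)
  · -- (i) backward
    intro hμh i j hi hj
    rw [hsum i hi, hsum j hj, hμh]; ring
  · -- (ii) forward
    intro H
    have e1 := H 1 0 (by omega) (by omega)
    rw [hsums 1 (by omega), hsums 0 (by omega)] at e1
    simp only [Nat.sub_zero, pow_zero, pow_one] at e1
    have key : (μs + hs) * ((q - 1) * (q ^ (d - 1) - 1)) = 0 := by
      linear_combination -e1 + (μs + hs) * hpow 1 (by omega)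
    rcases mul_eq_zero.mp key with h0 | h0
    · exact eq_neg_of_add_eq_zero_left h0
    · exact absurd h0 (mul_ne_zero hq1ne hqd1)
  · -- (ii) backward
    intro hmh i j hi hj
    rw [hsums i hi, hsums j hj, hmh]; ring
  · -- (iii) forward
    intro H
    have e := H 1 2 (by omega) (by omega) (by omega) (by omega)
    rw [← div_eq_mul_inv, ← div_eq_mul_inv,
      div_eq_div_iff (hne 1 (by omega) (by omega)) (hne 2 (by omega) (by omega)),
      hd0 1 (by omega) (by omega), hd0 2 (by omega) (by omega),
      hds0 1 (by omega) (by omega), hds0 2 (by omega) (by omega)] at e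
    have key : (μ * hs - μs * h) *
        ((q ^ (d - 1) - q ^ (d - 2)) * ((q ^ 1 - 1) * (q ^ 2 - 1))) = 0 := by
      linear_combination -e
    rcases mul_eq_zero.mp key with h0 | h0
    · exact sub_eq_zero.mp h0
    · rcases mul_eq_zero.mp h0 with h1 | h1
      · exact absurd h1 hqd12
      · exact absurd h1 (mul_ne_zero (by simpa using hq1ne) hq2ne)
  · -- (iii) backward
    intro hrel i j h1i hid h1j hjd
    rw [← div_eq_mul_inv, ← div_eq_mul_inv,
      div_eq_div_iff (hne i h1i hid) (hne j h1j hjd),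
      hd0 i h1i hid, hd0 j h1j hjd, hds0 i h1i hid, hds0 j h1j hjd]
    linear_combination ((q ^ i - 1) * (q ^ j - 1) * (q ^ (d - j) - q ^ (d - i))) * hrel
  · -- (iv) forward
    intro H
    have e := H 1 2 (by omega) (by omega) (by omega) (by omega)
    rw [← div_eq_mul_inv, ← div_eq_mul_inv,
      div_eq_div_iff (hne 1 (by omega) (by omega)) (hne 2 (by omega) (by omega)),
      hd0 1 (by omega) (by omega), hd0 2 (by omega) (by omega),
      hdsd 1 (by omega) (by omega), hdsd 2 (by omega) (by omega)] at e
    have key : (μ * μs - h * hs) *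
        ((q ^ (d - 1) - q ^ (d - 2)) * ((q ^ 1 - 1) * (q ^ 2 - 1))) = 0 := by
      linear_combination -e
    rcases mul_eq_zero.mp key with h0 | h0
    · exact sub_eq_zero.mp h0
    · rcases mul_eq_zero.mp h0 with h1 | h1
      · exact absurd h1 hqd12
      · exact absurd h1 (mul_ne_zero (by simpa using hq1ne) hq2ne)
  · -- (iv) backward
    intro hrel i j h1i hid h1j hjd
    rw [← div_eq_mul_inv, ← div_eq_mul_inv,
      div_eq_div_iff (hne i h1i hid) (hne j h1j hjd),
      hd0 i h1i hid, hd0 j h1j hjd, hdsd i h1i hid, hdsd j h1j hjd]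
    linear_combination ((q ^ i - 1) * (q ^ j - 1) * (q ^ (d - j) - q ^ (d - i))) * hrel
end

section
/- Let K be a field, let d ≥ 3 be an integer, and let q, η, μ, h, η*, μ*, h*, τ be scalars in K such that q ≠ 0, q^i ≠ 1 for 1 ≤ i ≤ d, μ ≠ hq^i for 0 ≤ i ≤ d−1, and μ* ≠ h*q^i for 0 ≤ i ≤ d−1. Define, for 1 ≤ i ≤ d, φ_i = (q^i−1)(q^{d−i+1}−1)(τ − μμ*q^{i−1} − hh*q^{d−i}) and ϕ_i = (q^i−1)(q^{d−i+1}−1)(τ − hμ*q^{i−1} − μh*q^{d−i}). Then: (i) φ_i = −ϕ_i for all 1 ≤ i ≤ d if and only if τ = 0 and μ = −h; (ii) φ_i = −ϕ_{d−i+1} for all 1 ≤ i ≤ d if and only if τ = 0 and μ* = −h*; (iii) ϕ_i = ϕ_{d−i+1} for all 1 ≤ i ≤ d if and only if μh* = μ*h; (iv) φ_i = φ_{d−i+1} for all 1 ≤ i ≤ d if and only if μμ* = hh*. -/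
private lemma cancel3 {K : Type*} [Field K] {a b x : K} (ha : a ≠ 0) (hb : b ≠ 0)
    (hx : a * b * x = 0) : x = 0 :=
  (mul_eq_zero.mp hx).resolve_left (mul_ne_zero ha hb)

/-- Type I split sequences:
`φ_i = (q^i−1)(q^{d−i+1}−1)(τ − μμ*q^{i−1} − hh*q^{d−i})`,
`ϕ_i = (q^i−1)(q^{d−i+1}−1)(τ − hμ*q^{i−1} − μh*q^{d−i})`.
Criteria for the four symmetry conditions on the split sequences. -/
theorem typeI_phi {K : Type*} [Field K] (d : ℕ) (hd : 3 ≤ d)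
    (q μ h μs hs τ : K) (hq : q ≠ 0)
    (hq1 : ∀ i : ℕ, 1 ≤ i → i ≤ d → q ^ i ≠ 1)
    (hμ : ∀ i : ℕ, i ≤ d - 1 → μ ≠ h * q ^ i)
    (hμs : ∀ i : ℕ, i ≤ d - 1 → μs ≠ hs * q ^ i)
    (φ ϕ : ℕ → K)
    (hφ : ∀ i, 1 ≤ i → i ≤ d →
      φ i = (q ^ i - 1) * (q ^ (d - i + 1) - 1) *
        (τ - μ * μs * q ^ (i - 1) - h * hs * q ^ (d - i)))
    (hϕ : ∀ i, 1 ≤ i → i ≤ d →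
      ϕ i = (q ^ i - 1) * (q ^ (d - i + 1) - 1) *
        (τ - h * μs * q ^ (i - 1) - μ * hs * q ^ (d - i))) :
    -- (i)
    ((∀ i, 1 ≤ i → i ≤ d → φ i = -ϕ i) ↔ (τ = 0 ∧ μ = -h)) ∧
    -- (ii)
    ((∀ i, 1 ≤ i → i ≤ d → φ i = -ϕ (d - i + 1)) ↔ (τ = 0 ∧ μs = -hs)) ∧
    -- (iii)
    ((∀ i, 1 ≤ i → i ≤ d → ϕ i = ϕ (d - i + 1)) ↔ μ * hs = μs * h) ∧
    -- (iv)
    ((∀ i, 1 ≤ i → i ≤ d → φ i = φ (d - i + 1)) ↔ μ * μs = h * hs) := by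
  have hqd1 : q ^ (d - 1) = q ^ (d - 2) * q := by
    rw [show d - 1 = (d - 2) + 1 by omega, pow_succ]
  have hqd : q ^ d = q ^ (d - 2) * q * q := by
    rw [← hqd1, ← pow_succ, show d - 1 + 1 = d by omega]
  have hq1ne : q - 1 ≠ 0 := by
    have := hq1 1 le_rfl (by omega); rw [pow_one] at this; exact sub_ne_zero.2 this
  have hqdne : q ^ (d - 2) * q * q - 1 ≠ 0 := by
    rw [← hqd]; exact sub_ne_zero.2 (hq1 d (by omega) le_rfl)
  have hq2ne : q ^ 2 - 1 ≠ 0 := sub_ne_zero.2 (hq1 2 (by omega) (by omega))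
  have hqd1ne : q ^ (d - 2) * q - 1 ≠ 0 := by
    rw [← hqd1]; exact sub_ne_zero.2 (hq1 (d - 1) (by omega) (by omega))
  have hμ0 : μ - h ≠ 0 := by
    have := hμ 0 (by omega); rw [pow_zero, mul_one] at this; exact sub_ne_zero.2 this
  have hμs0 : μs - hs ≠ 0 := by
    have := hμs 0 (by omega); rw [pow_zero, mul_one] at this; exact sub_ne_zero.2 this
  have hμ2 : h * q ^ (d - 2) - μ ≠ 0 := sub_ne_zero.2 (hμ (d - 2) (by omega)).symm
  have hμs2 : hs * q ^ (d - 2) - μs ≠ 0 := sub_ne_zero.2 (hμs (d - 2) (by omega)).symm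
  refine ⟨?_, ?_, ?_, ?_⟩
  · -- (i)
    constructor
    · intro H
      have e1 := H 1 le_rfl (by omega)
      have e2 := H 2 (by omega) (by omega)
      rw [hφ 1 le_rfl (by omega), hϕ 1 le_rfl (by omega),
        show d - 1 + 1 = d by omega, show (1 : ℕ) - 1 = 0 by norm_num, hqd, hqd1] at e1
      rw [hφ 2 (by omega) (by omega), hϕ 2 (by omega) (by omega),
        show d - 2 + 1 = d - 1 by omega, show (2 : ℕ) - 1 = 1 by norm_num, hqd1] at e2
      have t1 : τ + τ - (μ + h) * μs - (μ + h) * (hs * (q ^ (d - 2) * q)) = 0 :=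
        cancel3 hq1ne hqdne (by linear_combination e1)
      have t2 : τ + τ - (μ + h) * (μs * q) - (μ + h) * (hs * q ^ (d - 2)) = 0 :=
        cancel3 hq2ne hqd1ne (by linear_combination e2)
      have t3 : (μ + h) * ((q - 1) * (hs * q ^ (d - 2) - μs)) = 0 := by
        linear_combination t2 - t1
      have hμh : μ + h = 0 :=
        (mul_eq_zero.mp t3).resolve_right (mul_ne_zero hq1ne hμs2)
      have hme : μ = -h := eq_neg_of_add_eq_zero_left hμh
      have hhh : h + h ≠ 0 := by
        intro hc
        exact hμ 0 (by omega) (by rw [pow_zero, mul_one, hme]; linear_combination -hc)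
      have hτ : τ = 0 := by
        have hz : (h + h) * τ = 0 := by
          linear_combination h * t1 + (h * (μs + hs * (q ^ (d - 2) * q))) * hμh
        exact (mul_eq_zero.mp hz).resolve_left hhh
      exact ⟨hτ, hme⟩
    · rintro ⟨ht, hm⟩ i h1 h2
      rw [hφ i h1 h2, hϕ i h1 h2, ht, hm]; ring
  · -- (ii)
    constructor
    · intro H
      have e1 := H 1 le_rfl (by omega)
      have e2 := H 2 (by omega) (by omega)
      rw [show d - 1 + 1 = d by omega] at e1
      rw [hφ 1 le_rfl (by omega), hϕ d (by omega) le_rfl,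
        show d - 1 + 1 = d by omega, show (1 : ℕ) - 1 = 0 by norm_num,
        show d - d + 1 = 1 by omega, show d - d = 0 by omega, hqd, hqd1] at e1
      rw [show d - 2 + 1 = d - 1 by omega] at e2
      rw [hφ 2 (by omega) (by omega), hϕ (d - 1) (by omega) (by omega),
        show d - 2 + 1 = d - 1 by omega, show (2 : ℕ) - 1 = 1 by norm_num,
        show d - (d - 1) + 1 = 2 by omega, show d - 1 - 1 = d - 2 by omega,
        show d - (d - 1) = 1 by omega, hqd1] at e2
      have t1 : τ + τ - (μs + hs) * μ - (μs + hs) * (h * (q ^ (d - 2) * q)) = 0 :=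
        cancel3 hq1ne hqdne (by linear_combination e1)
      have t2 : τ + τ - (μs + hs) * (μ * q) - (μs + hs) * (h * q ^ (d - 2)) = 0 :=
        cancel3 hq2ne hqd1ne (by linear_combination e2)
      have t3 : (μs + hs) * ((q - 1) * (h * q ^ (d - 2) - μ)) = 0 := by
        linear_combination t2 - t1
      have hμh : μs + hs = 0 :=
        (mul_eq_zero.mp t3).resolve_right (mul_ne_zero hq1ne hμ2)
      have hme : μs = -hs := eq_neg_of_add_eq_zero_left hμh
      have hhh : hs + hs ≠ 0 := by
        intro hc
        exact hμs 0 (by omega) (by rw [pow_zero, mul_one, hme]; linear_combination -hc)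
      have hτ : τ = 0 := by
        have hz : (hs + hs) * τ = 0 := by
          linear_combination hs * t1 + (hs * (μ + h * (q ^ (d - 2) * q))) * hμh
        exact (mul_eq_zero.mp hz).resolve_left hhh
      exact ⟨hτ, hme⟩
    · rintro ⟨ht, hm⟩ i h1 h2
      rw [hφ i h1 h2, hϕ (d - i + 1) (by omega) (by omega),
        show d - (d - i + 1) + 1 = i by omega, show d - i + 1 - 1 = d - i by omega,
        show d - (d - i + 1) = i - 1 by omega, ht, hm]
      ring
  · -- (iii)
    constructor
    · intro H
      have e1 := H 1 le_rfl (by omega)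
      rw [show d - 1 + 1 = d by omega] at e1
      rw [hϕ 1 le_rfl (by omega), hϕ d (by omega) le_rfl,
        show d - 1 + 1 = d by omega, show (1 : ℕ) - 1 = 0 by norm_num,
        show d - d + 1 = 1 by omega, show d - d = 0 by omega, hqd, hqd1] at e1
      have t1 : (h * μs - μ * hs) * (q ^ (d - 2) * q - 1) = 0 :=
        cancel3 hq1ne hqdne (by linear_combination e1)
      have t2 : h * μs - μ * hs = 0 := (mul_eq_zero.mp t1).resolve_right hqd1ne
      linear_combination -t2
    · intro hm i h1 h2
      rw [hϕ i h1 h2, hϕ (d - i + 1) (by omega) (by omega),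
        show d - (d - i + 1) + 1 = i by omega, show d - i + 1 - 1 = d - i by omega,
        show d - (d - i + 1) = i - 1 by omega]
      linear_combination (-((q ^ i - 1) * (q ^ (d - i + 1) - 1) *
        (q ^ (d - i) - q ^ (i - 1)))) * hm
  · -- (iv)
    constructor
    · intro H
      have e1 := H 1 le_rfl (by omega)
      rw [show d - 1 + 1 = d by omega] at e1
      rw [hφ 1 le_rfl (by omega), hφ d (by omega) le_rfl,
        show d - 1 + 1 = d by omega, show (1 : ℕ) - 1 = 0 by norm_num,
        show d - d + 1 = 1 by omega, show d - d = 0 by omega, hqd, hqd1] at e1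
      have t1 : (μ * μs - h * hs) * (q ^ (d - 2) * q - 1) = 0 :=
        cancel3 hq1ne hqdne (by linear_combination e1)
      have t2 : μ * μs - h * hs = 0 := (mul_eq_zero.mp t1).resolve_right hqd1ne
      linear_combination t2
    · intro hm i h1 h2
      rw [hφ i h1 h2, hφ (d - i + 1) (by omega) (by omega),
        show d - (d - i + 1) + 1 = i by omega, show d - i + 1 - 1 = d - i by omega,
        show d - (d - i + 1) = i - 1 by omega]
      linear_combination ((q ^ i - 1) * (q ^ (d - i + 1) - 1) *
        (q ^ (d - i) - q ^ (i - 1))) * hm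
end

section
/- Let K be a field with characteristic not 2 in which the integers 1, 2, …, d are all nonzero, let d ≥ 3 be an integer, and let η, μ, h, η*, μ*, h* be scalars in K such that μ + ih ≠ 0 for 0 ≤ i ≤ d−1 and μ* + ih* ≠ 0 for 0 ≤ i ≤ d−1. Define θ_i = η + μ(i − d/2) + hi(d−i) and θ*_i = η* + μ*(i − d/2) + h*i(d−i) for 0 ≤ i ≤ d. Then: (i) θ_i + θ_{d−i} is independent of i for 0 ≤ i ≤ d if and only if h = 0; (ii) θ*_i + θ*_{d−i} is independent of i for 0 ≤ i ≤ d if and only if h* = 0; (iii) (θ*_i − θ*_0)(θ_i − θ_0)^{−1} is independent of i for 1 ≤ i ≤ d if and only if μh* = μ*h; (iv) (θ*_{d−i} − θ*_d)(θ_i − θ_0)^{−1} is independent of i for 1 ≤ i ≤ d if and only if μh* = −μ*h. -/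
/-- Type II eigenvalue/dual-eigenvalue sequences:
`θ_i = η + μ(i − d/2) + hi(d−i)`, `θ*_i = η* + μ*(i − d/2) + h*i(d−i)`.
Criteria for the four symmetry conditions on the `θ`'s. -/
theorem typeII_theta {K : Type*} [Field K] (d : ℕ) (hd : 3 ≤ d)
    (hchar2 : (2 : K) ≠ 0)
    (hchar : ∀ n : ℕ, 1 ≤ n → n ≤ d → (n : K) ≠ 0)
    (η μ h ηs μs hs : K)
    (hμ : ∀ i : ℕ, i ≤ d - 1 → μ + (i : K) * h ≠ 0)
    (hμs : ∀ i : ℕ, i ≤ d - 1 → μs + (i : K) * hs ≠ 0)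
    (θ θs : ℕ → K)
    (hθ : ∀ i ≤ d, θ i = η + μ * ((i : K) - (d : K) / 2)
      + h * (i : K) * ((d : K) - (i : K)))
    (hθs : ∀ i ≤ d, θs i = ηs + μs * ((i : K) - (d : K) / 2)
      + hs * (i : K) * ((d : K) - (i : K))) :
    -- (i)
    ((∀ i j, i ≤ d → j ≤ d → θ i + θ (d - i) = θ j + θ (d - j)) ↔ h = 0) ∧
    -- (ii)
    ((∀ i j, i ≤ d → j ≤ d → θs i + θs (d - i) = θs j + θs (d - j)) ↔ hs = 0) ∧
    -- (iii)
    ((∀ i j, 1 ≤ i → i ≤ d → 1 ≤ j → j ≤ d →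
        (θs i - θs 0) * (θ i - θ 0)⁻¹ = (θs j - θs 0) * (θ j - θ 0)⁻¹)
      ↔ μ * hs = μs * h) ∧
    -- (iv)
    ((∀ i j, 1 ≤ i → i ≤ d → 1 ≤ j → j ≤ d →
        (θs (d - i) - θs d) * (θ i - θ 0)⁻¹ = (θs (d - j) - θs d) * (θ j - θ 0)⁻¹)
      ↔ μ * hs = -(μs * h)) := by
  have hd1 : (1:ℕ) ≤ d := by omega
  have hd1K : ((d:K) - 1) ≠ 0 := by
    have := hchar (d-1) (by omega) (by omega)
    rwa [Nat.cast_sub hd1, Nat.cast_one] at this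
  have key : ∀ i, 1 ≤ i → i ≤ d → θ i - θ 0 = (i:K) * (μ + h * ((d:K) - (i:K))) := by
    intro i h1 hi
    rw [hθ i hi, hθ 0 (by omega)]
    push_cast; ring
  have keys : ∀ i, 1 ≤ i → i ≤ d → θs i - θs 0 = (i:K) * (μs + hs * ((d:K) - (i:K))) := by
    intro i h1 hi
    rw [hθs i hi, hθs 0 (by omega)]
    push_cast; ring
  have keyd : ∀ i, 1 ≤ i → i ≤ d →
      θs (d - i) - θs d = (i:K) * (hs * ((d:K) - (i:K)) - μs) := by
    intro i h1 hi
    rw [hθs (d-i) (Nat.sub_le d i), hθs d le_rfl, Nat.cast_sub hi]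
    ring
  have hfac : ∀ i, 1 ≤ i → i ≤ d → μ + h * ((d:K) - (i:K)) ≠ 0 := by
    intro i h1 hi
    have h2 := hμ (d - i) (by omega)
    rw [Nat.cast_sub hi] at h2
    intro hz; exact h2 (by linear_combination hz)
  have hne : ∀ i, 1 ≤ i → i ≤ d → θ i - θ 0 ≠ 0 := by
    intro i h1 hi
    rw [key i h1 hi]
    exact mul_ne_zero (hchar i h1 hi) (hfac i h1 hi)
  refine ⟨⟨fun H => ?_, fun h0 i j hi hj => ?_⟩, ⟨fun H => ?_, fun h0 i j hi hj => ?_⟩,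
    ⟨fun H => ?_, fun heq i j h1i hid h1j hjd => ?_⟩,
    ⟨fun H => ?_, fun heq i j h1i hid h1j hjd => ?_⟩⟩
  · -- (i) forward
    have e := H 1 0 (by omega) (by omega)
    rw [Nat.sub_zero, hθ 1 (by omega), hθ 0 (by omega), hθ (d-1) (by omega),
      hθ d le_rfl, Nat.cast_sub hd1] at e
    push_cast at e
    have h2 : h * (((d:K)-1)*2) = 0 := by linear_combination e
    exact (mul_eq_zero.mp h2).resolve_right (mul_ne_zero hd1K hchar2)
  · rw [hθ i hi, hθ j hj, hθ (d-i) (Nat.sub_le d i), hθ (d-j) (Nat.sub_le d j),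
      Nat.cast_sub hi, Nat.cast_sub hj, h0]
    ring
  · -- (ii) forward
    have e := H 1 0 (by omega) (by omega)
    rw [Nat.sub_zero, hθs 1 (by omega), hθs 0 (by omega), hθs (d-1) (by omega),
      hθs d le_rfl, Nat.cast_sub hd1] at e
    push_cast at e
    have h2 : hs * (((d:K)-1)*2) = 0 := by linear_combination e
    exact (mul_eq_zero.mp h2).resolve_right (mul_ne_zero hd1K hchar2)
  · rw [hθs i hi, hθs j hj, hθs (d-i) (Nat.sub_le d i), hθs (d-j) (Nat.sub_le d j),
      Nat.cast_sub hi, Nat.cast_sub hj, h0]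
    ring
  · -- (iii) forward
    have n1 := hne 1 (by omega) (by omega)
    have n2 := hne 2 (by omega) (by omega)
    have e := H 1 2 (by omega) (by omega) (by omega) (by omega)
    rw [← div_eq_mul_inv, ← div_eq_mul_inv, div_eq_div_iff n1 n2] at e
    rw [key 1 (by omega) (by omega), key 2 (by omega) (by omega),
      keys 1 (by omega) (by omega), keys 2 (by omega) (by omega)] at e
    push_cast at e
    have e2 : 2*(μ*hs) = 2*(μs*h) := by linear_combination e
    exact mul_left_cancel₀ hchar2 e2
  · -- (iii) backward
    have ni := hne i h1i hid
    have nj := hne j h1j hjd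
    rw [← div_eq_mul_inv, ← div_eq_mul_inv, div_eq_div_iff ni nj,
      key i h1i hid, key j h1j hjd, keys i h1i hid, keys j h1j hjd]
    linear_combination ((i:K)*(j:K)*((j:K)-(i:K))) * heq
  · -- (iv) forward
    have n1 := hne 1 (by omega) (by omega)
    have n2 := hne 2 (by omega) (by omega)
    have e := H 1 2 (by omega) (by omega) (by omega) (by omega)
    rw [← div_eq_mul_inv, ← div_eq_mul_inv, div_eq_div_iff n1 n2] at e
    rw [key 1 (by omega) (by omega), key 2 (by omega) (by omega),
      keyd 1 (by omega) (by omega), keyd 2 (by omega) (by omega)] at e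
    push_cast at e
    have e2 : 2*(μ*hs) = 2*(-(μs*h)) := by linear_combination e
    exact mul_left_cancel₀ hchar2 e2
  · -- (iv) backward
    have ni := hne i h1i hid
    have nj := hne j h1j hjd
    rw [← div_eq_mul_inv, ← div_eq_mul_inv, div_eq_div_iff ni nj,
      key i h1i hid, key j h1j hjd, keyd i h1i hid, keyd j h1j hjd]
    linear_combination ((i:K)*(j:K)*((j:K)-(i:K))) * heq
end

section
/- Let K be a field with characteristic not 2 in which the integers 1, 2, …, d are all nonzero, let d ≥ 3 be an integer, and let μ, h, μ*, h*, τ be scalars in K such that μ + ih ≠ 0 for 0 ≤ i ≤ d−1 and μ* + ih* ≠ 0 for 0 ≤ i ≤ d−1. Define, for 1 ≤ i ≤ d, φ_i = i(d−i+1)(τ − μμ*/2 + (hμ* + μh*)(i − (d+1)/2) + hh*(i−1)(d−i)) and ϕ_i = i(d−i+1)(τ + μμ*/2 + (hμ* − μh*)(i − (d+1)/2) + hh*(i−1)(d−i)). Then: (i) φ_i = −ϕ_i for all 1 ≤ i ≤ d if and only if τ = 0 and h = 0; (ii) φ_i = −ϕ_{d−i+1} for all 1 ≤ i ≤ d if and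 only if τ = 0 and h* = 0; (iii) ϕ_i = ϕ_{d−i+1} for all 1 ≤ i ≤ d if and only if μh* = μ*h; (iv) φ_i = φ_{d−i+1} for all 1 ≤ i ≤ d if and only if μh* = −μ*h. -/
private lemma cancel0 {K : Type*} [Field K] {c x : K} (hc : c ≠ 0) (hcx : c * x = 0) :
    x = 0 := (mul_eq_zero.mp hcx).resolve_left hc

/-- Type II split sequences:
`φ_i = i(d−i+1)(τ − μμ*/2 + (hμ* + μh*)(i − (d+1)/2) + hh*(i−1)(d−i))`,
`ϕ_i = i(d−i+1)(τ + μμ*/2 + (hμ* − μh*)(i − (d+1)/2) + hh*(i−1)(d−i))`.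
Criteria for the four symmetry conditions on the split sequences. -/
theorem typeII_phi {K : Type*} [Field K] (d : ℕ) (hd : 3 ≤ d)
    (hchar2 : (2 : K) ≠ 0)
    (hchar : ∀ n : ℕ, 1 ≤ n → n ≤ d → (n : K) ≠ 0)
    (μ h μs hs τ : K)
    (hμ : ∀ i : ℕ, i ≤ d - 1 → μ + (i : K) * h ≠ 0)
    (hμs : ∀ i : ℕ, i ≤ d - 1 → μs + (i : K) * hs ≠ 0)
    (φ ϕ : ℕ → K)
    (hφ : ∀ i, 1 ≤ i → i ≤ d →
      φ i = (i : K) * ((d : K) - (i : K) + 1) *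
        (τ - μ * μs / 2 + (h * μs + μ * hs) * ((i : K) - ((d : K) + 1) / 2)
          + h * hs * ((i : K) - 1) * ((d : K) - (i : K))))
    (hϕ : ∀ i, 1 ≤ i → i ≤ d →
      ϕ i = (i : K) * ((d : K) - (i : K) + 1) *
        (τ + μ * μs / 2 + (h * μs - μ * hs) * ((i : K) - ((d : K) + 1) / 2)
          + h * hs * ((i : K) - 1) * ((d : K) - (i : K)))) :
    -- (i)
    ((∀ i, 1 ≤ i → i ≤ d → φ i = -ϕ i) ↔ (τ = 0 ∧ h = 0)) ∧
    -- (ii)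
    ((∀ i, 1 ≤ i → i ≤ d → φ i = -ϕ (d - i + 1)) ↔ (τ = 0 ∧ hs = 0)) ∧
    -- (iii)
    ((∀ i, 1 ≤ i → i ≤ d → ϕ i = ϕ (d - i + 1)) ↔ μ * hs = μs * h) ∧
    -- (iv)
    ((∀ i, 1 ≤ i → i ≤ d → φ i = φ (d - i + 1)) ↔ μ * hs = -(μs * h)) := by
  have hinv : (2 : K)⁻¹ * 2 = 1 := inv_mul_cancel₀ hchar2
  have hdK : (d : K) ≠ 0 := hchar d (by omega) le_rfl
  have hd1 : (d : K) - 1 ≠ 0 := by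
    have := hchar (d - 1) (by omega) (by omega)
    rwa [Nat.cast_sub (by omega), Nat.cast_one] at this
  have hd1' : (1 : K) - (d : K) ≠ 0 := fun h0 => hd1 (by linear_combination -h0)
  have hμ0 : μ ≠ 0 := by simpa using hμ 0 (Nat.zero_le _)
  have hμs0 : μs ≠ 0 := by simpa using hμs 0 (Nat.zero_le _)
  have hidx1 : d - 1 + 1 = d := by omega
  have hidxd : d - d + 1 = 1 := by omega
  -- division-free (doubled) formulas
  have hA : ∀ i, 1 ≤ i → i ≤ d →
      2 * φ i = (i : K) * ((d : K) - (i : K) + 1) *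
        (2 * τ - μ * μs + (h * μs + μ * hs) * (2 * (i : K) - (d : K) - 1)
          + 2 * (h * hs) * ((i : K) - 1) * ((d : K) - (i : K))) := by
    intro i h1 h2; rw [hφ i h1 h2]
    linear_combination (-((i : K) * ((d : K) - (i : K) + 1)) * (μ * μs)
      - (i : K) * ((d : K) - (i : K) + 1) * ((d : K) + 1) * (h * μs + μ * hs)) * hinv
  have hB : ∀ i, 1 ≤ i → i ≤ d →
      2 * ϕ i = (i : K) * ((d : K) - (i : K) + 1) *
        (2 * τ + μ * μs + (h * μs - μ * hs) * (2 * (i : K) - (d : K) - 1)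
          + 2 * (h * hs) * ((i : K) - 1) * ((d : K) - (i : K))) := by
    intro i h1 h2; rw [hϕ i h1 h2]
    linear_combination ((i : K) * ((d : K) - (i : K) + 1) * (μ * μs)
      - (i : K) * ((d : K) - (i : K) + 1) * ((d : K) + 1) * (h * μs - μ * hs)) * hinv
  have h1d : (1 : ℕ) ≤ d := by omega
  have A1 := hA 1 le_rfl h1d
  have B1 := hB 1 le_rfl h1d
  have Ad := hA d h1d le_rfl
  have Bd := hB d h1d le_rfl
  push_cast at A1 B1 Ad Bd
  refine ⟨⟨fun H => ?_, fun ⟨ht, hh⟩ i hi1 hi2 => ?_⟩,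
         ⟨fun H => ?_, fun ⟨ht, hh⟩ i hi1 hi2 => ?_⟩,
         ⟨fun H => ?_, fun hc i hi1 hi2 => ?_⟩,
         ⟨fun H => ?_, fun hc i hi1 hi2 => ?_⟩⟩
  -- (i) forward
  · have G1 := H 1 le_rfl h1d
    have Gd := H d h1d le_rfl
    have hτ : τ = 0 := by
      have h8 : (2 : K) * 2 * 2 * d * τ = 0 := by
        linear_combination (-1 : K) * A1 - B1 + 2 * G1 - Ad - Bd + 2 * Gd
      exact cancel0 (mul_ne_zero (mul_ne_zero (mul_ne_zero hchar2 hchar2) hchar2) hdK) h8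
    have hhm : h = 0 := by
      have h4 : ((2 : K) * 2 * d * ((d : K) - 1)) * (h * μs) = 0 := by
        linear_combination (-1 : K) * Ad - Bd + 2 * Gd + A1 + B1 - 2 * G1
      have := cancel0 (mul_ne_zero (mul_ne_zero (mul_ne_zero hchar2 hchar2) hdK) hd1) h4
      exact (mul_eq_zero.mp this).resolve_right hμs0
    exact ⟨hτ, hhm⟩
  -- (i) backward
  · subst ht hh
    apply mul_left_cancel₀ hchar2
    have e1 := hA i hi1 hi2
    have e2 := hB i hi1 hi2
    linear_combination e1 + e2
  -- (ii) forward
  · have G1 := H 1 le_rfl h1d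
    have Gd := H d h1d le_rfl
    rw [hidx1] at G1; rw [hidxd] at Gd
    have hτ : τ = 0 := by
      have h8 : (2 : K) * 2 * 2 * d * τ = 0 := by
        linear_combination (-1 : K) * A1 - Bd + 2 * G1 - Ad - B1 + 2 * Gd
      exact cancel0 (mul_ne_zero (mul_ne_zero (mul_ne_zero hchar2 hchar2) hchar2) hdK) h8
    have hhm : hs = 0 := by
      have h4 : ((2 : K) * 2 * d * ((d : K) - 1)) * (μ * hs) = 0 := by
        linear_combination (-1 : K) * Ad - B1 + 2 * Gd + A1 + Bd - 2 * G1
      have := cancel0 (mul_ne_zero (mul_ne_zero (mul_ne_zero hchar2 hchar2) hdK) hd1) h4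
      exact (mul_eq_zero.mp this).resolve_left hμ0
    exact ⟨hτ, hhm⟩
  -- (ii) backward
  · subst ht hh
    apply mul_left_cancel₀ hchar2
    have e1 := hA i hi1 hi2
    have e2 := hB (d - i + 1) (by omega) (by omega)
    rw [Nat.cast_add, Nat.cast_sub hi2, Nat.cast_one] at e2
    rw [show (2 : K) * -ϕ (d - i + 1) = -(2 * ϕ (d - i + 1)) by ring]
    linear_combination e1 + e2
  -- (iii) forward
  · have G1 := H 1 le_rfl h1d
    rw [hidx1] at G1
    have key : ((2 : K) * d * (1 - (d : K))) * (h * μs - μ * hs) = 0 := by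
      linear_combination (-1 : K) * B1 + Bd + 2 * G1
    have z := cancel0 (mul_ne_zero (mul_ne_zero hchar2 hdK) hd1') key
    linear_combination -z
  -- (iii) backward
  · apply mul_left_cancel₀ hchar2
    have e1 := hB i hi1 hi2
    have e2 := hB (d - i + 1) (by omega) (by omega)
    rw [Nat.cast_add, Nat.cast_sub hi2, Nat.cast_one] at e2
    linear_combination e1 - e2 - 2 * (i : K) * ((d : K) - (i : K) + 1) * (2 * (i : K) - (d : K) - 1) * hc
  -- (iv) forward
  · have G1 := H 1 le_rfl h1d
    rw [hidx1] at G1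
    have key : ((2 : K) * d * (1 - (d : K))) * (h * μs + μ * hs) = 0 := by
      linear_combination (-1 : K) * A1 + Ad + 2 * G1
    have z := cancel0 (mul_ne_zero (mul_ne_zero hchar2 hdK) hd1') key
    linear_combination z
  -- (iv) backward
  · apply mul_left_cancel₀ hchar2
    have e1 := hA i hi1 hi2
    have e2 := hA (d - i + 1) (by omega) (by omega)
    rw [Nat.cast_add, Nat.cast_sub hi2, Nat.cast_one] at e2
    linear_combination e1 - e2 + 2 * (i : K) * ((d : K) - (i : K) + 1) * (2 * (i : K) - (d : K) - 1) * hc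
end

section
/- Let K be a field of characteristic not 2, let d ≥ 4 be an even integer such that every integer n with 1 ≤ n ≤ d/2 is nonzero in K, and let h, s, h*, s*, τ be scalars in K with h ≠ 0 and h* ≠ 0. Define, for 1 ≤ i ≤ d: φ_i = i(τ − sh* − s*h − hh*(i − (d+1)/2)) if i is even, and φ_i = (d−i+1)(τ + sh* + s*h + hh*(i − (d+1)/2)) if i is odd; ϕ_i = i(τ − sh* + s*h + hh*(i − (d+1)/2)) if i is even, and ϕ_i = (d−i+1)(τ + sh* − s*h − hh*(i − (d+1)/2)) if i is odd. Then: (i) φ_i = −ϕ_i for all 1 ≤ i ≤ d if and only if τ = 0 and s = 0; (ii) φ_i = −ϕ_{d−i+1} for all 1 ≤ i ≤ d if and only if τ = 0 and s* = 0; (iii) ϕ_i = ϕ_{d−i+1} for all 1 ≤ i ≤ d if and only if hs* = h*s; (iv) φ_i = φ_{d−i+1} for all 1 ≤ i ≤ d if and only if hs* = −h*s. -/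
/-- Type III⁺ split sequences (`d` even):
`φ_i = i(τ − sh* − s*h − hh*(i − (d+1)/2))` for `i` even,
`φ_i = (d−i+1)(τ + sh* + s*h + hh*(i − (d+1)/2))` for `i` odd,
`ϕ_i = i(τ − sh* + s*h + hh*(i − (d+1)/2))` for `i` even,
`ϕ_i = (d−i+1)(τ + sh* − s*h − hh*(i − (d+1)/2))` for `i` odd.
Criteria for the four symmetry conditions on the split sequences. -/
theorem typeIIIplus_phi {K : Type*} [Field K] (d : ℕ) (hd : 4 ≤ d)
    (hdeven : Even d)
    (hchar2 : (2 : K) ≠ 0)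
    (hchar : ∀ n : ℕ, 1 ≤ n → n ≤ d / 2 → (n : K) ≠ 0)
    (h s hs ss τ : K) (hh : h ≠ 0) (hhs : hs ≠ 0)
    (φ ϕ : ℕ → K)
    (hφ : ∀ i, 1 ≤ i → i ≤ d →
      φ i = if Even i then
          (i : K) * (τ - s * hs - ss * h - h * hs * ((i : K) - ((d : K) + 1) / 2))
        else
          ((d : K) - (i : K) + 1) *
            (τ + s * hs + ss * h + h * hs * ((i : K) - ((d : K) + 1) / 2)))
    (hϕ : ∀ i, 1 ≤ i → i ≤ d →
      ϕ i = if Even i then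
          (i : K) * (τ - s * hs + ss * h + h * hs * ((i : K) - ((d : K) + 1) / 2))
        else
          ((d : K) - (i : K) + 1) *
            (τ + s * hs - ss * h - h * hs * ((i : K) - ((d : K) + 1) / 2))) :
    -- (i)
    ((∀ i, 1 ≤ i → i ≤ d → φ i = -ϕ i) ↔ (τ = 0 ∧ s = 0)) ∧
    -- (ii)
    ((∀ i, 1 ≤ i → i ≤ d → φ i = -ϕ (d - i + 1)) ↔ (τ = 0 ∧ ss = 0)) ∧
    -- (iii)
    ((∀ i, 1 ≤ i → i ≤ d → ϕ i = ϕ (d - i + 1)) ↔ h * ss = hs * s) ∧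
    -- (iv)
    ((∀ i, 1 ≤ i → i ≤ d → φ i = φ (d - i + 1)) ↔ h * ss = -(hs * s)) := by
  have cancel2 : ∀ x : K, (2 : K) * x = 0 → x = 0 := fun x hx =>
    (mul_eq_zero.mp hx).resolve_left hchar2
  have htwo : ((d : K) + 1) / 2 * 2 = (d : K) + 1 := div_mul_cancel₀ _ hchar2
  have hdnz : (d : K) ≠ 0 := by
    obtain ⟨m, hm⟩ := hdeven
    have hm1 : 1 ≤ m := by omega
    have hm2 : m ≤ d / 2 := by omega
    have hmnz := hchar m hm1 hm2
    subst hm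
    push_cast
    intro hc
    exact hmnz (cancel2 _ (by linear_combination hc))
  have canceld : ∀ x : K, (d : K) * x = 0 → x = 0 := fun x hx =>
    (mul_eq_zero.mp hx).resolve_left hdnz
  -- reflected values
  have eφ' : ∀ i, 1 ≤ i → i ≤ d →
      φ (d - i + 1) = if Even i then
          (i : K) * (τ + s * hs + ss * h - h * hs * ((i : K) - ((d : K) + 1) / 2))
        else
          ((d : K) - (i : K) + 1) *
            (τ - s * hs - ss * h + h * hs * ((i : K) - ((d : K) + 1) / 2)) := by
    intro i h1 h2
    have hj1 : 1 ≤ d - i + 1 := by omega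
    have hj2 : d - i + 1 ≤ d := by omega
    have hcast : ((d - i + 1 : ℕ) : K) = (d : K) - (i : K) + 1 := by
      rw [Nat.cast_add, Nat.cast_sub h2, Nat.cast_one]
    have hpar : Even (d - i + 1) ↔ ¬ Even i := by
      rw [Nat.even_add_one, Nat.even_sub h2]
      simp [hdeven]
    rw [hφ _ hj1 hj2]
    by_cases hi : Even i
    · rw [if_neg (fun hj => (hpar.mp hj) hi), if_pos hi, hcast]
      linear_combination (-((i : K) * (h * hs))) * htwo
    · rw [if_pos (hpar.mpr hi), if_neg hi, hcast]
      linear_combination (((d : K) - (i : K) + 1) * (h * hs)) * htwo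
  have eϕ' : ∀ i, 1 ≤ i → i ≤ d →
      ϕ (d - i + 1) = if Even i then
          (i : K) * (τ + s * hs - ss * h + h * hs * ((i : K) - ((d : K) + 1) / 2))
        else
          ((d : K) - (i : K) + 1) *
            (τ - s * hs + ss * h - h * hs * ((i : K) - ((d : K) + 1) / 2)) := by
    intro i h1 h2
    have hj1 : 1 ≤ d - i + 1 := by omega
    have hj2 : d - i + 1 ≤ d := by omega
    have hcast : ((d - i + 1 : ℕ) : K) = (d : K) - (i : K) + 1 := by
      rw [Nat.cast_add, Nat.cast_sub h2, Nat.cast_one]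
    have hpar : Even (d - i + 1) ↔ ¬ Even i := by
      rw [Nat.even_add_one, Nat.even_sub h2]
      simp [hdeven]
    rw [hϕ _ hj1 hj2]
    by_cases hi : Even i
    · rw [if_neg (fun hj => (hpar.mp hj) hi), if_pos hi, hcast]
      linear_combination ((i : K) * (h * hs)) * htwo
    · rw [if_pos (hpar.mpr hi), if_neg hi, hcast]
      linear_combination (-(((d : K) - (i : K) + 1) * (h * hs))) * htwo
  have h1le : (1 : ℕ) ≤ 1 := le_refl 1
  refine ⟨⟨?_, ?_⟩, ⟨?_, ?_⟩, ⟨?_, ?_⟩, ⟨?_, ?_⟩⟩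
  -- (i) forward
  · intro H
    have e2 := H 2 (by omega) (by omega)
    rw [hφ 2 (by omega) (by omega), hϕ 2 (by omega) (by omega),
      if_pos (by decide : Even 2), if_pos (by decide : Even 2)] at e2
    push_cast at e2
    have k2 : τ - s * hs = 0 :=
      cancel2 _ (cancel2 _ (by linear_combination e2))
    have e1 := H 1 (by omega) (by omega)
    rw [hφ 1 (by omega) (by omega), hϕ 1 (by omega) (by omega),
      if_neg (by decide : ¬ Even 1), if_neg (by decide : ¬ Even 1)] at e1
    push_cast at e1
    have k1 : τ + s * hs = 0 :=
      cancel2 _ (canceld _ (by linear_combination e1))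
    refine ⟨cancel2 τ (by linear_combination k1 + k2), ?_⟩
    exact (mul_eq_zero.mp (cancel2 (s * hs) (by linear_combination k1 - k2))).resolve_right hhs
  -- (i) backward
  · rintro ⟨rfl, rfl⟩ i h1 h2
    rw [hφ i h1 h2, hϕ i h1 h2]
    split_ifs <;> ring
  -- (ii) forward
  · intro H
    have e2 := H 2 (by omega) (by omega)
    rw [hφ 2 (by omega) (by omega), eϕ' 2 (by omega) (by omega),
      if_pos (by decide : Even 2), if_pos (by decide : Even 2)] at e2
    push_cast at e2
    have k2 : τ - ss * h = 0 :=
      cancel2 _ (cancel2 _ (by linear_combination e2))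
    have e1 := H 1 (by omega) (by omega)
    rw [hφ 1 (by omega) (by omega), eϕ' 1 (by omega) (by omega),
      if_neg (by decide : ¬ Even 1), if_neg (by decide : ¬ Even 1)] at e1
    push_cast at e1
    have k1 : τ + ss * h = 0 :=
      cancel2 _ (canceld _ (by linear_combination e1))
    refine ⟨cancel2 τ (by linear_combination k1 + k2), ?_⟩
    exact (mul_eq_zero.mp (cancel2 (ss * h) (by linear_combination k1 - k2))).resolve_right hh
  -- (ii) backward
  · rintro ⟨rfl, rfl⟩ i h1 h2
    rw [hφ i h1 h2, eϕ' i h1 h2]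
    split_ifs <;> ring
  -- (iii) forward
  · intro H
    have e2 := H 2 (by omega) (by omega)
    rw [hϕ 2 (by omega) (by omega), eϕ' 2 (by omega) (by omega),
      if_pos (by decide : Even 2), if_pos (by decide : Even 2)] at e2
    push_cast at e2
    have k : h * ss - hs * s = 0 :=
      cancel2 _ (cancel2 _ (by linear_combination e2))
    exact sub_eq_zero.mp k
  -- (iii) backward
  · intro heq i h1 h2
    rw [hϕ i h1 h2, eϕ' i h1 h2]
    split_ifs with hi
    · linear_combination (2 * (i : K)) * heq
    · linear_combination (-(2 : K) * ((d : K) - (i : K) + 1)) * heq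
  -- (iv) forward
  · intro H
    have e2 := H 2 (by omega) (by omega)
    rw [hφ 2 (by omega) (by omega), eφ' 2 (by omega) (by omega),
      if_pos (by decide : Even 2), if_pos (by decide : Even 2)] at e2
    push_cast at e2
    have k : h * ss + hs * s = 0 :=
      cancel2 _ (cancel2 _ (by linear_combination -e2))
    linear_combination k
  -- (iv) backward
  · intro heq i h1 h2
    rw [hφ i h1 h2, eφ' i h1 h2]
    split_ifs with hi
    · linear_combination (-(2 : K) * (i : K)) * heq
    · linear_combination ((2 : K) * ((d : K) - (i : K) + 1)) * heq
end
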